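/- arXiv:1906.11523 — 5 statements merged into one kernel-verified Lean document; each statement's English description precedes it below -/
import Mathlib

section
/- Let μ be a finite signed Borel measure on the 2-torus T² that also belongs to the Sobolev space H^{-1}(T²) (i.e., the functional φ ↦ ∫ φ dμ extends continuously to H¹(T²)). Then μ has no atoms: μ({x₀}) = 0 for every point x₀ ∈ T². -/
set_option maxHeartbeats 1000000

open MeasureTheory

noncomputable section

instance : Fact (0 < 2 * Real.pi) := ⟨by positivity⟩

/-- The 2-torus. -/
abbrev Torus2 : Type := AddCircle (2 * Real.pi) × AddCircle (2 * Real.pi)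

/-- The canonical projection `ℝ² → T²`. -/
def torusProj (x : ℝ × ℝ) : Torus2 :=
  ((x.1 : AddCircle (2 * Real.pi)), (x.2 : AddCircle (2 * Real.pi)))

/-- Integral of a function against a finite signed measure, via the Jordan decomposition. -/
def signedIntegral {X : Type*} [MeasurableSpace X] (μ : SignedMeasure X) (f : X → ℝ) : ℝ :=
  (∫ x, f x ∂μ.toJordanDecomposition.posPart) - (∫ x, f x ∂μ.toJordanDecomposition.negPart)

/-- The `H¹`-norm of a (smooth, periodic) function on `ℝ²`, computed over a fundamental
domain of the torus. -/
def H1norm (g : ℝ × ℝ → ℝ) : ℝ :=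
  Real.sqrt (∫ x in (Set.Icc (0:ℝ) (2 * Real.pi) ×ˢ Set.Icc (0:ℝ) (2 * Real.pi)),
    ((g x) ^ 2 + ‖fderiv ℝ g x‖ ^ 2))

namespace NoAtomsAux

open Real Filter Finset

/-- Jordan-type quadratic lower bound for `1 - cos`. -/
lemma one_sub_cos_ge {θ : ℝ} (h : |θ| ≤ π) : 2 * (θ / π) ^ 2 ≤ 1 - Real.cos θ := by
  have key : ∀ x : ℝ, 0 ≤ x → x ≤ π → 2 * (x / π) ^ 2 ≤ 1 - Real.cos x := by
    intro x hx0 hxπ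
    have hπ : (0 : ℝ) < π := Real.pi_pos
    have hs := Real.mul_le_sin (by linarith : (0:ℝ) ≤ x / 2) (by linarith : x / 2 ≤ π / 2)
    have hss : (2 / π * (x / 2)) ^ 2 ≤ Real.sin (x / 2) ^ 2 :=
      pow_le_pow_left₀ (by positivity) hs 2
    have hcos : Real.cos x = 1 - 2 * Real.sin (x / 2) ^ 2 := by
      have h1 := Real.cos_two_mul (x / 2)
      have h2 := Real.sin_sq_add_cos_sq (x / 2)
      rw [show 2 * (x / 2) = x by ring] at h1
      linarith
    have hx : 2 / π * (x / 2) = x / π := by field_simp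
    rw [hx] at hss
    linarith
  rcases le_or_gt 0 θ with hθ | hθ
  · exact key θ hθ (by rwa [abs_of_nonneg hθ] at h)
  · have h2 := key (-θ) (by linarith) (by rwa [abs_of_neg hθ] at h)
    rw [Real.cos_neg] at h2
    calc 2 * (θ / π) ^ 2 = 2 * ((-θ) / π) ^ 2 := by ring
    _ ≤ _ := h2

lemma exp_neg_le_inv {y : ℝ} (hy : 0 ≤ y) : Real.exp (-y) ≤ (1 + y)⁻¹ := by
  rw [Real.exp_neg]
  exact inv_anti₀ (by positivity) (by linarith [Real.add_one_le_exp y])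

lemma mul_exp_le {w : ℝ} (hw : 0 ≤ w) : w * Real.exp (-w) ≤ 2 * Real.exp (-(w / 2)) := by
  have h1 : w ≤ 2 * Real.exp (w / 2) := by linarith [Real.add_one_le_exp (w / 2)]
  calc w * Real.exp (-w) ≤ 2 * Real.exp (w / 2) * Real.exp (-w) :=
        mul_le_mul_of_nonneg_right h1 (Real.exp_pos _).le
  _ = 2 * Real.exp (-(w / 2)) := by rw [mul_assoc, ← Real.exp_add, show w / 2 + -w = -(w/2) by ring]

/-- The basic periodic "Gaussian" bump, with inverse-scale `b`, centered at `s`. -/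
def ub (b s x : ℝ) : ℝ := Real.exp (-(b * (1 - Real.cos (x - s))))

lemma ub_pos (b s x : ℝ) : 0 < ub b s x := Real.exp_pos _

lemma ub_le_one {b : ℝ} (hb : 0 ≤ b) (s x : ℝ) : ub b s x ≤ 1 := by
  have h : -(b * (1 - Real.cos (x - s))) ≤ 0 := by nlinarith [Real.cos_le_one (x - s)]
  calc ub b s x ≤ Real.exp 0 := Real.exp_le_exp.2 h
  _ = 1 := Real.exp_zero

lemma ub_continuous (b s : ℝ) : Continuous (ub b s) := by
  unfold ub; fun_prop

lemma ub_contDiff (b s : ℝ) : ContDiff ℝ (⊤ : ℕ∞) (ub b s) := by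
  apply Real.contDiff_exp.comp
  apply ContDiff.neg
  exact ContDiff.mul contDiff_const
    (contDiff_const.sub (Real.contDiff_cos.comp (contDiff_id.sub contDiff_const)))

lemma ub_periodic (b s : ℝ) : Function.Periodic (ub b s) (2 * π) := fun x => by
  rw [ub, ub, show x + 2 * π - s = (x - s) + 2 * π by ring, Real.cos_add_two_pi]

lemma ub_mul (b b' s x : ℝ) : ub b s x * ub b' s x = ub (b + b') s x := by
  rw [ub, ub, ub, ← Real.exp_add]; congr 1; ring

lemma ub_mono {b b' : ℝ} (h : b ≤ b') (s x : ℝ) : ub b' s x ≤ ub b s x := by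
  apply Real.exp_le_exp.2
  have : 0 ≤ 1 - Real.cos (x - s) := by nlinarith [Real.cos_le_one (x - s)]
  nlinarith

/-- Master integral estimate: `∫₀^{2π} e^{-b(1-cos(x-s))} dx ≤ π²/√b`. -/
lemma integral_exp_le (b s : ℝ) (hb : 0 < b) :
    ∫ x in Set.Icc (0:ℝ) (2 * π), ub b s x ≤ π ^ 2 / Real.sqrt b := by
  have hπ : (0:ℝ) < π := Real.pi_pos
  have h2π : (0:ℝ) < 2 * π := by positivity
  set c : ℝ := π⁻¹ * Real.sqrt (2 * b) with hcdef
  have hc : 0 < c := by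
    apply mul_pos (by positivity)
    exact Real.sqrt_pos.2 (by linarith)
  have hcsq : c ^ 2 = 2 * b / π ^ 2 := by
    rw [hcdef, mul_pow, Real.sq_sqrt (by linarith : (0:ℝ) ≤ 2 * b)]
    ring
  set f : ℝ → ℝ := ub b 0 with hfdef
  have hfc : Continuous f := ub_continuous b 0
  have hfs : ∀ x, ub b s x = f (x - s) := by
    intro x; rw [hfdef, ub, ub, sub_zero]
  calc ∫ x in Set.Icc (0:ℝ) (2 * π), ub b s x
      = ∫ x in Set.Icc (0:ℝ) (2 * π), f (x - s) := by simp only [hfs]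
    _ = ∫ x in Set.Ioc (0:ℝ) (2 * π), f (x - s) := integral_Icc_eq_integral_Ioc
    _ = ∫ x in (0:ℝ)..(2 * π), f (x - s) := (intervalIntegral.integral_of_le h2π.le).symm
    _ = ∫ x in (0 - s)..(2 * π - s), f x := intervalIntegral.integral_comp_sub_right f s
    _ = ∫ x in (-π)..(-π + 2 * π), f x := by
        have h := (ub_periodic b 0).intervalIntegral_add_eq (0 - s) (-π)
        rw [show (0:ℝ) - s + 2 * π = 2 * π - s by ring] at h
        exact h
    _ = ∫ x in (-π)..π, f x := by rw [show -π + 2 * π = π by ring]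
    _ ≤ ∫ x in (-π)..π, (1 + (c * x) ^ 2)⁻¹ := by
        apply intervalIntegral.integral_mono_on (by linarith)
          (hfc.intervalIntegrable _ _)
          ((Continuous.inv₀ (by fun_prop) (fun x => by positivity)).intervalIntegrable _ _)
        intro x hx
        have hxabs : |x| ≤ π := abs_le.2 ⟨hx.1, hx.2⟩
        have hcos : 0 ≤ 1 - Real.cos (x - 0) := by nlinarith [Real.cos_le_one (x - 0)]
        calc f x ≤ (1 + b * (1 - Real.cos (x - 0)))⁻¹ := exp_neg_le_inv (by positivity)
        _ ≤ (1 + (c * x) ^ 2)⁻¹ := by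
            apply inv_anti₀ (by positivity)
            have h1 : 2 * (x / π) ^ 2 ≤ 1 - Real.cos x := one_sub_cos_ge hxabs
            have h2 : (c * x) ^ 2 = b * (2 * (x / π) ^ 2) := by
              rw [mul_pow, hcsq]; field_simp
            rw [sub_zero]
            nlinarith
    _ = c⁻¹ • ∫ x in (c * (-π))..(c * π), (1 + x ^ 2)⁻¹ :=
        intervalIntegral.integral_comp_mul_left (fun u => (1 + u ^ 2)⁻¹) hc.ne'
    _ = c⁻¹ * (Real.arctan (c * π) - Real.arctan (c * (-π))) := by
        rw [smul_eq_mul]; congr 1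
        rw [show (fun x : ℝ => (1 + x ^ 2)⁻¹) = (fun x : ℝ => 1 / (1 + x ^ 2)) by
          funext x; rw [one_div]]
        exact integral_one_div_one_add_sq
    _ ≤ c⁻¹ * π := by
        have h1 := Real.arctan_lt_pi_div_two (c * π)
        have h2 := Real.neg_pi_div_two_lt_arctan (c * (-π))
        have hc' : 0 < c⁻¹ := inv_pos.2 hc
        nlinarith
    _ ≤ π ^ 2 / Real.sqrt b := by
        rw [hcdef, mul_inv, inv_inv]
        have hs2 : Real.sqrt b ≤ Real.sqrt (2 * b) := Real.sqrt_le_sqrt (by linarith)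
        have hsb : 0 < Real.sqrt b := Real.sqrt_pos.2 hb
        calc π * (Real.sqrt (2 * b))⁻¹ * π = π ^ 2 / Real.sqrt (2 * b) := by ring
        _ ≤ π ^ 2 / Real.sqrt b := by
            apply div_le_div_of_nonneg_left (by positivity) hsb hs2

/-- Dyadic inverse scales `b_k = 4^{k+1}`. -/
def bb (k : ℕ) : ℝ := 4 ^ (k + 1)

lemma bb_pos (k : ℕ) : 0 < bb k := by unfold bb; positivity

lemma bb_ratio (j k : ℕ) : bb (min j k) / bb (max j k) = ((4:ℝ)⁻¹) ^ (max j k - min j k) := by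
  have hmM : min j k ≤ max j k := min_le_max
  have hM : max j k + 1 = (min j k + 1) + (max j k - min j k) := by omega
  rw [bb, bb, hM, pow_add (4:ℝ) (j ⊓ k + 1) (j ⊔ k - j ⊓ k), inv_pow, div_mul_eq_div_div, div_self (by positivity), one_div]

/-- The derivative of `ub b s`. -/
def ub' (b s x : ℝ) : ℝ := ub b s x * -(b * Real.sin (x - s))

lemma hasDerivAt_ub (b s x : ℝ) : HasDerivAt (ub b s) (ub' b s x) x := by
  have h1 : HasDerivAt (fun y : ℝ => Real.cos (y - s)) (-Real.sin (x - s)) x := by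
    have := (Real.hasDerivAt_cos (x - s)).comp x ((hasDerivAt_id x).sub_const s)
    simpa [Function.comp_def] using this
  have h2 : HasDerivAt (fun y : ℝ => -(b * (1 - Real.cos (y - s)))) (-(b * Real.sin (x - s))) x := by
    have := ((h1.const_sub 1).const_mul b).fun_neg
    simpa using this
  have := h2.exp
  unfold ub; simpa [ub, ub'] using this

lemma ub'_continuous (b s : ℝ) : Continuous (ub' b s) := by
  unfold ub' ub; fun_prop

lemma abs_ub' {b : ℝ} (hb : 0 ≤ b) (s x : ℝ) :
    |ub' b s x| = ub b s x * (b * |Real.sin (x - s)|) := by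
  rw [ub', abs_mul, abs_neg, abs_mul, abs_of_pos (ub_pos b s x), abs_of_nonneg hb]

/-- Pointwise bound on products of derivatives at two scales. -/
lemma cross_pointwise (j k : ℕ) (s x : ℝ) :
    |ub' (bb j) s x| * |ub' (bb k) s x| ≤
      4 * bb (min j k) * ub ((bb j + bb k) / 2) s x := by
  have hbj := bb_pos j
  have hbk := bb_pos k
  set c : ℝ := 1 - Real.cos (x - s) with hc
  have hc0 : 0 ≤ c := by rw [hc]; nlinarith [Real.cos_le_one (x - s)]
  have hsin : Real.sin (x - s) ^ 2 ≤ 2 * c := by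
    have h1 := Real.sin_sq_add_cos_sq (x - s)
    rw [hc]; nlinarith [Real.cos_le_one (x - s)]
  set w : ℝ := (bb j + bb k) * c with hw
  have hw0 : 0 ≤ w := by positivity
  have hmin : bb j * bb k ≤ bb (min j k) * (bb j + bb k) := by
    rcases le_total j k with h | h
    · rw [min_eq_left h]; nlinarith
    · rw [min_eq_right h]; nlinarith
  have hexp : ub (bb j) s x * ub (bb k) s x = Real.exp (-w) := by
    rw [ub_mul, ub, hw, hc]
  have hexp2 : Real.exp (-(w / 2)) = ub ((bb j + bb k) / 2) s x := by
    rw [ub, hw, hc]; congr 1; ring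
  calc |ub' (bb j) s x| * |ub' (bb k) s x|
      = (bb j * bb k) * (|Real.sin (x - s)| * |Real.sin (x - s)|) *
          (ub (bb j) s x * ub (bb k) s x) := by
        rw [abs_ub' hbj.le, abs_ub' hbk.le]; ring
    _ = (bb j * bb k) * Real.sin (x - s) ^ 2 * Real.exp (-w) := by
        rw [abs_mul_abs_self, hexp, sq]
    _ ≤ (bb (min j k) * (bb j + bb k)) * (2 * c) * Real.exp (-w) := by
        apply mul_le_mul_of_nonneg_right _ (Real.exp_pos _).le
        apply mul_le_mul hmin hsin (sq_nonneg _)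
          (by nlinarith [bb_pos (min j k), bb_pos j, bb_pos k])
    _ = 2 * bb (min j k) * (w * Real.exp (-w)) := by rw [hw]; ring
    _ ≤ 2 * bb (min j k) * (2 * Real.exp (-(w / 2))) := by
        apply mul_le_mul_of_nonneg_left (mul_exp_le hw0)
          (by nlinarith [bb_pos (min j k)])
    _ = 4 * bb (min j k) * ub ((bb j + bb k) / 2) s x := by rw [hexp2]; ring

lemma sqrt_quarter {a : ℝ} (ha : 0 ≤ a) : Real.sqrt a / 2 = Real.sqrt (a / 4) := by
  rw [show a / 4 = a * (1/2)^2 by ring, Real.sqrt_mul ha, Real.sqrt_sq (by norm_num : (0:ℝ) ≤ 1/2)]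
  ring

/-- Integral bound for a product of two bumps. -/
lemma int_ub_mul_le (j k : ℕ) (s : ℝ) :
    ∫ x in Set.Icc (0:ℝ) (2 * π), ub (bb j) s x * ub (bb k) s x ≤
      π ^ 2 / Real.sqrt (bb (max j k)) := by
  have h1 : ∀ x, ub (bb j) s x * ub (bb k) s x ≤ ub (bb (max j k)) s x := by
    intro x
    rw [ub_mul]
    apply ub_mono
    rcases le_total j k with h | h
    · rw [max_eq_right h]; have := (bb_pos j).le; unfold bb at *; linarith
    · rw [max_eq_left h]; have := (bb_pos k).le; unfold bb at *; linarith
  calc ∫ x in Set.Icc (0:ℝ) (2 * π), ub (bb j) s x * ub (bb k) s x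
      ≤ ∫ x in Set.Icc (0:ℝ) (2 * π), ub (bb (max j k)) s x := by
        apply setIntegral_mono_on
          (((ub_continuous _ s).mul (ub_continuous _ s)).integrableOn_Icc)
          ((ub_continuous _ s).integrableOn_Icc) measurableSet_Icc
          (fun x _ => h1 x)
    _ ≤ π ^ 2 / Real.sqrt (bb (max j k)) := integral_exp_le _ s (bb_pos _)

/-- Integral bound for a product of derivative bumps at two scales. -/
lemma int_cross_le (j k : ℕ) (s : ℝ) :
    ∫ x in Set.Icc (0:ℝ) (2 * π), |ub' (bb j) s x| * |ub' (bb k) s x| ≤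
      8 * π ^ 2 * bb (min j k) / Real.sqrt (bb (max j k)) := by
  have hπ : (0:ℝ) < π := Real.pi_pos
  have hB : (0:ℝ) < (bb j + bb k) / 2 := by have := bb_pos j; have := bb_pos k; linarith
  have hBM : bb (max j k) / 4 ≤ (bb j + bb k) / 2 := by
    have h1 := bb_pos j; have h2 := bb_pos k
    rcases le_total j k with h | h
    · rw [max_eq_right h]; linarith
    · rw [max_eq_left h]; linarith
  calc ∫ x in Set.Icc (0:ℝ) (2 * π), |ub' (bb j) s x| * |ub' (bb k) s x|
      ≤ ∫ x in Set.Icc (0:ℝ) (2 * π), 4 * bb (min j k) * ub ((bb j + bb k) / 2) s x := by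
        apply setIntegral_mono_on
          (((ub'_continuous _ s).abs.mul (ub'_continuous _ s).abs).integrableOn_Icc)
          ((continuous_const.mul (ub_continuous _ s)).integrableOn_Icc) measurableSet_Icc
          (fun x _ => cross_pointwise j k s x)
    _ = 4 * bb (min j k) * ∫ x in Set.Icc (0:ℝ) (2 * π), ub ((bb j + bb k) / 2) s x := by
        rw [MeasureTheory.integral_const_mul]
    _ ≤ 4 * bb (min j k) * (π ^ 2 / Real.sqrt ((bb j + bb k) / 2)) := by
        apply mul_le_mul_of_nonneg_left (integral_exp_le _ s hB)
          (by nlinarith [bb_pos (min j k)])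
    _ ≤ 4 * bb (min j k) * (π ^ 2 / (Real.sqrt (bb (max j k)) / 2)) := by
        apply mul_le_mul_of_nonneg_left _ (by nlinarith [bb_pos (min j k)])
        apply div_le_div_of_nonneg_left (by positivity)
        · have := Real.sqrt_pos.2 (bb_pos (max j k)); linarith
        · rw [sqrt_quarter (bb_pos (max j k)).le]
          exact Real.sqrt_le_sqrt hBM
    _ = 8 * π ^ 2 * bb (min j k) / Real.sqrt (bb (max j k)) := by
        rw [div_div_eq_mul_div]; ring

lemma geom_partial {x : ℝ} (hx0 : 0 ≤ x) (hx1 : x < 1) (n : ℕ) :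
    ∑ i ∈ Finset.range n, x ^ i ≤ (1 - x)⁻¹ := by
  have h1 : 0 < 1 - x := by linarith
  rw [geom_sum_eq hx1.ne n,
    show (x ^ n - 1) / (x - 1) = (1 - x ^ n) / (1 - x) by
      rw [show (1:ℝ) - x ^ n = -(x ^ n - 1) by ring, show (1:ℝ) - x = -(x - 1) by ring,
        neg_div_neg_eq]]
  have h2 : (1 - x ^ n) ≤ 1 := by nlinarith [pow_nonneg hx0 n]
  calc (1 - x ^ n) / (1 - x) ≤ 1 / (1 - x) := by gcongr
  _ = (1 - x)⁻¹ := one_div _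

lemma bb_nonneg (k : ℕ) : 0 ≤ bb k := (bb_pos k).le

lemma inner_geom (N j : ℕ) :
    ∑ k ∈ Finset.range N, ((4:ℝ)⁻¹) ^ (max j k - min j k) ≤ 3 := by
  have hx0 : (0:ℝ) ≤ 4⁻¹ := by norm_num
  have hx1 : (4:ℝ)⁻¹ < 1 := by norm_num
  rw [← Finset.sum_filter_add_sum_filter_not (Finset.range N) (fun k => k ≤ j)]
  have hA : ∑ k ∈ Finset.filter (fun k => k ≤ j) (Finset.range N),
      ((4:ℝ)⁻¹) ^ (max j k - min j k) ≤ (1 - (4:ℝ)⁻¹)⁻¹ := by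
    have h1 : ∑ k ∈ Finset.filter (fun k => k ≤ j) (Finset.range N),
        ((4:ℝ)⁻¹) ^ (max j k - min j k) =
        ∑ k ∈ Finset.filter (fun k => k ≤ j) (Finset.range N), ((4:ℝ)⁻¹) ^ (j - k) := by
      apply Finset.sum_congr rfl
      intro k hk
      simp only [Finset.mem_filter] at hk
      rw [max_eq_left hk.2, min_eq_right hk.2]
    rw [h1, ← Finset.sum_image (g := fun k => j - k)
      (by intro a ha b hb hab
          simp only [Finset.coe_filter, Set.mem_setOf_eq, Finset.mem_filter] at ha hb
          simp only at hab
          omega)]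
    apply le_trans (Finset.sum_le_sum_of_subset_of_nonneg ?_ ?_) (geom_partial hx0 hx1 (j+1))
    · intro i hi
      simp only [Finset.mem_image, Finset.mem_filter] at hi
      obtain ⟨a, ha, rfl⟩ := hi
      simp only [Finset.mem_range]; omega
    · intro i _ _; positivity
  have hB : ∑ k ∈ Finset.filter (fun k => ¬ k ≤ j) (Finset.range N),
      ((4:ℝ)⁻¹) ^ (max j k - min j k) ≤ (1 - (4:ℝ)⁻¹)⁻¹ := by
    have h1 : ∑ k ∈ Finset.filter (fun k => ¬ k ≤ j) (Finset.range N),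
        ((4:ℝ)⁻¹) ^ (max j k - min j k) =
        ∑ k ∈ Finset.filter (fun k => ¬ k ≤ j) (Finset.range N), ((4:ℝ)⁻¹) ^ (k - j) := by
      apply Finset.sum_congr rfl
      intro k hk
      simp only [Finset.mem_filter, not_le] at hk
      rw [max_eq_right hk.2.le, min_eq_left hk.2.le]
    rw [h1, ← Finset.sum_image (g := fun k => k - j)
      (by intro a ha b hb hab
          simp only [Finset.coe_filter, Set.mem_setOf_eq, Finset.mem_filter, not_le] at ha hb
          simp only at hab
          omega)]
    apply le_trans (Finset.sum_le_sum_of_subset_of_nonneg ?_ ?_) (geom_partial hx0 hx1 N)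
    · intro i hi
      simp only [Finset.mem_image, Finset.mem_filter, Finset.mem_range] at hi
      obtain ⟨a, ha, rfl⟩ := hi
      simp only [Finset.mem_range]; omega
    · intro i _ _; positivity
  have : ((1:ℝ) - 4⁻¹)⁻¹ + (1 - (4:ℝ)⁻¹)⁻¹ ≤ 3 := by norm_num
  linarith

lemma double_geom (N : ℕ) :
    ∑ j ∈ Finset.range N, ∑ k ∈ Finset.range N, ((4:ℝ)⁻¹) ^ (max j k - min j k) ≤ 3 * N := by
  calc ∑ j ∈ Finset.range N, ∑ k ∈ Finset.range N, ((4:ℝ)⁻¹) ^ (max j k - min j k)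
      ≤ ∑ _j ∈ Finset.range N, (3:ℝ) := Finset.sum_le_sum (fun j _ => inner_geom N j)
  _ = 3 * N := by rw [Finset.sum_const, Finset.card_range, nsmul_eq_mul]; ring

lemma sq_sum_le (S : Finset ℕ) (a : ℕ → ℝ) :
    (∑ k ∈ S, a k) ^ 2 ≤ ∑ j ∈ S, ∑ k ∈ S, |a j * a k| := by
  calc (∑ k ∈ S, a k) ^ 2 = ∑ j ∈ S, ∑ k ∈ S, a j * a k := by
        rw [sq, Finset.sum_mul_sum]
  _ ≤ ∑ j ∈ S, ∑ k ∈ S, |a j * a k| :=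
      Finset.sum_le_sum fun j _ => Finset.sum_le_sum fun k _ => le_abs_self _

lemma opnorm_le (L : ℝ × ℝ →L[ℝ] ℝ) : ‖L‖ ≤ |L (1, 0)| + |L (0, 1)| := by
  refine ContinuousLinearMap.opNorm_le_bound _ (by positivity) fun v => ?_
  have hv : v = v.1 • ((1:ℝ), (0:ℝ)) + v.2 • ((0:ℝ), (1:ℝ)) := by
    ext <;> simp
  calc ‖L v‖ = ‖v.1 * L (1, 0) + v.2 * L (0, 1)‖ := by
        conv_lhs => rw [hv]
        rw [map_add, _root_.map_smul, _root_.map_smul, smul_eq_mul, smul_eq_mul]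
  _ ≤ |v.1 * L (1, 0)| + |v.2 * L (0, 1)| := by
        rw [Real.norm_eq_abs]; exact abs_add_le _ _
  _ = |v.1| * |L (1, 0)| + |v.2| * |L (0, 1)| := by rw [abs_mul, abs_mul]
  _ ≤ ‖v‖ * |L (1, 0)| + ‖v‖ * |L (0, 1)| := by
        have h1 : |v.1| ≤ ‖v‖ := norm_fst_le v
        have h2 : |v.2| ≤ ‖v‖ := norm_snd_le v
        gcongr <;> positivity
  _ = (|L (1, 0)| + |L (0, 1)|) * ‖v‖ := by ring

lemma fubini_Q (F G : ℝ → ℝ) :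
    ∫ z in (Set.Icc (0:ℝ) (2 * π) ×ˢ Set.Icc (0:ℝ) (2 * π)), F z.1 * G z.2 =
      (∫ x in Set.Icc (0:ℝ) (2 * π), F x) * (∫ x in Set.Icc (0:ℝ) (2 * π), G x) := by
  rw [show ((volume : Measure (ℝ × ℝ)).restrict (Set.Icc (0:ℝ) (2 * π) ×ˢ Set.Icc (0:ℝ) (2 * π)))
      = (((volume : Measure ℝ).restrict (Set.Icc (0:ℝ) (2 * π))).prod
          ((volume : Measure ℝ).restrict (Set.Icc (0:ℝ) (2 * π)))) from by
    rw [Measure.prod_restrict, ← Measure.volume_eq_prod]]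
  exact MeasureTheory.integral_prod_mul F G

/-- The test function on `ℝ²`. -/
def gfun (s t : ℝ) (N : ℕ) : ℝ × ℝ → ℝ := fun z =>
  (N:ℝ)⁻¹ * ∑ k ∈ Finset.range N, ub (bb k) s z.1 * ub (bb k) t z.2

lemma contDiff_gfun (s t : ℝ) (N : ℕ) : ContDiff ℝ (⊤ : ℕ∞) (gfun s t N) := by
  apply ContDiff.mul contDiff_const
  apply ContDiff.sum
  intro k _
  exact ((ub_contDiff (bb k) s).comp contDiff_fst).mul ((ub_contDiff (bb k) t).comp contDiff_snd)

/-- The derivative of the test function. -/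
def gfun' (s t : ℝ) (N : ℕ) (z : ℝ × ℝ) : ℝ × ℝ →L[ℝ] ℝ :=
  (N:ℝ)⁻¹ • ∑ k ∈ Finset.range N,
    (ub (bb k) s z.1 • (ub' (bb k) t z.2 • ContinuousLinearMap.snd ℝ ℝ ℝ)
      + ub (bb k) t z.2 • (ub' (bb k) s z.1 • ContinuousLinearMap.fst ℝ ℝ ℝ))

lemma hasFDerivAt_gfun (s t : ℝ) (N : ℕ) (z : ℝ × ℝ) :
    HasFDerivAt (gfun s t N) (gfun' s t N z) z := by
  apply HasFDerivAt.const_mul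
  apply HasFDerivAt.fun_sum
  intro k _
  exact ((hasDerivAt_ub (bb k) s z.1).comp_hasFDerivAt z hasFDerivAt_fst).mul
    ((hasDerivAt_ub (bb k) t z.2).comp_hasFDerivAt z hasFDerivAt_snd)

lemma gfun'_apply_e1 (s t : ℝ) (N : ℕ) (z : ℝ × ℝ) :
    gfun' s t N z (1, 0) = (N:ℝ)⁻¹ * ∑ k ∈ Finset.range N, ub (bb k) t z.2 * ub' (bb k) s z.1 := by
  simp [gfun', ContinuousLinearMap.sum_apply, mul_comm]

lemma gfun'_apply_e2 (s t : ℝ) (N : ℕ) (z : ℝ × ℝ) :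
    gfun' s t N z (0, 1) = (N:ℝ)⁻¹ * ∑ k ∈ Finset.range N, ub (bb k) s z.1 * ub' (bb k) t z.2 := by
  simp [gfun', ContinuousLinearMap.sum_apply, mul_comm]

lemma gfun_nonneg (s t : ℝ) (N : ℕ) (z : ℝ × ℝ) : 0 ≤ gfun s t N z := by
  apply mul_nonneg (by positivity)
  exact Finset.sum_nonneg fun k _ => mul_nonneg (ub_pos _ _ _).le (ub_pos _ _ _).le

lemma gfun_le_one (s t : ℝ) (N : ℕ) (z : ℝ × ℝ) : gfun s t N z ≤ 1 := by
  have h1 : ∑ k ∈ Finset.range N, ub (bb k) s z.1 * ub (bb k) t z.2 ≤ (N:ℝ) := by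
    calc ∑ k ∈ Finset.range N, ub (bb k) s z.1 * ub (bb k) t z.2
        ≤ ∑ _k ∈ Finset.range N, (1:ℝ) := Finset.sum_le_sum fun k _ =>
          mul_le_one₀ (ub_le_one (bb_nonneg k) s z.1) (ub_pos _ _ _).le (ub_le_one (bb_nonneg k) t z.2)
      _ = (N:ℝ) := by rw [Finset.sum_const, Finset.card_range, nsmul_eq_mul, mul_one]
  rcases Nat.eq_zero_or_pos N with h | h
  · subst h; simp [gfun]
  · have hN : (0:ℝ) < N := by exact_mod_cast h
    calc gfun s t N z ≤ (N:ℝ)⁻¹ * N := by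
          apply mul_le_mul_of_nonneg_left h1 (by positivity)
    _ = 1 := inv_mul_cancel₀ hN.ne'

lemma pointwise_bound (s t : ℝ) (N : ℕ) (z : ℝ × ℝ) :
    (gfun s t N z) ^ 2 + ‖fderiv ℝ (gfun s t N) z‖ ^ 2 ≤
      gfun s t N z
      + 2 * ((N:ℝ)⁻¹ ^ 2 * ∑ j ∈ Finset.range N, ∑ k ∈ Finset.range N,
          (|ub' (bb j) s z.1| * |ub' (bb k) s z.1|) * (ub (bb j) t z.2 * ub (bb k) t z.2))
      + 2 * ((N:ℝ)⁻¹ ^ 2 * ∑ j ∈ Finset.range N, ∑ k ∈ Finset.range N,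
          (ub (bb j) s z.1 * ub (bb k) s z.1) * (|ub' (bb j) t z.2| * |ub' (bb k) t z.2|)) := by
  have hsq : (gfun s t N z) ^ 2 ≤ gfun s t N z := by
    nlinarith [gfun_nonneg s t N z, gfun_le_one s t N z]
  have hfd : fderiv ℝ (gfun s t N) z = gfun' s t N z := (hasFDerivAt_gfun s t N z).fderiv
  have hnorm : ‖gfun' s t N z‖ ^ 2 ≤
      2 * (gfun' s t N z (1,0)) ^ 2 + 2 * (gfun' s t N z (0,1)) ^ 2 := by
    have h := opnorm_le (gfun' s t N z)
    have h2 : ‖gfun' s t N z‖ ^ 2 ≤ (|gfun' s t N z (1,0)| + |gfun' s t N z (0,1)|) ^ 2 :=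
      pow_le_pow_left₀ (norm_nonneg _) h 2
    have h3 := sq_abs (gfun' s t N z (1,0))
    have h4 := sq_abs (gfun' s t N z (0,1))
    nlinarith [sq_nonneg (|gfun' s t N z (1,0)| - |gfun' s t N z (0,1)|)]
  have hx : (gfun' s t N z (1,0)) ^ 2 ≤ (N:ℝ)⁻¹ ^ 2 * ∑ j ∈ Finset.range N, ∑ k ∈ Finset.range N,
      (|ub' (bb j) s z.1| * |ub' (bb k) s z.1|) * (ub (bb j) t z.2 * ub (bb k) t z.2) := by
    rw [gfun'_apply_e1 s t N z, mul_pow]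
    apply mul_le_mul_of_nonneg_left _ (by positivity)
    apply le_trans (sq_sum_le _ _)
    apply le_of_eq
    apply Finset.sum_congr rfl; intro j _
    apply Finset.sum_congr rfl; intro k _
    rw [abs_mul, abs_mul, abs_mul, abs_of_pos (ub_pos _ _ _), abs_of_pos (ub_pos _ _ _)]
    ring
  have hy : (gfun' s t N z (0,1)) ^ 2 ≤ (N:ℝ)⁻¹ ^ 2 * ∑ j ∈ Finset.range N, ∑ k ∈ Finset.range N,
      (ub (bb j) s z.1 * ub (bb k) s z.1) * (|ub' (bb j) t z.2| * |ub' (bb k) t z.2|) := by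
    rw [gfun'_apply_e2 s t N z, mul_pow]
    apply mul_le_mul_of_nonneg_left _ (by positivity)
    apply le_trans (sq_sum_le _ _)
    apply le_of_eq
    apply Finset.sum_congr rfl; intro j _
    apply Finset.sum_congr rfl; intro k _
    rw [abs_mul, abs_mul, abs_mul, abs_of_pos (ub_pos _ _ _), abs_of_pos (ub_pos _ _ _)]
    ring
  rw [hfd]
  linarith

lemma integrableOn_prod {F G : ℝ → ℝ} (hF : Continuous F) (hG : Continuous G) :
    IntegrableOn (fun z : ℝ × ℝ => F z.1 * G z.2)
      (Set.Icc (0:ℝ) (2 * π) ×ˢ Set.Icc (0:ℝ) (2 * π)) volume :=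
  ContinuousOn.integrableOn_compact (isCompact_Icc.prod isCompact_Icc)
    ((hF.comp continuous_fst).mul (hG.comp continuous_snd)).continuousOn

lemma key_integral (s t : ℝ) (N : ℕ) (hN : 1 ≤ N) :
    ∫ z in (Set.Icc (0:ℝ) (2 * π) ×ˢ Set.Icc (0:ℝ) (2 * π)),
      ((gfun s t N z) ^ 2 + ‖fderiv ℝ (gfun s t N) z‖ ^ 2) ≤ 97 * π ^ 4 / N := by
  have hπ : (0:ℝ) < π := Real.pi_pos
  set Q : Set (ℝ × ℝ) := Set.Icc (0:ℝ) (2 * π) ×ˢ Set.Icc (0:ℝ) (2 * π) with hQ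
  have hQc : IsCompact Q := isCompact_Icc.prod isCompact_Icc
  have hQm : MeasurableSet Q := measurableSet_Icc.prod measurableSet_Icc
  -- integrabilities
  have hIg : IntegrableOn (gfun s t N) Q volume :=
    ContinuousOn.integrableOn_compact hQc (contDiff_gfun s t N).continuous.continuousOn
  have hIL : IntegrableOn (fun z => (gfun s t N z) ^ 2 + ‖fderiv ℝ (gfun s t N) z‖ ^ 2) Q volume := by
    apply ContinuousOn.integrableOn_compact hQc
    apply Continuous.continuousOn
    exact ((contDiff_gfun s t N).continuous.pow 2).add
      ((((contDiff_gfun s t N).continuous_fderiv (by simp)).norm).pow 2)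
  have hIX : ∀ j k : ℕ, IntegrableOn
      (fun z : ℝ × ℝ => (|ub' (bb j) s z.1| * |ub' (bb k) s z.1|) * (ub (bb j) t z.2 * ub (bb k) t z.2))
      Q volume := fun j k =>
    integrableOn_prod (F := fun x => |ub' (bb j) s x| * |ub' (bb k) s x|)
      (G := fun y => ub (bb j) t y * ub (bb k) t y)
      ((ub'_continuous _ _).abs.mul (ub'_continuous _ _).abs)
      ((ub_continuous _ _).mul (ub_continuous _ _))
  have hIY : ∀ j k : ℕ, IntegrableOn
      (fun z : ℝ × ℝ => (ub (bb j) s z.1 * ub (bb k) s z.1) * (|ub' (bb j) t z.2| * |ub' (bb k) t z.2|))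
      Q volume := fun j k =>
    integrableOn_prod (F := fun x => ub (bb j) s x * ub (bb k) s x)
      (G := fun y => |ub' (bb j) t y| * |ub' (bb k) t y|)
      ((ub_continuous _ _).mul (ub_continuous _ _))
      ((ub'_continuous _ _).abs.mul (ub'_continuous _ _).abs)
  have hISX : IntegrableOn (fun z : ℝ × ℝ => 2 * ((N:ℝ)⁻¹ ^ 2 *
      ∑ j ∈ Finset.range N, ∑ k ∈ Finset.range N,
        (|ub' (bb j) s z.1| * |ub' (bb k) s z.1|) * (ub (bb j) t z.2 * ub (bb k) t z.2))) Q volume := by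
    apply Integrable.const_mul
    apply Integrable.const_mul
    apply MeasureTheory.integrable_finset_sum
    intro j _
    apply MeasureTheory.integrable_finset_sum
    intro k _
    exact hIX j k
  have hISY : IntegrableOn (fun z : ℝ × ℝ => 2 * ((N:ℝ)⁻¹ ^ 2 *
      ∑ j ∈ Finset.range N, ∑ k ∈ Finset.range N,
        (ub (bb j) s z.1 * ub (bb k) s z.1) * (|ub' (bb j) t z.2| * |ub' (bb k) t z.2|))) Q volume := by
    apply Integrable.const_mul
    apply Integrable.const_mul
    apply MeasureTheory.integrable_finset_sum
    intro j _
    apply MeasureTheory.integrable_finset_sum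
    intro k _
    exact hIY j k
  -- step 1 : pointwise domination
  have step1 : ∫ z in Q, ((gfun s t N z) ^ 2 + ‖fderiv ℝ (gfun s t N) z‖ ^ 2) ≤
      ∫ z in Q, (gfun s t N z
        + 2 * ((N:ℝ)⁻¹ ^ 2 * ∑ j ∈ Finset.range N, ∑ k ∈ Finset.range N,
            (|ub' (bb j) s z.1| * |ub' (bb k) s z.1|) * (ub (bb j) t z.2 * ub (bb k) t z.2))
        + 2 * ((N:ℝ)⁻¹ ^ 2 * ∑ j ∈ Finset.range N, ∑ k ∈ Finset.range N,
            (ub (bb j) s z.1 * ub (bb k) s z.1) * (|ub' (bb j) t z.2| * |ub' (bb k) t z.2|))) := by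
    apply setIntegral_mono_on hIL ((hIg.add hISX).add hISY) hQm
    intro z _
    exact pointwise_bound s t N z
  -- step 2 : split the integral
  have step2 : ∫ z in Q, (gfun s t N z
        + 2 * ((N:ℝ)⁻¹ ^ 2 * ∑ j ∈ Finset.range N, ∑ k ∈ Finset.range N,
            (|ub' (bb j) s z.1| * |ub' (bb k) s z.1|) * (ub (bb j) t z.2 * ub (bb k) t z.2))
        + 2 * ((N:ℝ)⁻¹ ^ 2 * ∑ j ∈ Finset.range N, ∑ k ∈ Finset.range N,
            (ub (bb j) s z.1 * ub (bb k) s z.1) * (|ub' (bb j) t z.2| * |ub' (bb k) t z.2|)))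
      = (∫ z in Q, gfun s t N z)
        + 2 * ((N:ℝ)⁻¹ ^ 2 * ∑ j ∈ Finset.range N, ∑ k ∈ Finset.range N,
            (∫ x in Set.Icc (0:ℝ) (2 * π), |ub' (bb j) s x| * |ub' (bb k) s x|)
              * (∫ y in Set.Icc (0:ℝ) (2 * π), ub (bb j) t y * ub (bb k) t y))
        + 2 * ((N:ℝ)⁻¹ ^ 2 * ∑ j ∈ Finset.range N, ∑ k ∈ Finset.range N,
            (∫ x in Set.Icc (0:ℝ) (2 * π), ub (bb j) s x * ub (bb k) s x)
              * (∫ y in Set.Icc (0:ℝ) (2 * π), |ub' (bb j) t y| * |ub' (bb k) t y|)) := by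
    have hIgX : IntegrableOn (fun z : ℝ × ℝ => gfun s t N z
        + 2 * ((N:ℝ)⁻¹ ^ 2 * ∑ j ∈ Finset.range N, ∑ k ∈ Finset.range N,
          (|ub' (bb j) s z.1| * |ub' (bb k) s z.1|) * (ub (bb j) t z.2 * ub (bb k) t z.2))) Q volume :=
      hIg.add hISX
    rw [integral_add hIgX hISY, integral_add hIg hISX]
    congr 1
    · congr 1
      · rw [MeasureTheory.integral_const_mul, MeasureTheory.integral_const_mul,
          MeasureTheory.integral_finset_sum _ (fun j _ => integrable_finset_sum _ (fun k _ => hIX j k))]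
        congr 1; congr 1
        apply Finset.sum_congr rfl; intro j _
        rw [MeasureTheory.integral_finset_sum _ (fun k _ => hIX j k)]
        apply Finset.sum_congr rfl; intro k _
        exact fubini_Q (fun x => |ub' (bb j) s x| * |ub' (bb k) s x|)
          (fun y => ub (bb j) t y * ub (bb k) t y)
    · rw [MeasureTheory.integral_const_mul, MeasureTheory.integral_const_mul,
        MeasureTheory.integral_finset_sum _ (fun j _ => integrable_finset_sum _ (fun k _ => hIY j k))]
      congr 1; congr 1
      apply Finset.sum_congr rfl; intro j _
      rw [MeasureTheory.integral_finset_sum _ (fun k _ => hIY j k)]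
      apply Finset.sum_congr rfl; intro k _
      exact fubini_Q (fun x => ub (bb j) s x * ub (bb k) s x)
        (fun y => |ub' (bb j) t y| * |ub' (bb k) t y|)
  -- bound each piece
  have hT0 : ∫ z in Q, gfun s t N z ≤ (N:ℝ)⁻¹ * (π ^ 4 / 3) := by
    have h1 : ∫ z in Q, gfun s t N z
        = (N:ℝ)⁻¹ * ∑ k ∈ Finset.range N,
            (∫ x in Set.Icc (0:ℝ) (2 * π), ub (bb k) s x)
              * (∫ y in Set.Icc (0:ℝ) (2 * π), ub (bb k) t y) := by
      simp only [gfun]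
      rw [MeasureTheory.integral_const_mul, MeasureTheory.integral_finset_sum _
        (fun k _ => integrableOn_prod (F := fun x => ub (bb k) s x)
          (G := fun y => ub (bb k) t y) (ub_continuous _ _) (ub_continuous _ _))]
      congr 1
      apply Finset.sum_congr rfl; intro k _
      exact fubini_Q (fun x => ub (bb k) s x) (fun y => ub (bb k) t y)
    rw [h1]
    apply mul_le_mul_of_nonneg_left _ (by positivity)
    calc ∑ k ∈ Finset.range N,
          (∫ x in Set.Icc (0:ℝ) (2 * π), ub (bb k) s x)
            * (∫ y in Set.Icc (0:ℝ) (2 * π), ub (bb k) t y)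
        ≤ ∑ k ∈ Finset.range N, π ^ 4 * ((4:ℝ)⁻¹) ^ (k + 1) := by
          apply Finset.sum_le_sum; intro k _
          have ha := integral_exp_le (bb k) s (bb_pos k)
          have hb := integral_exp_le (bb k) t (bb_pos k)
          have hb0 : 0 ≤ ∫ y in Set.Icc (0:ℝ) (2 * π), ub (bb k) t y :=
            setIntegral_nonneg measurableSet_Icc (fun x _ => (ub_pos _ _ _).le)
          have hd : (π ^ 2 / Real.sqrt (bb k)) * (π ^ 2 / Real.sqrt (bb k))
              = π ^ 4 * ((4:ℝ)⁻¹) ^ (k + 1) := by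
            rw [div_mul_div_comm, Real.mul_self_sqrt (bb_pos k).le,
              show π ^ 2 * π ^ 2 = π ^ 4 by ring, bb, div_eq_mul_inv, ← inv_pow]
          rw [← hd]
          exact mul_le_mul ha hb hb0 (by positivity)
      _ ≤ π ^ 4 / 3 := by
          have h3 : ∑ k ∈ Finset.range N, ((4:ℝ)⁻¹) ^ (k + 1)
              = 4⁻¹ * ∑ k ∈ Finset.range N, ((4:ℝ)⁻¹) ^ k := by
            rw [Finset.mul_sum]
            apply Finset.sum_congr rfl; intro k _
            rw [pow_succ]; ring
          have h2 : ∑ k ∈ Finset.range N, ((4:ℝ)⁻¹) ^ (k + 1) ≤ 3⁻¹ := by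
            rw [h3]
            calc (4:ℝ)⁻¹ * ∑ k ∈ Finset.range N, ((4:ℝ)⁻¹) ^ k
                ≤ 4⁻¹ * (1 - 4⁻¹)⁻¹ :=
                  mul_le_mul_of_nonneg_left (geom_partial (by norm_num) (by norm_num) N) (by norm_num)
            _ = 3⁻¹ := by norm_num
          rw [← Finset.mul_sum]
          calc π ^ 4 * ∑ k ∈ Finset.range N, ((4:ℝ)⁻¹) ^ (k + 1) ≤ π ^ 4 * 3⁻¹ :=
                mul_le_mul_of_nonneg_left h2 (by positivity)
          _ = π ^ 4 / 3 := by rw [div_eq_mul_inv]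
  have hTX : ∑ j ∈ Finset.range N, ∑ k ∈ Finset.range N,
      (∫ x in Set.Icc (0:ℝ) (2 * π), |ub' (bb j) s x| * |ub' (bb k) s x|)
        * (∫ y in Set.Icc (0:ℝ) (2 * π), ub (bb j) t y * ub (bb k) t y)
      ≤ 8 * π ^ 4 * (3 * N) := by
    calc ∑ j ∈ Finset.range N, ∑ k ∈ Finset.range N,
        (∫ x in Set.Icc (0:ℝ) (2 * π), |ub' (bb j) s x| * |ub' (bb k) s x|)
          * (∫ y in Set.Icc (0:ℝ) (2 * π), ub (bb j) t y * ub (bb k) t y)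
        ≤ ∑ j ∈ Finset.range N, ∑ k ∈ Finset.range N,
            8 * π ^ 4 * ((4:ℝ)⁻¹) ^ (max j k - min j k) := by
          apply Finset.sum_le_sum; intro j _; apply Finset.sum_le_sum; intro k _
          have ha := int_cross_le j k s
          have hb := int_ub_mul_le j k t
          have hb0 : 0 ≤ ∫ y in Set.Icc (0:ℝ) (2 * π), ub (bb j) t y * ub (bb k) t y :=
            setIntegral_nonneg measurableSet_Icc
              (fun x _ => mul_nonneg (ub_pos _ _ _).le (ub_pos _ _ _).le)
          have hss : Real.sqrt (bb (max j k)) * Real.sqrt (bb (max j k)) = bb (max j k) :=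
            Real.mul_self_sqrt (bb_pos _).le
          have hd : (8 * π ^ 2 * bb (min j k) / Real.sqrt (bb (max j k)))
              * (π ^ 2 / Real.sqrt (bb (max j k)))
              = 8 * π ^ 4 * ((4:ℝ)⁻¹) ^ (max j k - min j k) := by
            rw [div_mul_div_comm, hss, ← bb_ratio j k, ← mul_div_assoc]
            congr 1; ring
          rw [← hd]
          apply mul_le_mul ha hb hb0
          have := Real.sqrt_pos.2 (bb_pos (max j k))
          have := bb_pos (min j k)
          positivity
    _ = 8 * π ^ 4 * (∑ j ∈ Finset.range N, ∑ k ∈ Finset.range N,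
            ((4:ℝ)⁻¹) ^ (max j k - min j k)) := by
          rw [Finset.mul_sum]
          apply Finset.sum_congr rfl; intro j _
          rw [Finset.mul_sum]
    _ ≤ 8 * π ^ 4 * (3 * N) := mul_le_mul_of_nonneg_left (double_geom N) (by positivity)
  have hTY : ∑ j ∈ Finset.range N, ∑ k ∈ Finset.range N,
      (∫ x in Set.Icc (0:ℝ) (2 * π), ub (bb j) s x * ub (bb k) s x)
        * (∫ y in Set.Icc (0:ℝ) (2 * π), |ub' (bb j) t y| * |ub' (bb k) t y|)
      ≤ 8 * π ^ 4 * (3 * N) := by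
    calc ∑ j ∈ Finset.range N, ∑ k ∈ Finset.range N,
        (∫ x in Set.Icc (0:ℝ) (2 * π), ub (bb j) s x * ub (bb k) s x)
          * (∫ y in Set.Icc (0:ℝ) (2 * π), |ub' (bb j) t y| * |ub' (bb k) t y|)
        ≤ ∑ j ∈ Finset.range N, ∑ k ∈ Finset.range N,
            8 * π ^ 4 * ((4:ℝ)⁻¹) ^ (max j k - min j k) := by
          apply Finset.sum_le_sum; intro j _; apply Finset.sum_le_sum; intro k _
          have ha := int_ub_mul_le j k s
          have hb := int_cross_le j k t
          have hb0 : 0 ≤ ∫ y in Set.Icc (0:ℝ) (2 * π), |ub' (bb j) t y| * |ub' (bb k) t y| :=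
            setIntegral_nonneg measurableSet_Icc
              (fun x _ => mul_nonneg (abs_nonneg _) (abs_nonneg _))
          have hss : Real.sqrt (bb (max j k)) * Real.sqrt (bb (max j k)) = bb (max j k) :=
            Real.mul_self_sqrt (bb_pos _).le
          have hd : (π ^ 2 / Real.sqrt (bb (max j k)))
              * (8 * π ^ 2 * bb (min j k) / Real.sqrt (bb (max j k)))
              = 8 * π ^ 4 * ((4:ℝ)⁻¹) ^ (max j k - min j k) := by
            rw [div_mul_div_comm, hss, ← bb_ratio j k, ← mul_div_assoc]
            congr 1; ring
          rw [← hd]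
          apply mul_le_mul ha hb hb0
          have := Real.sqrt_pos.2 (bb_pos (max j k))
          positivity
    _ = 8 * π ^ 4 * (∑ j ∈ Finset.range N, ∑ k ∈ Finset.range N,
            ((4:ℝ)⁻¹) ^ (max j k - min j k)) := by
          rw [Finset.mul_sum]
          apply Finset.sum_congr rfl; intro j _
          rw [Finset.mul_sum]
    _ ≤ 8 * π ^ 4 * (3 * N) := mul_le_mul_of_nonneg_left (double_geom N) (by positivity)
  -- put everything together
  have hN0 : (N:ℝ) ≠ 0 := Nat.cast_ne_zero.2 (by omega)
  have hνN : (N:ℝ)⁻¹ * (N:ℝ) = 1 := inv_mul_cancel₀ hN0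
  have hexp : (N:ℝ)⁻¹ ^ 2 * (8 * π ^ 4 * (3 * (N:ℝ))) = 24 * π ^ 4 * (N:ℝ)⁻¹ := by
    have h : (N:ℝ)⁻¹ ^ 2 * (8 * π ^ 4 * (3 * (N:ℝ)))
        = 24 * π ^ 4 * ((N:ℝ)⁻¹ * ((N:ℝ)⁻¹ * (N:ℝ))) := by ring
    rw [h, hνN, mul_one]
  calc ∫ z in Q, ((gfun s t N z) ^ 2 + ‖fderiv ℝ (gfun s t N) z‖ ^ 2)
      ≤ _ := step1
  _ = _ := step2
  _ ≤ (N:ℝ)⁻¹ * (π ^ 4 / 3) + 2 * ((N:ℝ)⁻¹ ^ 2 * (8 * π ^ 4 * (3 * (N:ℝ))))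
        + 2 * ((N:ℝ)⁻¹ ^ 2 * (8 * π ^ 4 * (3 * (N:ℝ)))) := by
      refine add_le_add (add_le_add hT0 ?_) ?_
      · exact mul_le_mul_of_nonneg_left
          (mul_le_mul_of_nonneg_left hTX (by positivity)) (by norm_num)
      · exact mul_le_mul_of_nonneg_left
          (mul_le_mul_of_nonneg_left hTY (by positivity)) (by norm_num)
  _ ≤ 97 * π ^ 4 / (N:ℝ) := by
      rw [hexp, show (97:ℝ) * π ^ 4 / (N:ℝ) = 97 * π ^ 4 * (N:ℝ)⁻¹ from div_eq_mul_inv _ _]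
      nlinarith [mul_nonneg (inv_nonneg.2 (Nat.cast_nonneg N)) (pow_pos Real.pi_pos 4).le]

/-- Periodic bump on the circle. -/
def tub (b : ℝ) (θ : Real.Angle) : ℝ := Real.exp (-(b * (1 - θ.cos)))

lemma tub_continuous (b : ℝ) : Continuous (tub b) :=
  Real.continuous_exp.comp ((continuous_const.mul (continuous_const.sub
    Real.Angle.continuous_cos)).neg)

lemma angle_cos_le_one (θ : Real.Angle) : θ.cos ≤ 1 := by
  induction θ using Real.Angle.induction_on
  rw [Real.Angle.cos_coe]; exact Real.cos_le_one _

lemma tub_pos (b : ℝ) (θ : Real.Angle) : 0 < tub b θ := Real.exp_pos _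

lemma tub_le_one {b : ℝ} (hb : 0 ≤ b) (θ : Real.Angle) : tub b θ ≤ 1 := by
  have h : -(b * (1 - θ.cos)) ≤ 0 := by nlinarith [angle_cos_le_one θ]
  calc tub b θ ≤ Real.exp 0 := Real.exp_le_exp.2 h
  _ = 1 := Real.exp_zero

lemma tub_zero (b : ℝ) : tub b 0 = 1 := by
  rw [tub, Real.Angle.cos_zero]
  norm_num

lemma tub_coe (b x s : ℝ) :
    tub b (((x : AddCircle (2 * Real.pi))) - ((s : AddCircle (2 * Real.pi)))) = ub b s x := by
  rw [← AddCircle.coe_sub]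
  show tub b (((x - s : ℝ) : Real.Angle)) = _
  rw [tub, Real.Angle.cos_coe, ub]

lemma angle_cos_lt_one : ∀ {θ : Real.Angle}, θ ≠ 0 → θ.cos < 1 := by
  intro θ
  induction θ using Real.Angle.induction_on
  rename_i x
  intro h
  rw [Real.Angle.cos_coe]
  rcases lt_or_eq_of_le (Real.cos_le_one x) with h1 | h1
  · exact h1
  · exfalso
    apply h
    obtain ⟨n, hn⟩ := (Real.cos_eq_one_iff x).1 h1
    exact (AddCircle.coe_eq_zero_iff (2 * Real.pi)).2
      ⟨n, by rw [zsmul_eq_mul]; exact_mod_cast hn⟩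

lemma nat_le_pow (k : ℕ) : ((k : ℝ) + 1) ≤ 4 ^ k := by
  induction k with
  | zero => norm_num
  | succ n ih =>
    have h4 : (1:ℝ) ≤ 4 ^ n := one_le_pow₀ (by norm_num)
    push_cast
    push_cast at ih
    calc ((n:ℝ) + 1) + 1 ≤ 4 ^ n + 4 ^ n := by linarith
    _ ≤ 4 ^ (n + 1) := by rw [pow_succ]; nlinarith

end NoAtomsAux

open NoAtomsAux Filter in
/-- **Finite signed measures of class `H⁻¹` on the torus have no atoms.**
If `μ` is a finite signed Borel measure on `T²` such that `φ ↦ ∫ φ dμ` is bounded by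
`C‖φ‖_{H¹}` on smooth functions (i.e. `μ ∈ H⁻¹(T²)`), then `μ({x₀}) = 0` for every
`x₀ ∈ T²`. Smooth functions on the torus are encoded by their smooth periodic lifts. -/
theorem signedMeasure_Hminus1_no_atoms
    (μ : SignedMeasure Torus2)
    (hH : ∃ C : ℝ, ∀ (φ : Torus2 → ℝ) (g : ℝ × ℝ → ℝ),
      (∀ x : ℝ × ℝ, g x = φ (torusProj x)) → ContDiff ℝ (⊤ : ℕ∞) g →
      |signedIntegral μ φ| ≤ C * H1norm g) :
    ∀ x₀ : Torus2, μ {x₀} = 0 := by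
  obtain ⟨C, hC⟩ := hH
  intro x₀
  obtain ⟨s, hs⟩ : ∃ s : ℝ, ((s : AddCircle (2 * Real.pi))) = x₀.1 := Quotient.exists_rep x₀.1
  obtain ⟨t, ht⟩ : ∃ t : ℝ, ((t : AddCircle (2 * Real.pi))) = x₀.2 := Quotient.exists_rep x₀.2
  set φ : ℕ → Torus2 → ℝ := fun N p =>
    (N:ℝ)⁻¹ * ∑ k ∈ Finset.range N, tub (bb k) (p.1 - x₀.1) * tub (bb k) (p.2 - x₀.2) with hφdef
  -- the lift property
  have hlift : ∀ N : ℕ, ∀ z : ℝ × ℝ, gfun s t N z = φ N (torusProj z) := by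
    intro N z
    simp only [hφdef, gfun, torusProj]
    congr 1
    apply Finset.sum_congr rfl; intro k _
    rw [← hs, ← ht, tub_coe, tub_coe]
  -- bounds on φ
  have hφ0 : ∀ N p, 0 ≤ φ N p := by
    intro N p
    apply mul_nonneg (by positivity)
    exact Finset.sum_nonneg fun k _ => mul_nonneg (tub_pos _ _).le (tub_pos _ _).le
  have hφ1 : ∀ N p, φ N p ≤ 1 := by
    intro N p
    have h1 : ∑ k ∈ Finset.range N, tub (bb k) (p.1 - x₀.1) * tub (bb k) (p.2 - x₀.2) ≤ (N:ℝ) := by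
      calc ∑ k ∈ Finset.range N, tub (bb k) (p.1 - x₀.1) * tub (bb k) (p.2 - x₀.2)
          ≤ ∑ _k ∈ Finset.range N, (1:ℝ) := Finset.sum_le_sum fun k _ =>
            mul_le_one₀ (tub_le_one (bb_pos k).le _) (tub_pos _ _).le (tub_le_one (bb_pos k).le _)
        _ = (N:ℝ) := by rw [Finset.sum_const, Finset.card_range, nsmul_eq_mul, mul_one]
    rcases Nat.eq_zero_or_pos N with h | h
    · simp [hφdef, h]
    · have hN : (0:ℝ) < N := by exact_mod_cast h
      calc φ N p ≤ (N:ℝ)⁻¹ * N := mul_le_mul_of_nonneg_left h1 (by positivity)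
      _ = 1 := inv_mul_cancel₀ hN.ne'
  have hφcont : ∀ N, Continuous (φ N) := by
    intro N
    apply continuous_const.mul
    apply continuous_finset_sum
    intro k _
    exact ((tub_continuous _).comp (continuous_fst.sub continuous_const)).mul
      ((tub_continuous _).comp (continuous_snd.sub continuous_const))
  -- pointwise convergence to the indicator of {x₀}
  have hpt : ∀ p : Torus2, Tendsto (fun N => φ N p) atTop
      (nhds (Set.indicator {x₀} (fun _ => (1:ℝ)) p)) := by
    intro p
    by_cases hp : p = x₀
    · subst hp
      have hone : ({p} : Set Torus2).indicator (fun _ => (1:ℝ)) p = 1 := by simp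
      rw [hone]
      apply Tendsto.congr' _ tendsto_const_nhds
      filter_upwards [eventually_ge_atTop 1] with N hN
      have hN0 : ((N:ℝ)) ≠ 0 := Nat.cast_ne_zero.2 (by omega)
      simp only [hφdef, sub_self, show ∀ k, tub (bb k) (0 : AddCircle (2 * Real.pi)) = 1 from fun k => tub_zero _, mul_one, Finset.sum_const, Finset.card_range,
        nsmul_eq_mul]
      rw [inv_mul_cancel₀ hN0]
    · rw [Set.indicator_of_notMem (by simpa using hp)]
      have hd : p.1 - x₀.1 ≠ 0 ∨ p.2 - x₀.2 ≠ 0 := by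
        by_contra h
        push_neg at h
        exact hp (Prod.ext (sub_eq_zero.1 h.1) (sub_eq_zero.1 h.2))
      set δ : ℝ := (1 - Real.Angle.cos (p.1 - x₀.1)) + (1 - Real.Angle.cos (p.2 - x₀.2)) with hδdef
      have hδ : 0 < δ := by
        have hA := angle_cos_le_one (p.1 - x₀.1)
        have hB := angle_cos_le_one (p.2 - x₀.2)
        rcases hd with h | h
        · have := angle_cos_lt_one h; rw [hδdef]; linarith
        · have := angle_cos_lt_one h; rw [hδdef]; linarith
      set q : ℝ := Real.exp (-(4 * δ)) with hqdef
      have hq0 : 0 ≤ q := (Real.exp_pos _).le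
      have hq1 : q < 1 := by
        rw [hqdef, ← Real.exp_zero]
        exact Real.exp_lt_exp.2 (by linarith)
      have hterm : ∀ k : ℕ, tub (bb k) (p.1 - x₀.1) * tub (bb k) (p.2 - x₀.2) ≤ q ^ (k + 1) := by
        intro k
        have h1 : tub (bb k) (p.1 - x₀.1) * tub (bb k) (p.2 - x₀.2)
            = Real.exp (-(bb k * δ)) := by
          show Real.exp _ * Real.exp _ = _; rw [← Real.exp_add]; congr 1; rw [hδdef]; ring
        have h2 : 4 * ((k:ℝ) + 1) ≤ bb k := by
          have := nat_le_pow k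
          rw [bb]
          rw [pow_succ]
          nlinarith
        have h3 : -(bb k * δ) ≤ ((k:ℝ) + 1) * (-(4 * δ)) := by nlinarith
        calc tub (bb k) (p.1 - x₀.1) * tub (bb k) (p.2 - x₀.2)
            = Real.exp (-(bb k * δ)) := h1
        _ ≤ Real.exp (((k:ℝ) + 1) * (-(4 * δ))) := Real.exp_le_exp.2 h3
        _ = q ^ (k + 1) := by
            rw [hqdef, ← Real.exp_nat_mul]
            congr 1
            push_cast
            ring
      have hsum : ∀ N, φ N p ≤ (N:ℝ)⁻¹ * (q * (1 - q)⁻¹) := by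
        intro N
        apply mul_le_mul_of_nonneg_left _ (by positivity)
        calc ∑ k ∈ Finset.range N, tub (bb k) (p.1 - x₀.1) * tub (bb k) (p.2 - x₀.2)
            ≤ ∑ k ∈ Finset.range N, q ^ (k + 1) := Finset.sum_le_sum fun k _ => hterm k
        _ = q * ∑ k ∈ Finset.range N, q ^ k := by
            rw [Finset.mul_sum]
            apply Finset.sum_congr rfl; intro k _
            rw [pow_succ]; ring
        _ ≤ q * (1 - q)⁻¹ := mul_le_mul_of_nonneg_left (geom_partial hq0 hq1 N) hq0
      apply squeeze_zero (fun N => hφ0 N p) hsum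
      have h := tendsto_const_div_atTop_nhds_zero_nat (q * (1 - q)⁻¹)
      apply h.congr
      intro N
      rw [div_eq_mul_inv, mul_comm]
  -- measurability of the singleton
  have hsing : MeasurableSet ({x₀} : Set Torus2) := by
    have h : ({x₀} : Set Torus2) = {x₀.1} ×ˢ {x₀.2} := by ext p; simp [Prod.ext_iff]
    rw [h]; exact (measurableSet_singleton _).prod (measurableSet_singleton _)
  -- dominated convergence for the positive and negative parts
  have hDCT : ∀ (ρ : Measure Torus2), IsFiniteMeasure ρ →
      Tendsto (fun N => ∫ p, φ N p ∂ρ) atTop (nhds ((ρ {x₀}).toReal)) := by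
    intro ρ hρ
    have h := MeasureTheory.tendsto_integral_of_dominated_convergence (μ := ρ)
      (F := fun N => φ N) (f := Set.indicator {x₀} fun _ => (1:ℝ)) (bound := fun _ => (1:ℝ))
      (fun N => (hφcont N).aestronglyMeasurable)
      (integrable_const 1)
      (fun N => Filter.Eventually.of_forall fun p => by
        rw [Real.norm_eq_abs, abs_of_nonneg (hφ0 N p)]; exact hφ1 N p)
      (Filter.Eventually.of_forall hpt)
    rwa [MeasureTheory.integral_indicator_const (1:ℝ) hsing, smul_eq_mul, mul_one] at h
  have hμx : μ {x₀} = ((μ.toJordanDecomposition.posPart {x₀}).toReal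
      - (μ.toJordanDecomposition.negPart {x₀}).toReal) := by
    conv_lhs => rw [← μ.toSignedMeasure_toJordanDecomposition]
    rw [MeasureTheory.JordanDecomposition.toSignedMeasure, MeasureTheory.VectorMeasure.sub_apply,
      Measure.toSignedMeasure_apply_measurable hsing, Measure.toSignedMeasure_apply_measurable hsing]; rfl
  have hlim : Tendsto (fun N => signedIntegral μ (φ N)) atTop (nhds (μ {x₀})) := by
    rw [hμx]
    exact (hDCT μ.toJordanDecomposition.posPart inferInstance).sub
      (hDCT μ.toJordanDecomposition.negPart inferInstance)
  -- quantitative bound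
  have hH1 : ∀ N : ℕ, 1 ≤ N → |signedIntegral μ (φ N)| ≤ |C| * Real.sqrt (97 * Real.pi ^ 4 / N) := by
    intro N hN
    have h1 := hC (φ N) (gfun s t N) (fun z => hlift N z) (contDiff_gfun s t N)
    have h2 : (0:ℝ) ≤ H1norm (gfun s t N) := Real.sqrt_nonneg _
    have h3 : H1norm (gfun s t N) ≤ Real.sqrt (97 * Real.pi ^ 4 / N) :=
      Real.sqrt_le_sqrt (key_integral s t N hN)
    calc |signedIntegral μ (φ N)| ≤ C * H1norm (gfun s t N) := h1
    _ ≤ |C| * H1norm (gfun s t N) := mul_le_mul_of_nonneg_right (le_abs_self C) h2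
    _ ≤ |C| * Real.sqrt (97 * Real.pi ^ 4 / N) := mul_le_mul_of_nonneg_left h3 (abs_nonneg C)
  have hrhs : Tendsto (fun N : ℕ => |C| * Real.sqrt (97 * Real.pi ^ 4 / N)) atTop (nhds 0) := by
    have h1 : Tendsto (fun N : ℕ => (97 * Real.pi ^ 4 / N : ℝ)) atTop (nhds 0) :=
      tendsto_const_div_atTop_nhds_zero_nat _
    have h2 : Tendsto (fun N : ℕ => Real.sqrt (97 * Real.pi ^ 4 / N)) atTop (nhds 0) := by
      have h3 := (Real.continuous_sqrt.tendsto 0).comp h1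
      rw [Real.sqrt_zero] at h3
      exact h3
    simpa using h2.const_mul |C|
  have hfinal : |μ {x₀}| ≤ 0 := by
    apply le_of_tendsto_of_tendsto hlim.abs hrhs
    filter_upwards [eventually_ge_atTop 1] with N hN
    exact hH1 N hN
  exact abs_nonpos_iff.1 hfinal

end
end

section
/- Let X, Y be separable Banach spaces with Y continuously and densely embedded in X. For M ≥ 0, α > 0, a ≥ 0, the set A_a = { z ∈ C([0,T]; (B_M^{X*}, w*)) : ‖z‖_{C^α([0,T]; Y*)} ≤ a } is compact in C([0,T]; (B_M^{X*}, w*)), where B_M^{X*} is the closed ball of radius M in X* with the weak-* topology. -/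
/-!
By Banach–Alaoglu and Tychonoff, the paths `[0,T] → (X*, w*)` obeying the bounds, continuous or
not, form a compact set for pointwise weak-* convergence. The Hölder bound makes the paths
`t ↦ z t (j y)` equicontinuous for each `y`, and the uniform bound `M` extends this to every
`φ ∈ X` through the density of `j(Y)`. Hence the family is equicontinuous into `X*` with the
uniformity of pointwise convergence, its members are continuous, and Arzelà–Ascoli turns
pointwise compactness into compactness in `C([0,T]; (X*, w*))`.
-/

open Filter Topology

theorem equicontinuous_pi_iff {ι X κ : Type*} [TopologicalSpace X] {α : κ → Type*}
    [∀ k, UniformSpace (α k)] {F : ι → X → ∀ k, α k} :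
    Equicontinuous F ↔ ∀ k, Equicontinuous fun i x => F i x k := by
  rw [Pi.uniformSpace_eq, equicontinuous_iInf_rng]
  refine forall_congr' fun k => ?_
  let : UniformSpace (∀ k, α k) := .comap (Function.eval k) inferInstance
  exact IsUniformInducing.equicontinuous_iff (u := Function.eval k) ⟨rfl⟩

theorem ArzelaAscoli.isCompact_preimage_coe {X α : Type*} [TopologicalSpace X] [UniformSpace α]
    {K : Set (X → α)} (hK : IsCompact K) (hK_equi : Equicontinuous ((↑) : K → X → α)) :
    IsCompact (((⇑) : C(X, α) → X → α) ⁻¹' K) := by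
  refine ArzelaAscoli.isCompact_of_equicontinuous _ ?_
    (hK_equi.comp fun z : ((⇑) ⁻¹' K : Set C(X, α)) => ⟨z.1, z.2⟩)
  change IsCompact (((⇑) : C(X, α) → X → α) '' _)
  rwa [Set.image_preimage_eq_of_subset fun g hg => ⟨⟨g, hK_equi.continuous ⟨g, hg⟩⟩, rfl⟩]

theorem uniformEquicontinuous_of_dist_le_mul_rpow {ι β γ : Type*} [PseudoMetricSpace β]
    [PseudoMetricSpace γ] {F : ι → β → γ} {C α : ℝ} (hα : 0 < α)
    (hF : ∀ i x y, dist (F i x) (F i y) ≤ C * dist x y ^ α) : UniformEquicontinuous F := by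
  refine Metric.uniformEquicontinuous_of_continuity_modulus (fun r => C * r ^ α) ?_ F
    fun x y i => hF i x y
  simpa [Real.zero_rpow hα.ne'] using
    ((continuousAt_id.rpow_const (Or.inr hα.le)).tendsto.const_mul C :
      Tendsto (fun r : ℝ => C * r ^ α) (𝓝 0) (𝓝 (C * (0 : ℝ) ^ α)))

theorem equicontinuous_apply_of_dense {ι X E F G : Type*} [TopologicalSpace X]
    [SeminormedAddCommGroup E] [SeminormedAddCommGroup F] [FunLike G E F]
    [AddMonoidHomClass G E F] {g : ι → X → G} {M : ℝ} (hg : ∀ i x v, ‖g i x v‖ ≤ M * ‖v‖)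
    {D : Set E} (hD : Dense D) (hD_equi : ∀ w ∈ D, Equicontinuous fun i x => g i x w)
    (v : E) :
    Equicontinuous fun i x => g i x v := by
  intro x₀
  rw [Metric.equicontinuousAt_iff_right]
  intro ε hε
  obtain ⟨w, hwD, hvw⟩ : ∃ w ∈ D, M * ‖v - w‖ < ε / 3 :=
    hD.exists_mem_open (U := {w | M * ‖v - w‖ < ε / 3})
      (isOpen_lt (by fun_prop) continuous_const) ⟨v, show M * ‖v - v‖ < ε / 3 by simpa using hε⟩
  have hclose : ∀ i x, dist (g i x v) (g i x w) < ε / 3 := fun i x => by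
    rw [dist_eq_norm, ← map_sub]
    exact (hg i x _).trans_lt hvw
  filter_upwards [Metric.equicontinuousAt_iff_right.1 (hD_equi w hwD x₀) (ε / 3) (by positivity)]
    with x hx i
  calc dist (g i x₀ v) (g i x v)
      ≤ dist (g i x₀ v) (g i x₀ w) + dist (g i x₀ w) (g i x w) + dist (g i x w) (g i x v) :=
        dist_triangle4 ..
    _ < ε / 3 + ε / 3 + ε / 3 := by
        gcongr
        · exact hclose i x₀
        · exact hx i
        · exact dist_comm (g i x w) _ ▸ hclose i x
    _ = ε := by ring

theorem WeakDual.isClosed_setOf_norm_comp_le {𝕜 E F : Type*} [NontriviallyNormedField 𝕜]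
    [SeminormedAddCommGroup E] [NormedSpace 𝕜 E] [SeminormedAddCommGroup F] [NormedSpace 𝕜 F]
    (j : F →L[𝕜] E) (r : ℝ) :
    IsClosed {f : WeakDual 𝕜 E | ‖(toStrongDual f).comp j‖ ≤ r} := by
  have hcont :
      Continuous fun f : WeakDual 𝕜 E => StrongDual.toWeakDual ((toStrongDual f).comp j) :=
    continuous_of_continuous_eval fun y => eval_continuous (j y)
  convert (isClosed_closedBall 0 r).preimage hcont using 1
  ext f
  simp

section HolderBall

variable {X Y : Type*} [NormedAddCommGroup X] [NormedSpace ℝ X] [NormedAddCommGroup Y]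
  [NormedSpace ℝ Y]

def holderBallFun (j : Y →L[ℝ] X) (T M α a : ℝ) : Set (Set.Icc (0:ℝ) T → WeakDual ℝ X) :=
  {g | (∀ t (φ : X), |g t φ| ≤ M * ‖φ‖) ∧
    (∀ t, ‖(WeakDual.toStrongDual (g t)).comp j‖ ≤ a) ∧
    (∀ s t : Set.Icc (0:ℝ) T,
      ‖(WeakDual.toStrongDual (g t)).comp j - (WeakDual.toStrongDual (g s)).comp j‖
        ≤ a * |(t : ℝ) - (s : ℝ)| ^ α)}

variable {j : Y →L[ℝ] X} {T M α a : ℝ}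

theorem isCompact_holderBallFun (hM : 0 ≤ M) : IsCompact (holderBallFun j T M α a) := by
  have hclosed : IsClosed (holderBallFun j T M α a) := by
    simp only [holderBallFun, Set.ofPred_and, Set.ofPred_forall]
    refine .inter (isClosed_iInter fun t => isClosed_iInter fun φ => ?_)
      (.inter (isClosed_iInter fun t => ?_)
        (isClosed_iInter fun s => isClosed_iInter fun t => ?_))
    · exact isClosed_le ((WeakDual.eval_continuous φ).comp (continuous_apply t)).abs
        continuous_const
    · exact (WeakDual.isClosed_setOf_norm_comp_le j a).preimage
        (f := fun g : Set.Icc (0:ℝ) T → WeakDual ℝ X => g t) (continuous_apply t)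
    · simp only [← ContinuousLinearMap.sub_comp, ← map_sub]
      exact (WeakDual.isClosed_setOf_norm_comp_le j _).preimage
          (f := fun g : Set.Icc (0:ℝ) T → WeakDual ℝ X => g t - g s)
          ((continuous_apply t).sub (continuous_apply s))
  refine (isCompact_univ_pi fun _ => WeakDual.isCompact_closedBall 0 M).of_isClosed_subset
    hclosed fun g hg t _ => ?_
  rw [Set.mem_preimage, mem_closedBall_zero_iff]
  exact ContinuousLinearMap.opNorm_le_bound _ hM (hg.1 t)

theorem equicontinuous_eval_holderBallFun (hj : DenseRange j) (hα : 0 < α) (φ : X) :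
    Equicontinuous fun (g : holderBallFun j T M α a) t => g.1 t φ := by
  refine equicontinuous_apply_of_dense (g := fun (g : holderBallFun j T M α a) t => g.1 t)
    (fun g t => g.2.1 t) hj ?_ φ
  rintro _ ⟨y, rfl⟩
  refine (uniformEquicontinuous_of_dist_le_mul_rpow (C := a * ‖y‖) hα
    fun g s t => ?_).equicontinuous
  calc dist (g.1 s (j y)) (g.1 t (j y))
      = ‖((WeakDual.toStrongDual (g.1 s)).comp j - (WeakDual.toStrongDual (g.1 t)).comp j) y‖ :=
      Real.dist_eq _ _
    _ ≤ a * |(s : ℝ) - t| ^ α * ‖y‖ := ContinuousLinearMap.le_of_opNorm_le _ (g.2.2.2 t s) y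
    _ = a * ‖y‖ * dist s t ^ α := by rw [Subtype.dist_eq, Real.dist_eq]; ring

end HolderBall

theorem isCompact_holder_ball_paths_general
    {X Y : Type*} [NormedAddCommGroup X] [NormedSpace ℝ X]
    [NormedAddCommGroup Y] [NormedSpace ℝ Y]
    (j : Y →L[ℝ] X) (hj_dense : DenseRange j)
    (T : ℝ) (M : ℝ) (hM : 0 ≤ M) (α : ℝ) (hα : 0 < α) (a : ℝ) :
    IsCompact
      { z : C(Set.Icc (0:ℝ) T, WeakDual ℝ X) |
        (∀ t (φ : X), |z t φ| ≤ M * ‖φ‖) ∧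
        (∀ t, ‖(WeakDual.toStrongDual (z t)).comp j‖ ≤ a) ∧
        (∀ s t : Set.Icc (0:ℝ) T,
          ‖(WeakDual.toStrongDual (z t)).comp j - (WeakDual.toStrongDual (z s)).comp j‖
            ≤ a * |(t : ℝ) - (s : ℝ)| ^ α) } := by
  -- Pointwise-convergence uniformity on `X*`; its topology is the weak-* one by definition.
  let : UniformSpace (WeakDual ℝ X) := .comap (fun f : WeakDual ℝ X => (f : X → ℝ)) inferInstance
  have hequi : Equicontinuous (Subtype.val : holderBallFun j T M α a → _) :=
    (IsUniformInducing.equicontinuous_iff ⟨rfl⟩).2 <| equicontinuous_pi_iff.2 <|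
      equicontinuous_eval_holderBallFun hj_dense hα
  exact ArzelaAscoli.isCompact_preimage_coe (isCompact_holderBallFun (j := j) hM) hequi

/-- **Stochastic Aubin–Lions type compactness lemma.**
Let `X, Y` be separable Banach spaces with `Y` continuously and densely embedded in `X`
(via `j : Y →L X`, injective with dense range). For `M ≥ 0`, `α > 0`, `a ≥ 0`,
the set of continuous paths `z : [0,T] → (X*, w*)` taking values in the closed ball of
radius `M` whose induced `Y*`-valued path is bounded by `a` and `α`-Hölder with constant
`a` is compact in `C([0,T]; (B_M^{X*}, w*))`, i.e. compact for the topology of uniform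
weak-* convergence on `C([0,T]; (X*, w*))`. -/
theorem isCompact_holder_ball_paths
    {X Y : Type*} [NormedAddCommGroup X] [NormedSpace ℝ X]
    [NormedAddCommGroup Y] [NormedSpace ℝ Y]
    [TopologicalSpace.SeparableSpace X] [TopologicalSpace.SeparableSpace Y]
    (j : Y →L[ℝ] X) (hj_inj : Function.Injective j) (hj_dense : DenseRange j)
    (T : ℝ) (hT : 0 < T) (M : ℝ) (hM : 0 ≤ M) (α : ℝ) (hα : 0 < α) (a : ℝ) (ha : 0 ≤ a) :
    IsCompact
      { z : C(Set.Icc (0:ℝ) T, WeakDual ℝ X) |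
        (∀ t (φ : X), |z t φ| ≤ M * ‖φ‖) ∧
        (∀ t, ‖(WeakDual.toStrongDual (z t)).comp j‖ ≤ a) ∧
        (∀ s t : Set.Icc (0:ℝ) T,
          ‖(WeakDual.toStrongDual (z t)).comp j - (WeakDual.toStrongDual (z s)).comp j‖
            ≤ a * |(t : ℝ) - (s : ℝ)| ^ α) } :=
  isCompact_holder_ball_paths_general j hj_dense T M hM α hα a
end

section
/- Let K : T² → ℝ² be an odd kernel with |K(z)| ≤ C|z|^{-1} near 0, smooth away from 0, and let ξ ∈ L^p(T²) with p > 2, u = K * ξ. Then for every smooth φ, ∫_{T²} ξ(x) u(x)·∇φ(x) dx = (1/2) ∫∫_{T²×T²} ξ(x) ξ(y) K(x−y)·(∇φ(x) − ∇φ(y)) dx dy (the symmetrization identity for the nonlinear term). -/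
open MeasureTheory

noncomputable section

/-- The Euclidean inner product on `ℝ²`. -/
def dot2 (a b : ℝ × ℝ) : ℝ := a.1 * b.1 + a.2 * b.2

/-- The gradient of a scalar function on `ℝ²`. -/
def gradVec (g : ℝ × ℝ → ℝ) (x : ℝ × ℝ) : ℝ × ℝ :=
  (fderiv ℝ g x (1, 0), fderiv ℝ g x (0, 1))

open Set ENNReal

instance : (volume : Measure Torus2).IsAddRightInvariant := by
  rw [Measure.volume_eq_prod]; infer_instance
instance : (volume : Measure Torus2).IsAddLeftInvariant := by
  rw [Measure.volume_eq_prod]; infer_instance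

instance : BorelSpace (Torus2 × Torus2) := Prod.borelSpace

lemma torusProj_oqm : IsOpenQuotientMap torusProj :=
  QuotientAddGroup.isOpenQuotientMap_mk.prodMap QuotientAddGroup.isOpenQuotientMap_mk

lemma oneD_int : IntegrableOn (fun t : ℝ => |t| ^ (-(1/2) : ℝ)) (Ioc (-Real.pi) Real.pi) := by
  have h0 : IntervalIntegrable (fun t : ℝ => |t| ^ (-(1/2) : ℝ)) volume 0 Real.pi := by
    have h := intervalIntegral.intervalIntegrable_rpow' (a := 0) (b := Real.pi) (r := -(1/2)) (by norm_num)
    rw [intervalIntegrable_iff] at h ⊢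
    refine h.congr_fun (fun t ht => ?_) measurableSet_uIoc
    rw [Set.uIoc_of_le Real.pi_pos.le] at ht
    rw [abs_of_pos ht.1]
  have hneg : IntervalIntegrable (fun t : ℝ => |t| ^ (-(1/2) : ℝ)) volume (-Real.pi) 0 := by
    rw [IntervalIntegrable.iff_comp_neg]
    simpa [abs_neg] using h0.symm
  have := hneg.trans h0
  rwa [intervalIntegrable_iff_integrableOn_Ioc_of_le (by linarith [Real.pi_pos])] at this

lemma K_integrable (K : Torus2 → ℝ × ℝ) (C : ℝ) (hK_meas : Measurable K)
    (hK_smooth : ContDiffOn ℝ (⊤ : ℕ∞) (fun x : ℝ × ℝ => K (torusProj x))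
      {x : ℝ × ℝ | torusProj x ≠ (0 : Torus2)})
    (hK_bound : ∃ δ > (0:ℝ), ∀ z : Torus2, z ≠ 0 → ‖z‖ < δ → ‖K z‖ ≤ C / ‖z‖) :
    Integrable K (volume : Measure Torus2) := by
  obtain ⟨δ, hδ, hKb⟩ := hK_bound
  -- continuity of K away from 0
  have hopen : IsOpen {x : ℝ × ℝ | torusProj x ≠ (0 : Torus2)} := by
    have : {x : ℝ × ℝ | torusProj x ≠ (0 : Torus2)} = torusProj ⁻¹' ({0}ᶜ) := rfl
    rw [this]
    exact (isOpen_compl_singleton).preimage torusProj_oqm.continuous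
  have hKc : ContinuousOn K {z : Torus2 | z ≠ 0} := by
    intro z hz
    obtain ⟨x, hx⟩ := torusProj_oqm.surjective z
    refine ContinuousAt.continuousWithinAt ?_
    rw [← hx]
    refine (torusProj_oqm.continuousAt_comp_iff).mp ?_
    have hxmem : x ∈ {x : ℝ × ℝ | torusProj x ≠ (0 : Torus2)} := by
      simp only [Set.mem_setOf_eq, hx]; exact hz
    exact (hK_smooth.continuousOn.continuousAt (hopen.mem_nhds hxmem))
  -- bound away from 0
  have hScomp : IsCompact {z : Torus2 | δ ≤ ‖z‖} :=
    (isClosed_le continuous_const continuous_norm).isCompact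
  obtain ⟨B, hB⟩ := hScomp.exists_bound_of_continuousOn
    (hKc.mono (fun z hz => by
      simp only [Set.mem_setOf_eq] at hz ⊢
      intro h; rw [h] at hz; simp at hz; linarith))
  -- global pointwise bound
  have hptwise : ∀ z : Torus2, z ≠ 0 → ‖K z‖ ≤ |B| + |C| / ‖z‖ := by
    intro z hz
    have hz0 : 0 < ‖z‖ := norm_pos_iff.mpr hz
    by_cases h : ‖z‖ < δ
    · calc ‖K z‖ ≤ C / ‖z‖ := hKb z hz h
        _ ≤ |C| / ‖z‖ := (div_le_div_iff_of_pos_right hz0).mpr (le_abs_self C)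
        _ ≤ |B| + |C| / ‖z‖ := le_add_of_nonneg_left (abs_nonneg B)
    · calc ‖K z‖ ≤ B := hB z (by simpa using not_lt.mp h)
        _ ≤ |B| := le_abs_self B
        _ ≤ |B| + |C| / ‖z‖ := le_add_of_nonneg_right (by positivity)
  -- measure-preserving reduction to the square
  set J : Set ℝ := Ioc (-Real.pi) Real.pi with hJ
  have m1 : MeasurePreserving ((↑) : ℝ → AddCircle (2*Real.pi))
      (volume.restrict J) volume := by
    have := AddCircle.measurePreserving_mk (2*Real.pi) (-Real.pi)
    rwa [show -Real.pi + 2*Real.pi = Real.pi by ring] at this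
  have mp : MeasurePreserving torusProj
      ((volume.restrict J).prod (volume.restrict J)) (volume : Measure Torus2) := by
    rw [Measure.volume_eq_prod]
    exact m1.prod m1
  rw [← mp.integrable_comp hK_meas.aestronglyMeasurable]
  have hprodJ : (volume.restrict J).prod (volume.restrict J)
      = (volume : Measure (ℝ × ℝ)).restrict (J ×ˢ J) := by
    rw [Measure.volume_eq_prod, Measure.prod_restrict]
  rw [hprodJ]
  -- the dominating function
  have hFint : IntegrableOn (fun x : ℝ × ℝ =>
      |B| + |C| * (|x.1| ^ (-(1/2):ℝ) * |x.2| ^ (-(1/2):ℝ))) (J ×ˢ J) := by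
    have hfin : volume (J ×ˢ J) < ⊤ := by
      rw [Measure.volume_eq_prod, Measure.prod_prod, hJ, Real.volume_Ioc]
      exact ENNReal.mul_lt_top (ENNReal.ofReal_lt_top) (ENNReal.ofReal_lt_top)
    have hconst : IntegrableOn (fun _ : ℝ × ℝ => |B|) (J ×ˢ J) :=
      integrableOn_const hfin.ne
    refine hconst.add ?_
    have hw : Integrable (fun x : ℝ × ℝ => |x.1| ^ (-(1/2):ℝ) * |x.2| ^ (-(1/2):ℝ))
        ((volume.restrict J).prod (volume.restrict J)) := oneD_int.mul_prod oneD_int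
    rw [hprodJ] at hw
    exact hw.const_mul |C|
  -- a.e. bound
  refine hFint.mono' ((hK_meas.comp torusProj_oqm.continuous.measurable).aestronglyMeasurable) ?_
  have hnull1 : (volume : Measure (ℝ × ℝ)) {x : ℝ × ℝ | x.1 = 0} = 0 := by
    have : {x : ℝ × ℝ | x.1 = 0} = ({0} : Set ℝ) ×ˢ (univ : Set ℝ) := by
      ext x
      simp only [Set.mem_setOf_eq, Set.mem_prod, Set.mem_singleton_iff, Set.mem_univ, and_true]
    rw [this, Measure.volume_eq_prod, Measure.prod_prod]
    simp
  have hnull2 : (volume : Measure (ℝ × ℝ)) {x : ℝ × ℝ | x.2 = 0} = 0 := by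
    have : {x : ℝ × ℝ | x.2 = 0} = (univ : Set ℝ) ×ˢ ({0} : Set ℝ) := by
      ext x
      simp only [Set.mem_setOf_eq, Set.mem_prod, Set.mem_singleton_iff, Set.mem_univ, true_and]
    rw [this, Measure.volume_eq_prod, Measure.prod_prod]
    simp
  have hae1 : ∀ᵐ x : ℝ × ℝ ∂(volume.restrict (J ×ˢ J)), x.1 ≠ 0 :=
    ae_restrict_of_ae (by rwa [ae_iff, show {x : ℝ × ℝ | ¬ x.1 ≠ 0} = {x | x.1 = 0} by ext x; simp])
  have hae2 : ∀ᵐ x : ℝ × ℝ ∂(volume.restrict (J ×ˢ J)), x.2 ≠ 0 :=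
    ae_restrict_of_ae (by rwa [ae_iff, show {x : ℝ × ℝ | ¬ x.2 ≠ 0} = {x | x.2 = 0} by ext x; simp])
  have haemem : ∀ᵐ x : ℝ × ℝ ∂(volume.restrict (J ×ˢ J)), x ∈ J ×ˢ J :=
    ae_restrict_mem (measurableSet_Ioc.prod measurableSet_Ioc)
  filter_upwards [hae1, hae2, haemem] with x hx1 hx2 hxm
  obtain ⟨hm1, hm2⟩ := hxm
  have habs1 : |x.1| ≤ Real.pi := abs_le.mpr ⟨hm1.1.le, hm1.2⟩
  have habs2 : |x.2| ≤ Real.pi := abs_le.mpr ⟨hm2.1.le, hm2.2⟩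
  -- norms on the circle
  have hn1 : ‖((x.1 : ℝ) : AddCircle (2*Real.pi))‖ = |x.1| :=
    (AddCircle.norm_coe_eq_abs_iff (2*Real.pi) (by positivity)).mpr
      (by rw [abs_of_pos (by positivity : (0:ℝ) < 2*Real.pi)]; linarith)
  have hn2 : ‖((x.2 : ℝ) : AddCircle (2*Real.pi))‖ = |x.2| :=
    (AddCircle.norm_coe_eq_abs_iff (2*Real.pi) (by positivity)).mpr
      (by rw [abs_of_pos (by positivity : (0:ℝ) < 2*Real.pi)]; linarith)
  have hnz : ‖torusProj x‖ = max |x.1| |x.2| := by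
    rw [Prod.norm_def]; exact congrArg₂ max hn1 hn2
  have habs1pos : 0 < |x.1| := abs_pos.mpr hx1
  have habs2pos : 0 < |x.2| := abs_pos.mpr hx2
  have hz_ne : torusProj x ≠ 0 := by
    intro h
    have h1 : ((x.1 : ℝ) : AddCircle (2*Real.pi)) = 0 := congrArg Prod.fst h
    rw [← norm_eq_zero] at h1
    rw [hn1] at h1
    exact hx1 (abs_eq_zero.mp h1)
  have hKle := hptwise (torusProj x) hz_ne
  have hmaxpos : 0 < max |x.1| |x.2| := lt_max_of_lt_left habs1pos
  have key : |C| / ‖torusProj x‖ ≤ |C| * (|x.1| ^ (-(1/2):ℝ) * |x.2| ^ (-(1/2):ℝ)) := by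
    rw [hnz]
    have hsq : Real.sqrt (|x.1| * |x.2|) ≤ max |x.1| |x.2| := by
      rw [show max |x.1| |x.2| = Real.sqrt ((max |x.1| |x.2|)^2) by
        rw [Real.sqrt_sq hmaxpos.le]]
      apply Real.sqrt_le_sqrt
      calc |x.1| * |x.2| ≤ (max |x.1| |x.2|) * (max |x.1| |x.2|) :=
            mul_le_mul (le_max_left _ _) (le_max_right _ _) habs2pos.le hmaxpos.le
        _ = (max |x.1| |x.2|)^2 := (sq _).symm
    have hsqpos : 0 < Real.sqrt (|x.1| * |x.2|) :=
      Real.sqrt_pos.mpr (by positivity)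
    have h1 : (1:ℝ) / max |x.1| |x.2| ≤ 1 / Real.sqrt (|x.1| * |x.2|) :=
      one_div_le_one_div_of_le hsqpos hsq
    have hrw : |x.1| ^ (-(1/2):ℝ) * |x.2| ^ (-(1/2):ℝ) = 1 / Real.sqrt (|x.1| * |x.2|) := by
      rw [Real.sqrt_eq_rpow, ← Real.mul_rpow habs1pos.le habs2pos.le,
        Real.rpow_neg (by positivity)]
      exact (one_div _).symm
    rw [hrw]
    calc |C| / max |x.1| |x.2| = |C| * (1 / max |x.1| |x.2|) := by ring
      _ ≤ |C| * (1 / Real.sqrt (|x.1| * |x.2|)) := by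
          exact mul_le_mul_of_nonneg_left h1 (abs_nonneg C)
  calc ‖K (torusProj x)‖ ≤ |B| + |C| / ‖torusProj x‖ := hKle
    _ ≤ |B| + |C| * (|x.1| ^ (-(1/2):ℝ) * |x.2| ^ (-(1/2):ℝ)) := by linarith [key]

lemma continuous_dot2 : Continuous (fun vw : (ℝ × ℝ) × (ℝ × ℝ) => dot2 vw.1 vw.2) := by
  unfold dot2; fun_prop

lemma dot2_bound (a b : ℝ × ℝ) : |dot2 a b| ≤ 2 * ‖a‖ * ‖b‖ := by
  have h1 : |a.1| ≤ ‖a‖ := norm_fst_le a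
  have h2 : |a.2| ≤ ‖a‖ := norm_snd_le a
  have h3 : |b.1| ≤ ‖b‖ := norm_fst_le b
  have h4 : |b.2| ≤ ‖b‖ := norm_snd_le b
  have := abs_nonneg a.1
  calc |dot2 a b| ≤ |a.1 * b.1| + |a.2 * b.2| := abs_add_le _ _
    _ = |a.1| * |b.1| + |a.2| * |b.2| := by rw [abs_mul, abs_mul]
    _ ≤ ‖a‖ * ‖b‖ + ‖a‖ * ‖b‖ :=
        add_le_add (mul_le_mul h1 h3 (abs_nonneg _) (norm_nonneg _))
          (mul_le_mul h2 h4 (abs_nonneg _) (norm_nonneg _))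
    _ = 2 * ‖a‖ * ‖b‖ := by ring

/-- **The symmetrization identity for the nonlinear term (Schochet's trick).**
Let `K : T² → ℝ²` be odd, smooth away from `0` and bounded by `C|z|⁻¹` near `0`,
`ξ ∈ L^p(T²)` with `p > 2` and `u = K * ξ`. Then for every smooth `φ` on `T²`
(given by its smooth periodic lift `g` with torus gradient `G = ∇φ`),
`∫ ξ (u·∇φ) = ½ ∫∫ ξ(x)ξ(y) K(x−y)·(∇φ(x) − ∇φ(y)) dx dy`. -/
theorem symmetrization_identity
    (K : Torus2 → ℝ × ℝ) (C : ℝ) (hK_meas : Measurable K)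
    (hK_smooth : ContDiffOn ℝ (⊤ : ℕ∞) (fun x : ℝ × ℝ => K (torusProj x))
      {x : ℝ × ℝ | torusProj x ≠ (0 : Torus2)})
    (hK_odd : ∀ z : Torus2, K (-z) = -K z)
    (hK_bound : ∃ δ > (0:ℝ), ∀ z : Torus2, z ≠ 0 → ‖z‖ < δ → ‖K z‖ ≤ C / ‖z‖)
    (p : ℝ) (hp : 2 < p)
    (ξ : Torus2 → ℝ) (hξ : MemLp ξ (ENNReal.ofReal p) (volume : Measure Torus2))
    (u : Torus2 → ℝ × ℝ) (hu : ∀ x : Torus2, u x = ∫ y : Torus2, ξ y • K (x - y))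
    (φ : Torus2 → ℝ) (g : ℝ × ℝ → ℝ) (G : Torus2 → ℝ × ℝ)
    (hg : ∀ x : ℝ × ℝ, g x = φ (torusProj x)) (hg_smooth : ContDiff ℝ (⊤ : ℕ∞) g)
    (hG : ∀ x : ℝ × ℝ, G (torusProj x) = gradVec g x) :
    ∫ x : Torus2, ξ x * dot2 (u x) (G x)
      = (1 / 2) * ∫ q : Torus2 × Torus2,
          ξ q.1 * ξ q.2 * dot2 (K (q.1 - q.2)) (G q.1 - G q.2) := by
  set ν := (volume : Measure Torus2) with hν
  -- continuity and boundedness of G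
  have hG_cont : Continuous G := by
    have hf := hg_smooth.continuous_fderiv (by simp)
    have h1 : Continuous (gradVec g) :=
      (hf.clm_apply continuous_const).prodMk (hf.clm_apply continuous_const)
    have h2 : G ∘ torusProj = gradVec g := funext hG
    exact torusProj_oqm.continuous_comp_iff.mp (h2 ▸ h1)
  obtain ⟨M, hM⟩ : ∃ M, ∀ z : Torus2, ‖G z‖ ≤ M := by
    obtain ⟨M, hM⟩ := isCompact_univ.exists_bound_of_continuousOn hG_cont.continuousOn
    exact ⟨M, fun z => hM z (Set.mem_univ z)⟩
  have hM0 : 0 ≤ M := le_trans (norm_nonneg _) (hM 0)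
  have hKint : Integrable K ν := K_integrable K C hK_meas hK_smooth hK_bound
  have hp1 : (1:ℝ≥0∞) ≤ ENNReal.ofReal p := by
    rw [← ENNReal.ofReal_one]; exact ENNReal.ofReal_le_ofReal (by linarith)
  have hξ1 : Integrable ξ ν := hξ.integrable hp1
  have hξ2 : MemLp ξ 2 ν := by
    refine hξ.mono_exponent ?_
    rw [show (2:ℝ≥0∞) = ENNReal.ofReal 2 by simp [ENNReal.ofReal_ofNat]]
    exact ENNReal.ofReal_le_ofReal hp.le
  have hξsq : Integrable (fun z => ξ z * ξ z) ν := by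
    have := (memLp_two_iff_integrable_sq hξ.aestronglyMeasurable).mp hξ2
    simpa [sq] using this
  -- measurability helpers on the product
  have hKsub_aesm : AEStronglyMeasurable (fun q : Torus2 × Torus2 => K (q.1 - q.2)) (ν.prod ν) :=
    (hK_meas.comp (measurable_fst.sub measurable_snd)).aestronglyMeasurable
  have hξ_fst : AEStronglyMeasurable (fun q : Torus2 × Torus2 => ξ q.1) (ν.prod ν) :=
    hξ.aestronglyMeasurable.comp_fst
  have hξ_snd : AEStronglyMeasurable (fun q : Torus2 × Torus2 => ξ q.2) (ν.prod ν) :=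
    hξ.aestronglyMeasurable.comp_snd
  -- integrability of the dominating function Φ
  have hΦ2 : Integrable (fun q : Torus2 × Torus2 => ξ q.2 * ξ q.2 * ‖K (q.1 - q.2)‖)
      (ν.prod ν) := by
    have := hξsq.convolution_integrand (ContinuousLinearMap.mul ℝ ℝ) hKint.norm
    exact this
  have hΦ1 : Integrable (fun q : Torus2 × Torus2 => ξ q.1 * ξ q.1 * ‖K (q.1 - q.2)‖)
      (ν.prod ν) := by
    have hs := hΦ2.swap
    refine hs.congr (Filter.Eventually.of_forall fun q => ?_)
    show ξ q.1 * ξ q.1 * ‖K (q.2 - q.1)‖ = _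
    rw [show q.2 - q.1 = -(q.1 - q.2) by abel, hK_odd, norm_neg]
  have hΦ : Integrable (fun q : Torus2 × Torus2 => |ξ q.1| * |ξ q.2| * ‖K (q.1 - q.2)‖)
      (ν.prod ν) := by
    have habs1 : AEStronglyMeasurable (fun q : Torus2 × Torus2 => |ξ q.1|) (ν.prod ν) := by
      have := hξ_fst.norm; simpa [Real.norm_eq_abs] using this
    have habs2 : AEStronglyMeasurable (fun q : Torus2 × Torus2 => |ξ q.2|) (ν.prod ν) := by
      have := hξ_snd.norm; simpa [Real.norm_eq_abs] using this
    refine (((hΦ1.add hΦ2).const_mul (1/2 : ℝ))).mono'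
      ((habs1.mul habs2).mul hKsub_aesm.norm) ?_
    filter_upwards with q
    rw [Real.norm_eq_abs]
    have h1 : (0:ℝ) ≤ ‖K (q.1 - q.2)‖ := norm_nonneg _
    have h2 : |ξ q.1| * |ξ q.2| ≤ 1/2 * (ξ q.1 * ξ q.1 + ξ q.2 * ξ q.2) := by
      nlinarith [sq_nonneg (|ξ q.1| - |ξ q.2|), sq_abs (ξ q.1), sq_abs (ξ q.2)]
    have h3 : (0:ℝ) ≤ |ξ q.1| * |ξ q.2| := by positivity
    rw [abs_of_nonneg (by positivity)]
    calc |ξ q.1| * |ξ q.2| * ‖K (q.1 - q.2)‖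
        ≤ (1/2 * (ξ q.1 * ξ q.1 + ξ q.2 * ξ q.2)) * ‖K (q.1 - q.2)‖ := by gcongr
      _ = 1/2 * (ξ q.1 * ξ q.1 * ‖K (q.1 - q.2)‖ + ξ q.2 * ξ q.2 * ‖K (q.1 - q.2)‖) := by ring
  -- the two halves of the symmetrized integrand
  set Bf : Torus2 × Torus2 → ℝ :=
    fun q => ξ q.1 * ξ q.2 * dot2 (K (q.1 - q.2)) (G q.1) with hBf
  set Bf' : Torus2 × Torus2 → ℝ :=
    fun q => ξ q.1 * ξ q.2 * dot2 (K (q.1 - q.2)) (G q.2) with hBf'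
  have hbound : ∀ (q : Torus2 × Torus2) (v : ℝ × ℝ), ‖v‖ ≤ M →
      |ξ q.1 * ξ q.2 * dot2 (K (q.1 - q.2)) v|
        ≤ 2 * M * (|ξ q.1| * |ξ q.2| * ‖K (q.1 - q.2)‖) := by
    intro q v hv
    rw [abs_mul, abs_mul]
    calc |ξ q.1| * |ξ q.2| * |dot2 (K (q.1 - q.2)) v|
        ≤ |ξ q.1| * |ξ q.2| * (2 * ‖K (q.1 - q.2)‖ * M) := by
          refine mul_le_mul_of_nonneg_left ?_ (by positivity)
          calc |dot2 (K (q.1 - q.2)) v| ≤ 2 * ‖K (q.1 - q.2)‖ * ‖v‖ := dot2_bound _ _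
            _ ≤ 2 * ‖K (q.1 - q.2)‖ * M := by gcongr
      _ = 2 * M * (|ξ q.1| * |ξ q.2| * ‖K (q.1 - q.2)‖) := by ring
  have hBf_aesm : AEStronglyMeasurable Bf (ν.prod ν) :=
    (hξ_fst.mul hξ_snd).mul (continuous_dot2.comp_aestronglyMeasurable
      (hKsub_aesm.prodMk ((hG_cont.comp continuous_fst).aestronglyMeasurable)))
  have hBf'_aesm : AEStronglyMeasurable Bf' (ν.prod ν) :=
    (hξ_fst.mul hξ_snd).mul (continuous_dot2.comp_aestronglyMeasurable
      (hKsub_aesm.prodMk ((hG_cont.comp continuous_snd).aestronglyMeasurable)))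
  have hBf_int : Integrable Bf (ν.prod ν) := by
    refine (hΦ.const_mul (2*M)).mono' hBf_aesm ?_
    filter_upwards with q
    rw [Real.norm_eq_abs]
    exact hbound q (G q.1) (hM _)
  have hBf'_int : Integrable Bf' (ν.prod ν) := by
    refine (hΦ.const_mul (2*M)).mono' hBf'_aesm ?_
    filter_upwards with q
    rw [Real.norm_eq_abs]
    exact hbound q (G q.2) (hM _)
  -- rewrite the RHS integrand as a difference
  have hRHSsplit : ∫ q : Torus2 × Torus2,
      ξ q.1 * ξ q.2 * dot2 (K (q.1 - q.2)) (G q.1 - G q.2) ∂(ν.prod ν)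
      = (∫ q, Bf q ∂(ν.prod ν)) - ∫ q, Bf' q ∂(ν.prod ν) := by
    rw [← integral_sub hBf_int hBf'_int]
    refine integral_congr_ae (Filter.Eventually.of_forall fun q => ?_)
    show ξ q.1 * ξ q.2 * dot2 (K (q.1 - q.2)) (G q.1 - G q.2) = Bf q - Bf' q
    simp only [hBf, hBf', dot2, Prod.fst_sub, Prod.snd_sub]
    ring
  have hswap : ∫ q, Bf' q ∂(ν.prod ν) = - ∫ q, Bf q ∂(ν.prod ν) := by
    calc ∫ q, Bf' q ∂(ν.prod ν) = ∫ q : Torus2 × Torus2, Bf' q.swap ∂(ν.prod ν) :=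
          (integral_prod_swap Bf').symm
      _ = ∫ q, (- Bf q) ∂(ν.prod ν) := by
          refine integral_congr_ae (Filter.Eventually.of_forall fun q => ?_)
          show Bf' (q.2, q.1) = - Bf q
          simp only [hBf, hBf']
          rw [show q.2 - q.1 = -(q.1 - q.2) by abel, hK_odd]
          simp only [dot2, Prod.fst_neg, Prod.snd_neg]
          ring
      _ = - ∫ q, Bf q ∂(ν.prod ν) := integral_neg _
  -- LHS via Fubini
  have hH : Integrable (fun q : Torus2 × Torus2 => ξ q.2 • K (q.1 - q.2)) (ν.prod ν) :=
    hξ1.convolution_integrand (ContinuousLinearMap.lsmul ℝ ℝ) hKint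
  have hLHSae : ∀ᵐ x ∂ν, ξ x * dot2 (u x) (G x)
      = ∫ y, ξ x * ξ y * dot2 (K (x - y)) (G x) ∂ν := by
    filter_upwards [hH.prod_right_ae] with x hx
    rw [hu x]
    have h1 : (∫ y, ξ y • K (x - y) ∂ν).1 = ∫ y, (ξ y • K (x - y)).1 ∂ν := by
      have := (ContinuousLinearMap.fst ℝ ℝ ℝ).integral_comp_comm hx
      simpa using this.symm
    have h2 : (∫ y, ξ y • K (x - y) ∂ν).2 = ∫ y, (ξ y • K (x - y)).2 ∂ν := by
      have := (ContinuousLinearMap.snd ℝ ℝ ℝ).integral_comp_comm hx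
      simpa using this.symm
    have hf1 : Integrable (fun y => (ξ y • K (x - y)).1) ν := by
      have := (ContinuousLinearMap.fst ℝ ℝ ℝ).integrable_comp hx
      simpa using this
    have hf2 : Integrable (fun y => (ξ y • K (x - y)).2) ν := by
      have := (ContinuousLinearMap.snd ℝ ℝ ℝ).integrable_comp hx
      simpa using this
    rw [show dot2 (∫ y, ξ y • K (x - y) ∂ν) (G x)
        = (∫ y, (ξ y • K (x - y)).1 ∂ν) * (G x).1
          + (∫ y, (ξ y • K (x - y)).2 ∂ν) * (G x).2 by rw [dot2, h1, h2]]
    rw [← integral_mul_const, ← integral_mul_const,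
      ← integral_add (hf1.mul_const _) (hf2.mul_const _), ← integral_const_mul]
    refine integral_congr_ae (Filter.Eventually.of_forall fun y => ?_)
    show ξ x * ((ξ y • K (x - y)).1 * (G x).1 + (ξ y • K (x - y)).2 * (G x).2)
        = ξ x * ξ y * dot2 (K (x - y)) (G x)
    simp only [Prod.smul_fst, Prod.smul_snd, smul_eq_mul, dot2]
    ring
  have hfub : ∫ x, (∫ y, ξ x * ξ y * dot2 (K (x - y)) (G x) ∂ν) ∂ν
      = ∫ q, Bf q ∂(ν.prod ν) :=
    MeasureTheory.integral_integral (f := fun x y => ξ x * ξ y * dot2 (K (x - y)) (G x)) hBf_int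
  rw [show (volume : Measure (Torus2 × Torus2)) = ν.prod ν from Measure.volume_eq_prod _ _]
  rw [integral_congr_ae hLHSae, hfub, hRHSsplit, hswap]
  ring

end
end

section
/- Fix M > 0 and a bounded function F : T² × T² → ℝ which is continuous outside the diagonal. The map μ ↦ ∫∫ F(x,y) μ(dx) μ(dy) is continuous on the set of non-negative, non-atomic Borel measures on T² with total mass at most M, endowed with the weak-* topology. -/
/-!
Since μ has no atoms, μ ⊗ μ gives the diagonal measure zero, so there is a continuous cutoff
`0 ≤ k ≤ 1` equal to 1 near the diagonal with `∫ k d(μ ⊗ μ)` small. Then `(1 - k) F` is bounded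
and continuous, and its double integral is continuous in ν because `ν ↦ ν ⊗ ν` is weakly
continuous (reduce to probability measures by normalizing). The error
`|∫ F - ∫ (1 - k) F| ≤ C ∫ k d(ν ⊗ ν)` is continuous in ν as well, hence stays small near μ.
-/

open MeasureTheory

noncomputable section

open Filter Topology Set TopologicalSpace
open scoped NNReal BoundedContinuousFunction

namespace MeasureTheory

namespace FiniteMeasure

variable {α β : Type*} [MeasurableSpace α] [MeasurableSpace β]

lemma smul_prod_smul (a b : ℝ≥0) (μ : FiniteMeasure α) (ν : FiniteMeasure β) :
    (a • μ).prod (b • ν) = (a * b) • μ.prod ν := by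
  apply Subtype.ext
  simp [Measure.prod_smul_left, Measure.prod_smul_right, mul_smul, smul_comm a b]

lemma prod_eq_mass_mul_smul_normalize_prod [Nonempty α] [Nonempty β] (μ : FiniteMeasure α)
    (ν : FiniteMeasure β) :
    μ.prod ν = (μ.mass * ν.mass) • (μ.normalize.prod ν.normalize).toFiniteMeasure := by
  conv_lhs => rw [μ.self_eq_mass_smul_normalize, ν.self_eq_mass_smul_normalize]
  rw [smul_prod_smul]
  rfl

theorem continuous_prod [TopologicalSpace α] [TopologicalSpace β] [SecondCountableTopology α]
    [SecondCountableTopology β] [PseudoMetrizableSpace α] [PseudoMetrizableSpace β]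
    [OpensMeasurableSpace α] [OpensMeasurableSpace β] :
    Continuous fun p : FiniteMeasure α × FiniteMeasure β ↦ p.1.prod p.2 := by
  refine continuous_iff_continuousAt.2 fun p ↦ ?_
  by_cases hp : p.1 = 0 ∨ p.2 = 0
  · have hp0 : p.1.prod p.2 = 0 := by rcases hp with h | h <;> simp [h]
    have hmass : ContinuousAt
        (fun q : FiniteMeasure α × FiniteMeasure β ↦ (q.1.prod q.2).mass) p := by
      simp only [mass_prod]; fun_prop
    rw [ContinuousAt, hp0]
    exact tendsto_zero_of_tendsto_zero_mass (by simpa [hp0] using hmass.tendsto)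
  · obtain ⟨hp₁, hp₂⟩ := not_or.1 hp
    have : NeZero (p.1 : Measure α) := ⟨fun h ↦ hp₁ (toMeasure_injective h)⟩
    have : NeZero (p.2 : Measure β) := ⟨fun h ↦ hp₂ (toMeasure_injective h)⟩
    have := Measure.nonempty_of_neZero (p.1 : Measure α)
    have := Measure.nonempty_of_neZero (p.2 : Measure β)
    have hnormalize : ContinuousAt (fun q : FiniteMeasure α × FiniteMeasure β ↦
        (q.1.normalize, q.2.normalize)) p :=
      (tendsto_normalize_of_tendsto continuousAt_fst hp₁).prodMk_nhds
        (tendsto_normalize_of_tendsto continuousAt_snd hp₂)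
    simp_rw [prod_eq_mass_mul_smul_normalize_prod]
    exact (by fun_prop : Continuous fun q : FiniteMeasure α × FiniteMeasure β ↦
      q.1.mass * q.2.mass).continuousAt.smul
        ((ProbabilityMeasure.toFiniteMeasure_continuous.comp
          ProbabilityMeasure.continuous_prod).continuousAt.comp hnormalize)

end FiniteMeasure

lemma Measure.prod_diagonal_eq_zero {α : Type*} [MeasurableSpace α] [MeasurableEq α]
    (μ ν : Measure α) [SFinite ν] [NullSingletonClass ν] : μ.prod ν (diagonal α) = 0 := by
  have hslice (x : α) : Prod.mk x ⁻¹' diagonal α = {x} := by ext; simp [eq_comm]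
  simp [Measure.prod_apply measurableSet_diagonal, hslice]

end MeasureTheory

section Cutoff

variable {Y : Type*} [TopologicalSpace Y]

lemma exists_cutoff_of_measure_eq_zero [NormalSpace Y] [MeasurableSpace Y]
    [OpensMeasurableSpace Y] (ρ : Measure Y) [IsFiniteMeasure ρ] [ρ.OuterRegular] {D : Set Y}
    (hD : IsClosed D) (hρD : ρ D = 0) {δ : ℝ} (hδ : 0 < δ) :
    ∃ k : Y →ᵇ ℝ, (∀ y, k y ∈ Icc (0 : ℝ) 1) ∧ (∀ᶠ y in 𝓝ˢ D, k y = 1) ∧ ∫ y, k y ∂ρ < δ := by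
  obtain ⟨U, hDU, hU, hρU⟩ :=
    D.exists_isOpen_lt_of_lt (ENNReal.ofReal δ) (by rw [hρD]; exact ENNReal.ofReal_pos.2 hδ)
  obtain ⟨W, hW, hDW, hWU⟩ := normal_exists_closure_subset hD hU hDU
  obtain ⟨k, hk0, hk1, hk01⟩ := exists_bounded_zero_one_of_closed hU.isClosed_compl
    isClosed_closure (disjoint_compl_left_iff_subset.2 hWU)
  refine ⟨k, hk01, ?_, ?_⟩
  · filter_upwards [hW.mem_nhdsSet.2 hDW] with y hy using hk1 (subset_closure hy)
  have hk_le : ∀ y, k y ≤ U.indicator 1 y := fun y ↦ by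
    by_cases hy : y ∈ U
    · simpa [hy] using (hk01 y).2
    · simp [hy, hk0 hy]
  calc ∫ y, k y ∂ρ ≤ ∫ y, U.indicator 1 y ∂ρ :=
        integral_mono (k.integrable ρ) ((integrable_const 1).indicator hU.measurableSet) hk_le
    _ = ρ.real U := integral_indicator_one hU.measurableSet
    _ < δ := ENNReal.toReal_lt_of_lt_ofReal hρU

lemma continuous_one_sub_mul_of_eventually_eq_one {D : Set Y} (hD : IsClosed D) {F : Y → ℝ}
    (hF : ContinuousOn F Dᶜ) {k : Y → ℝ} (hk : Continuous k) (hkD : ∀ᶠ y in 𝓝ˢ D, k y = 1) :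
    Continuous fun y ↦ (1 - k y) * F y := by
  refine continuous_iff_continuousAt.2 fun y ↦ ?_
  by_cases hy : y ∈ D
  · refine continuousAt_const.congr (f := fun _ ↦ (0 : ℝ)) ?_
    filter_upwards [hkD.filter_mono (nhds_le_nhdsSet hy)] with z hz
    simp [hz]
  · exact (continuous_const.sub hk).continuousAt.mul
      (hF.continuousAt (hD.isOpen_compl.mem_nhds hy))

lemma abs_integral_sub_integral_one_sub_mul_le [MeasurableSpace Y] [OpensMeasurableSpace Y]
    (ρ : Measure Y) [IsFiniteMeasure ρ] {F : Y → ℝ} (hF : Measurable F) {C : ℝ}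
    (hFC : ∀ y, |F y| ≤ C) (k : Y →ᵇ ℝ) (hk : ∀ y, k y ∈ Icc (0 : ℝ) 1) :
    |∫ y, F y ∂ρ - ∫ y, (1 - k y) * F y ∂ρ| ≤ C * ∫ y, k y ∂ρ := by
  have hF_int : Integrable F ρ :=
    .of_bound hF.aestronglyMeasurable C (.of_forall fun y ↦ by simpa using hFC y)
  have hkF_int : Integrable (fun y ↦ (1 - k y) * F y) ρ :=
    hF_int.bdd_mul (c := 1) (by fun_prop) (.of_forall fun y ↦ by
      simp only [Real.norm_eq_abs, abs_le]; constructor <;> linarith [(hk y).1, (hk y).2])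
  rw [← integral_sub hF_int hkF_int, ← integral_const_mul, ← Real.norm_eq_abs]
  refine norm_integral_le_of_norm_le ((k.integrable ρ).const_mul C) (.of_forall fun y ↦ ?_)
  calc ‖F y - (1 - k y) * F y‖ = k y * |F y| := by
        rw [show F y - (1 - k y) * F y = k y * F y by ring, norm_mul,
          Real.norm_of_nonneg (hk y).1, Real.norm_eq_abs]
    _ ≤ k y * C := mul_le_mul_of_nonneg_left (hFC y) (hk y).1
    _ = C * k y := mul_comm _ _

end Cutoff

section DoubleIntegral

variable {X : Type*} [TopologicalSpace X] [MeasurableSpace X] [SecondCountableTopology X]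

theorem continuous_integral_prod_self [PseudoMetrizableSpace X] [OpensMeasurableSpace X]
    (g : X × X →ᵇ ℝ) :
    Continuous fun ν : FiniteMeasure X ↦ ∫ p, g p ∂(ν : Measure X).prod ν :=
  (FiniteMeasure.continuous_integral_boundedContinuousFunction g).comp
    (FiniteMeasure.continuous_prod.comp (continuous_id.prodMk continuous_id))

theorem continuousAt_integral_prod_self_of_continuousOn_compl_diagonal [MetrizableSpace X]
    [BorelSpace X] {F : X × X → ℝ} (hF_meas : Measurable F) {C : ℝ} (hF_bdd : ∀ p, |F p| ≤ C)
    (hF_cont : ContinuousOn F (diagonal X)ᶜ) (μ : FiniteMeasure X)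
    [NullSingletonClass (μ : Measure X)] :
    ContinuousAt (fun ν : FiniteMeasure X ↦ ∫ p, F p ∂(ν : Measure X).prod ν) μ := by
  refine continuousAt_of_locally_uniform_approx_of_continuousAt fun u hu ↦ ?_
  obtain ⟨ε, hε, hεu⟩ := Metric.mem_uniformity_dist.1 hu
  obtain ⟨k, hk01, hk1, hkμ⟩ := exists_cutoff_of_measure_eq_zero ((μ : Measure X).prod μ)
    isClosed_diagonal (Measure.prod_diagonal_eq_zero _ _) (show 0 < ε / (|C| + 1) by positivity)
  let G : X × X →ᵇ ℝ := .ofNormedAddCommGroup (fun p ↦ (1 - k p) * F p)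
    (continuous_one_sub_mul_of_eventually_eq_one isClosed_diagonal hF_cont k.continuous hk1) C
    fun p ↦ by
      rw [Real.norm_eq_abs, abs_mul, abs_of_nonneg (by linarith [(hk01 p).2])]
      nlinarith [(hk01 p).1, hF_bdd p, abs_nonneg (F p)]
  have hμ_small : C * ∫ p, k p ∂(μ : Measure X).prod μ < ε := by
    have hk_nonneg : 0 ≤ ∫ p, k p ∂(μ : Measure X).prod μ := integral_nonneg fun p ↦ (hk01 p).1
    calc C * ∫ p, k p ∂(μ : Measure X).prod μ
        ≤ (|C| + 1) * ∫ p, k p ∂(μ : Measure X).prod μ := by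
          gcongr; linarith [le_abs_self C]
      _ < (|C| + 1) * (ε / (|C| + 1)) := by gcongr
      _ = ε := by field_simp
  refine ⟨_, (continuous_const.mul (continuous_integral_prod_self k)).continuousAt.eventually_lt
    continuousAt_const hμ_small, _, (continuous_integral_prod_self G).continuousAt,
    fun ν hν ↦ hεu ?_⟩
  rw [Real.dist_eq]
  exact (abs_integral_sub_integral_one_sub_mul_le _ hF_meas hF_bdd k hk01).trans_lt hν

end DoubleIntegral

theorem continuousOn_double_integral_nonatomic_general
    (M : ℝ)
    (F : Torus2 × Torus2 → ℝ) (hF_meas : Measurable F)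
    (hF_bdd : ∃ C, ∀ p, |F p| ≤ C)
    (hF_cont : ContinuousOn F {p : Torus2 × Torus2 | p.1 ≠ p.2}) :
    ContinuousOn
      (fun μ : FiniteMeasure Torus2 =>
        ∫ p, F p ∂((μ : Measure Torus2).prod (μ : Measure Torus2)))
      {μ : FiniteMeasure Torus2 |
        (μ : Measure Torus2) Set.univ ≤ ENNReal.ofReal M ∧
        ∀ x : Torus2, (μ : Measure Torus2) {x} = 0} := by
  rintro μ ⟨-, hμ⟩
  obtain ⟨C, hC⟩ := hF_bdd
  have : NullSingletonClass (μ : Measure Torus2) := ⟨hμ⟩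
  exact (continuousAt_integral_prod_self_of_continuousOn_compl_diagonal hF_meas hC hF_cont
    μ).continuousWithinAt

/-- **Continuity of the quadratic form `μ ↦ ∫∫ F dμ dμ` on non-negative non-atomic
measures of mass at most `M`**, for `F` bounded Borel on `T² × T²` and continuous outside
the diagonal; the space of finite measures carries the weak-* (weak convergence) topology. -/
theorem continuousOn_double_integral_nonatomic
    (M : ℝ) (hM : 0 < M)
    (F : Torus2 × Torus2 → ℝ) (hF_meas : Measurable F)
    (hF_bdd : ∃ C, ∀ p, |F p| ≤ C)
    (hF_cont : ContinuousOn F {p : Torus2 × Torus2 | p.1 ≠ p.2}) :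
    ContinuousOn
      (fun μ : FiniteMeasure Torus2 =>
        ∫ p, F p ∂((μ : Measure Torus2).prod (μ : Measure Torus2)))
      {μ : FiniteMeasure Torus2 |
        (μ : Measure Torus2) Set.univ ≤ ENNReal.ofReal M ∧
        ∀ x : Torus2, (μ : Measure Torus2) {x} = 0} :=
  continuousOn_double_integral_nonatomic_general M F hF_meas hF_bdd hF_cont

end
end

section
/- Let K : T² → ℝ² be bounded by C|z|^{-1} near 0 and smooth away from 0 and odd, and for a finite signed Borel measure ξ on T² define ⟨N(ξ), φ⟩ = ∫∫ F_φ(x,y) ξ(dx) ξ(dy), with F_φ(x,y) = (1/2)K(x−y)·(∇φ(x) − ∇φ(y)) 1_{x≠y}. Then N(ξ) ∈ H^{-4}(T²) with ‖N(ξ)‖_{H^{-4}} ≤ C ‖ξ‖²_{TV}, and N(ξ + α·Leb) = N(ξ) for every real constant α, provided K is divergence-free so that ∫ F_φ(x,y) dx = 0 for every y and ∫ F_φ(x,y) dy = 0 for every x. -/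
open MeasureTheory

noncomputable section

/-- The `H⁴` norm of a function on the torus, computed on its periodic lift over a
fundamental domain. -/
def H4norm (g : ℝ × ℝ → ℝ) : ℝ :=
  Real.sqrt (∫ x in (Set.Icc (0:ℝ) (2 * Real.pi) ×ˢ Set.Icc (0:ℝ) (2 * Real.pi)),
    ∑ j ∈ Finset.range 5, ‖iteratedFDeriv ℝ j g x‖ ^ 2)

/-- The function `F_φ(x,y) = ½ K(x−y)·(∇φ(x) − ∇φ(y)) 1_{x ≠ y}`, where `G = ∇φ`. -/
def Fphi (K : Torus2 → ℝ × ℝ) (G : Torus2 → ℝ × ℝ) (p : Torus2 × Torus2) : ℝ :=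
  if p.1 = p.2 then 0 else (1 / 2) * dot2 (K (p.1 - p.2)) (G p.1 - G p.2)

/-- The product `μ ⊗ ν` of two finite signed measures, via Jordan decompositions. -/
def signedProd {X : Type*} [MeasurableSpace X] (μ ν : SignedMeasure X) :
    SignedMeasure (X × X) :=
  ((μ.toJordanDecomposition.posPart.prod ν.toJordanDecomposition.posPart
      + μ.toJordanDecomposition.negPart.prod ν.toJordanDecomposition.negPart).toSignedMeasure)
  - ((μ.toJordanDecomposition.posPart.prod ν.toJordanDecomposition.negPart
      + μ.toJordanDecomposition.negPart.prod ν.toJordanDecomposition.posPart).toSignedMeasure)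

/-- Lebesgue (Haar) measure on the torus as a signed measure. -/
def torusLeb : SignedMeasure Torus2 := (volume : Measure Torus2).toSignedMeasure

-- Part 1: 1D Sobolev-type sup bound for periodic functions
lemma oneD_bound {u u' : ℝ → ℝ} (hu : Continuous u) (hu' : Continuous u')
    (hd : ∀ t, HasDerivAt u (u' t) t) (hper : Function.Periodic u (2 * Real.pi)) (x : ℝ) :
    |u x| ≤ (1 / (2 * Real.pi)) * (∫ t in (0:ℝ)..(2 * Real.pi), |u t|)
      + ∫ t in (0:ℝ)..(2 * Real.pi), |u' t| := by
  have hT : (0:ℝ) < 2 * Real.pi := by positivity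
  set T : ℝ := 2 * Real.pi with hTdef
  -- a point of minimum of |u| on [x - T, x]
  have hxm : x - T ≤ x := by linarith
  obtain ⟨t₀, ht₀mem, ht₀min⟩ := (isCompact_Icc (a := x - T) (b := x)).exists_isMinOn
    ⟨x, by simp [hxm]⟩ (hu.abs.continuousOn)
  have ht₀le : ∀ t ∈ Set.Icc (x - T) x, |u t₀| ≤ |u t| := fun t ht => ht₀min ht
  -- integral of |u| over [x-T,x] equals that over [0,T]
  have hperabs : Function.Periodic (fun t => |u t|) T := fun t => by simp [hper t]
  have hshift : (∫ t in (x - T)..(x - T + T), |u t|) = ∫ t in (0:ℝ)..(0 + T), |u t| :=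
    hperabs.intervalIntegral_add_eq (x - T) 0
  have hshift' : (∫ t in (x - T)..x, |u t|) = ∫ t in (0:ℝ)..T, |u t| := by
    simpa using hshift
  have hperabs' : Function.Periodic (fun t => |u' t|) T := by
    intro t
    have h1 : HasDerivAt u (u' (t + T)) (t + T) := hd (t + T)
    have h2 : HasDerivAt (fun s => u (s + T)) (u' (t + T)) t := by
      simpa [Function.comp_def] using h1.comp t ((hasDerivAt_id t).add_const T)
    have h3 : HasDerivAt u (u' (t + T)) t := by
      have : (fun s => u (s + T)) = u := funext fun s => hper s
      rwa [this] at h2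
    simp [h3.unique (hd t)]
  have hshift2 : (∫ t in (x - T)..x, |u' t|) = ∫ t in (0:ℝ)..T, |u' t| := by
    simpa using hperabs'.intervalIntegral_add_eq (x - T) 0
  -- min value bound
  have hmin : |u t₀| * T ≤ ∫ t in (x - T)..x, |u t| := by
    have h1 : (∫ t in (x - T)..x, |u t₀|) ≤ ∫ t in (x - T)..x, |u t| := by
      apply intervalIntegral.integral_mono_on hxm (intervalIntegrable_const)
        (hu.abs.intervalIntegrable _ _) ht₀le
    have h2 : (∫ t in (x - T)..x, |u t₀|) = |u t₀| * T := by
      rw [intervalIntegral.integral_const, smul_eq_mul]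
      ring
    linarith
  -- FTC
  have hftc : (∫ t in t₀..x, u' t) = u x - u t₀ :=
    intervalIntegral.integral_eq_sub_of_hasDerivAt (fun t _ => hd t)
      ((hu'.intervalIntegrable _ _))
  have ht₀x : t₀ ≤ x := ht₀mem.2
  have habs : |∫ t in t₀..x, u' t| ≤ ∫ t in t₀..x, |u' t| :=
    intervalIntegral.abs_integral_le_integral_abs ht₀x
  have hsubset : (∫ t in t₀..x, |u' t|) ≤ ∫ t in (x - T)..x, |u' t| := by
    have hsplit : (∫ t in (x - T)..x, |u' t|)
        = (∫ t in (x - T)..t₀, |u' t|) + ∫ t in t₀..x, |u' t| := by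
      rw [intervalIntegral.integral_add_adjacent_intervals
        (hu'.abs.intervalIntegrable _ _) (hu'.abs.intervalIntegrable _ _)]
    have hpos : 0 ≤ ∫ t in (x - T)..t₀, |u' t| :=
      intervalIntegral.integral_nonneg ht₀mem.1 (fun t _ => abs_nonneg _)
    linarith
  have hux : |u x| ≤ |u t₀| + ∫ t in (x - T)..x, |u' t| := by
    have : u x = u t₀ + ∫ t in t₀..x, u' t := by linarith [hftc]
    calc |u x| ≤ |u t₀| + |∫ t in t₀..x, u' t| := by rw [this]; exact abs_add_le _ _
    _ ≤ |u t₀| + ∫ t in (x - T)..x, |u' t| := by linarith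
  have hmin' : |u t₀| ≤ (1 / T) * ∫ t in (0:ℝ)..T, |u t| := by
    rw [← hshift']
    rw [div_mul_eq_mul_div, le_div_iff₀ hT]
    linarith [hmin]
  rw [hshift2] at hux
  calc |u x| ≤ |u t₀| + ∫ t in (0:ℝ)..T, |u' t| := hux
  _ ≤ (1 / T) * (∫ t in (0:ℝ)..T, |u t|) + ∫ t in (0:ℝ)..T, |u' t| := by linarith

-- Part 2: 2D sup bound
/-- Iterated absolute integral over the fundamental square. -/
def sqInt (h : ℝ × ℝ → ℝ) : ℝ :=
  ∫ s in (0:ℝ)..(2 * Real.pi), ∫ t in (0:ℝ)..(2 * Real.pi), |h (s, t)|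

lemma sqInt_nonneg {h : ℝ × ℝ → ℝ} : 0 ≤ sqInt h := by
  have hT : (0:ℝ) ≤ 2 * Real.pi := by positivity
  exact intervalIntegral.integral_nonneg hT (fun s _ =>
    intervalIntegral.integral_nonneg hT (fun t _ => abs_nonneg _))

lemma twoD_bound {f f1 f2 f12 : ℝ × ℝ → ℝ}
    (hf : Continuous f) (hf1 : Continuous f1) (hf2 : Continuous f2) (hf12 : Continuous f12)
    (hd1 : ∀ p : ℝ × ℝ, HasDerivAt (fun s => f (s, p.2)) (f1 p) p.1)
    (hd2 : ∀ p : ℝ × ℝ, HasDerivAt (fun t => f (p.1, t)) (f2 p) p.2)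
    (hd12 : ∀ p : ℝ × ℝ, HasDerivAt (fun t => f1 (p.1, t)) (f12 p) p.2)
    (hper1 : ∀ p : ℝ × ℝ, f (p.1 + 2 * Real.pi, p.2) = f p)
    (hper2 : ∀ p : ℝ × ℝ, f (p.1, p.2 + 2 * Real.pi) = f p)
    (hper12 : ∀ p : ℝ × ℝ, f1 (p.1, p.2 + 2 * Real.pi) = f1 p)
    (p : ℝ × ℝ) :
    |f p| ≤ sqInt f + sqInt f1 + sqInt f2 + sqInt f12 := by
  have hT : (0:ℝ) < 2 * Real.pi := by positivity
  have hT1 : (1:ℝ) ≤ 2 * Real.pi := by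
    nlinarith [Real.pi_gt_three]
  obtain ⟨x, y⟩ := p
  -- Step 1: oneD in the first variable, at fixed y
  have step1 : |f (x, y)| ≤ (1 / (2 * Real.pi)) * (∫ s in (0:ℝ)..(2 * Real.pi), |f (s, y)|)
      + ∫ s in (0:ℝ)..(2 * Real.pi), |f1 (s, y)| := by
    apply oneD_bound (hf.comp (continuous_id.prodMk continuous_const))
      (hf1.comp (continuous_id.prodMk continuous_const))
      (fun s => hd1 (s, y)) (fun s => hper1 (s, y))
  -- Step 2: pointwise bounds in s for the two integrands, via oneD in the second variable
  have inner_f : ∀ s : ℝ, |f (s, y)| ≤ (1 / (2 * Real.pi)) * (∫ t in (0:ℝ)..(2 * Real.pi), |f (s, t)|)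
      + ∫ t in (0:ℝ)..(2 * Real.pi), |f2 (s, t)| := fun s =>
    oneD_bound (hf.comp (continuous_const.prodMk continuous_id))
      (hf2.comp (continuous_const.prodMk continuous_id))
      (fun t => hd2 (s, t)) (fun t => hper2 (s, t)) y
  have inner_f1 : ∀ s : ℝ, |f1 (s, y)| ≤ (1 / (2 * Real.pi)) * (∫ t in (0:ℝ)..(2 * Real.pi), |f1 (s, t)|)
      + ∫ t in (0:ℝ)..(2 * Real.pi), |f12 (s, t)| := fun s =>
    oneD_bound (hf1.comp (continuous_const.prodMk continuous_id))
      (hf12.comp (continuous_const.prodMk continuous_id))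
      (fun t => hd12 (s, t)) (fun t => hper12 (s, t)) y
  -- continuity of parametric integrals
  have hcont : ∀ (h : ℝ × ℝ → ℝ), Continuous h →
      Continuous fun s : ℝ => ∫ t in (0:ℝ)..(2 * Real.pi), |h (s, t)| := by
    intro h hh
    apply intervalIntegral.continuous_parametric_intervalIntegral_of_continuous
      (f := fun s t => |h (s, t)|) _ continuous_const
    exact (hh.comp (continuous_fst.prodMk continuous_snd)).abs
  -- integrate the pointwise bounds over s
  have mono : ∀ (a b : ℝ × ℝ → ℝ), Continuous a → Continuous b →
      (∀ s : ℝ, |a (s, y)| ≤ (1 / (2 * Real.pi)) * (∫ t in (0:ℝ)..(2 * Real.pi), |a (s, t)|)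
        + ∫ t in (0:ℝ)..(2 * Real.pi), |b (s, t)|) →
      (∫ s in (0:ℝ)..(2 * Real.pi), |a (s, y)|)
        ≤ (1 / (2 * Real.pi)) * sqInt a + sqInt b := by
    intro a b ha hb hpt
    have h1 : (∫ s in (0:ℝ)..(2 * Real.pi), |a (s, y)|)
        ≤ ∫ s in (0:ℝ)..(2 * Real.pi), ((1 / (2 * Real.pi)) * (∫ t in (0:ℝ)..(2 * Real.pi), |a (s, t)|)
          + ∫ t in (0:ℝ)..(2 * Real.pi), |b (s, t)|) := by
      apply intervalIntegral.integral_mono_on hT.le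
      · exact ((ha.comp (continuous_id.prodMk continuous_const)).abs).intervalIntegrable _ _
      · exact ((continuous_const.mul (hcont a ha)).add (hcont b hb)).intervalIntegrable _ _
      · exact fun s _ => hpt s
    have h2 : (∫ s in (0:ℝ)..(2 * Real.pi), ((1 / (2 * Real.pi)) * (∫ t in (0:ℝ)..(2 * Real.pi), |a (s, t)|)
          + ∫ t in (0:ℝ)..(2 * Real.pi), |b (s, t)|))
        = (1 / (2 * Real.pi)) * sqInt a + sqInt b := by
      rw [intervalIntegral.integral_add (((hcont a ha).const_mul (1 / (2 * Real.pi))).intervalIntegrable _ _)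
        ((hcont b hb).intervalIntegrable _ _),
        intervalIntegral.integral_const_mul]
      rfl
    linarith
  have m1 := mono f f2 hf hf2 inner_f
  have m2 := mono f1 f12 hf1 hf12 inner_f1
  have hinv : 0 < 1 / (2 * Real.pi) := by positivity
  have hinv1 : 1 / (2 * Real.pi) ≤ 1 := by
    rw [div_le_one hT]; linarith
  have n1 : 0 ≤ sqInt f := sqInt_nonneg
  have n2 : 0 ≤ sqInt f1 := sqInt_nonneg
  have n3 : 0 ≤ sqInt f2 := sqInt_nonneg
  have n4 : 0 ≤ sqInt f12 := sqInt_nonneg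
  have i1 : 0 ≤ ∫ s in (0:ℝ)..(2 * Real.pi), |f (s, y)| :=
    intervalIntegral.integral_nonneg hT.le (fun s _ => abs_nonneg _)
  have i2 : 0 ≤ ∫ s in (0:ℝ)..(2 * Real.pi), |f1 (s, y)| :=
    intervalIntegral.integral_nonneg hT.le (fun s _ => abs_nonneg _)
  calc |f (x, y)| ≤ (1 / (2 * Real.pi)) * (∫ s in (0:ℝ)..(2 * Real.pi), |f (s, y)|)
      + ∫ s in (0:ℝ)..(2 * Real.pi), |f1 (s, y)| := step1
    _ ≤ (1 / (2 * Real.pi)) * ((1 / (2 * Real.pi)) * sqInt f + sqInt f2)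
        + ((1 / (2 * Real.pi)) * sqInt f1 + sqInt f12) := by
      have := mul_le_mul_of_nonneg_left m1 hinv.le
      linarith
    _ ≤ sqInt f + sqInt f1 + sqInt f2 + sqInt f12 := by
      nlinarith [mul_le_of_le_one_left n1 hinv1, mul_le_of_le_one_left n3 hinv1,
        mul_le_of_le_one_left n2 hinv1]

-- Part 3: Cauchy–Schwarz: sqInt h ≤ 2π · H4norm g when h² ≤ Σ ‖iFDʲ g‖²
lemma sqInt_eq_setIntegral {h : ℝ × ℝ → ℝ} (hh : Continuous h) :
    sqInt h = ∫ p in (Set.Icc (0:ℝ) (2*Real.pi) ×ˢ Set.Icc (0:ℝ) (2*Real.pi)), |h p| := by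
  have hT : (0:ℝ) < 2 * Real.pi := by positivity
  have h1 : (Set.Ioc (0:ℝ) (2*Real.pi) : Set ℝ) =ᵐ[volume] Set.Icc (0:ℝ) (2*Real.pi) :=
    MeasureTheory.Ioc_ae_eq_Icc
  have hIcc : (Set.Ioc (0:ℝ) (2*Real.pi) ×ˢ Set.Ioc (0:ℝ) (2*Real.pi) : Set (ℝ×ℝ))
      =ᵐ[(volume : Measure ℝ).prod (volume : Measure ℝ)]
      (Set.Icc (0:ℝ) (2*Real.pi) ×ˢ Set.Icc (0:ℝ) (2*Real.pi)) :=
    MeasureTheory.Measure.set_prod_ae_eq h1 h1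
  have hint : IntegrableOn (fun p => |h p|) (Set.Ioc (0:ℝ) (2*Real.pi) ×ˢ Set.Ioc (0:ℝ) (2*Real.pi))
      ((volume : Measure ℝ).prod (volume : Measure ℝ)) := by
    rw [← Measure.volume_eq_prod]
    exact (hh.abs.continuousOn.integrableOn_compact ((isCompact_Icc).prod isCompact_Icc)).mono_set
      (Set.prod_mono Set.Ioc_subset_Icc_self Set.Ioc_subset_Icc_self)
  have step : sqInt h
      = ∫ p in (Set.Ioc (0:ℝ) (2*Real.pi) ×ˢ Set.Ioc (0:ℝ) (2*Real.pi)), |h p|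
        ∂((volume : Measure ℝ).prod (volume : Measure ℝ)) := by
    rw [MeasureTheory.setIntegral_prod _ hint]
    unfold sqInt
    rw [intervalIntegral.integral_of_le hT.le]
    apply MeasureTheory.setIntegral_congr_fun measurableSet_Ioc
    intro s _
    show (∫ t in (0:ℝ)..(2 * Real.pi), |h (s, t)|) = ∫ y in Set.Ioc (0:ℝ) (2*Real.pi), |h (s, y)|
    rw [intervalIntegral.integral_of_le hT.le]
  rw [step, MeasureTheory.setIntegral_congr_set hIcc, Measure.volume_eq_prod]

lemma sqInt_le_H4 {h : ℝ × ℝ → ℝ} {g : ℝ × ℝ → ℝ} (hh : Continuous h) (hg : ContDiff ℝ (⊤ : ℕ∞) g)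
    (hb : ∀ p : ℝ × ℝ, h p ^ 2 ≤ ∑ j ∈ Finset.range 5, ‖iteratedFDeriv ℝ j g p‖ ^ 2) :
    sqInt h ≤ 2 * Real.pi * H4norm g := by
  have hT : (0:ℝ) < 2 * Real.pi := by positivity
  set Q : Set (ℝ × ℝ) := Set.Icc (0:ℝ) (2*Real.pi) ×ˢ Set.Icc (0:ℝ) (2*Real.pi) with hQdef
  have hQc : IsCompact Q := (isCompact_Icc).prod isCompact_Icc
  have hQm : MeasurableSet Q := (measurableSet_Icc).prod measurableSet_Icc
  have habs : Continuous fun p : ℝ × ℝ => |h p| := hh.abs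
  have key1 : sqInt h = ∫ p in Q, |h p| := sqInt_eq_setIntegral hh
  -- volume of Q
  have hvol : (volume Q).toReal = (2*Real.pi) ^ 2 := by
    rw [hQdef, Measure.volume_eq_prod, Measure.prod_prod, Real.volume_Icc, sub_zero,
      ← ENNReal.ofReal_mul (by linarith), ENNReal.toReal_ofReal (by positivity)]
    ring
  set B : ℝ := ∫ p in Q, h p ^ 2 with hBdef
  have hBint : IntegrableOn (fun p => h p ^ 2) Q volume :=
    ((hh.pow 2).continuousOn).integrableOn_compact hQc
  have hBnn : 0 ≤ B := MeasureTheory.setIntegral_nonneg hQm (fun p _ => sq_nonneg _)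
  have hCS : (∫ p in Q, |h p|) ≤ 2*Real.pi * Real.sqrt B := by
    have hA : ∀ lam : ℝ, 0 < lam → (∫ p in Q, |h p|) ≤ (lam * (2*Real.pi) ^ 2 + B / lam) / 2 := by
      intro lam hlam
      have hpt : ∀ p ∈ Q, |h p| ≤ lam / 2 + h p ^ 2 / (2 * lam) := by
        intro p _
        rw [div_add_div _ _ (by positivity) (by positivity : (2:ℝ)*lam ≠ 0)]
        rw [le_div_iff₀ (by positivity)]
        nlinarith [sq_nonneg (lam - |h p|), sq_abs (h p)]
      have hci : IntegrableOn (fun _ : ℝ × ℝ => lam / 2) Q volume :=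
        MeasureTheory.integrableOn_const hQc.measure_lt_top.ne
      have hgint : IntegrableOn (fun p : ℝ × ℝ => lam / 2 + h p ^ 2 / (2 * lam)) Q volume :=
        hci.add (hBint.div_const _)
      have hmono := MeasureTheory.setIntegral_mono_on
        (habs.continuousOn.integrableOn_compact hQc) hgint hQm hpt
      have hRHS : (∫ p in Q, (lam / 2 + h p ^ 2 / (2 * lam)))
          = (2*Real.pi) ^ 2 * (lam / 2) + B / (2*lam) := by
        rw [MeasureTheory.integral_add hci (hBint.div_const _),
          MeasureTheory.setIntegral_const, MeasureTheory.integral_div, smul_eq_mul, measureReal_def, hvol, ← hBdef]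
      rw [hRHS] at hmono
      calc (∫ p in Q, |h p|) ≤ (2*Real.pi) ^ 2 * (lam / 2) + B / (2*lam) := hmono
        _ = (lam * (2*Real.pi) ^ 2 + B / lam) / 2 := by field_simp
    rcases eq_or_lt_of_le hBnn with hB0 | hBpos
    · have hle0 : (∫ p in Q, |h p|) ≤ 0 := by
        by_contra hcon
        push_neg at hcon
        have hlam : 0 < (∫ p in Q, |h p|) / (2*Real.pi) ^ 2 := by positivity
        have := hA _ hlam
        rw [← hB0, div_mul_cancel₀ _ (by positivity : ((2:ℝ)*Real.pi) ^ 2 ≠ 0)] at this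
        simp only [zero_div, add_zero] at this
        linarith
      nlinarith [Real.sqrt_nonneg B, hT]
    · have hsB : 0 < Real.sqrt B := Real.sqrt_pos.2 hBpos
      have := hA (Real.sqrt B / (2*Real.pi)) (by positivity)
      have hsq : Real.sqrt B * Real.sqrt B = B := Real.mul_self_sqrt hBnn
      calc (∫ p in Q, |h p|)
          ≤ ((Real.sqrt B / (2*Real.pi)) * (2*Real.pi) ^ 2 + B / (Real.sqrt B / (2*Real.pi))) / 2 :=
            this
        _ = 2*Real.pi * Real.sqrt B := by
          rw [div_div_eq_mul_div]
          field_simp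
          nlinarith [Real.sq_sqrt hBnn, Real.sqrt_nonneg B, hsq]
  have hS : Continuous fun p : ℝ × ℝ => ∑ j ∈ Finset.range 5, ‖iteratedFDeriv ℝ j g p‖ ^ 2 := by
    apply continuous_finset_sum
    intro j _
    exact ((hg.continuous_iteratedFDeriv (m := j) (by exact_mod_cast le_top)).norm).pow 2
  have hBle : B ≤ ∫ p in Q, ∑ j ∈ Finset.range 5, ‖iteratedFDeriv ℝ j g p‖ ^ 2 :=
    MeasureTheory.setIntegral_mono_on hBint (hS.continuousOn.integrableOn_compact hQc) hQm
      (fun p _ => hb p)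
  have hsqrtB : Real.sqrt B ≤ H4norm g := by
    unfold H4norm
    exact Real.sqrt_le_sqrt hBle
  calc sqInt h = ∫ p in Q, |h p| := key1
    _ ≤ 2*Real.pi * Real.sqrt B := hCS
    _ ≤ 2*Real.pi * H4norm g := by nlinarith [hsqrtB, hT]

-- Part 4: machinery for directional iterated derivatives
lemma fderiv_iFD_apply {g : ℝ × ℝ → ℝ} (k : ℕ) (m : Fin k → ℝ × ℝ) (x w : ℝ × ℝ) :
    fderiv ℝ (iteratedFDeriv ℝ k g) x w m = iteratedFDeriv ℝ (k+1) g x (Fin.cons w m) := by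
  rw [iteratedFDeriv_succ_apply_left, Fin.cons_zero, Fin.tail_cons]

lemma hasFDerivAt_iFD {g : ℝ × ℝ → ℝ} (hg : ContDiff ℝ (⊤ : ℕ∞) g) (k : ℕ) (x : ℝ × ℝ) :
    HasFDerivAt (iteratedFDeriv ℝ k g) (fderiv ℝ (iteratedFDeriv ℝ k g) x) x := by
  exact ((hg.differentiable_iteratedFDeriv (by exact_mod_cast ENat.coe_lt_top k)) x).hasFDerivAt

lemma Dfun_cont {g : ℝ × ℝ → ℝ} (hg : ContDiff ℝ (⊤ : ℕ∞) g) (k : ℕ) (m : Fin k → ℝ × ℝ) :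
    Continuous fun y : ℝ × ℝ => iteratedFDeriv ℝ k g y m :=
  (ContinuousMultilinearMap.apply ℝ (fun _ : Fin k => ℝ × ℝ) ℝ m).continuous.comp
    (hg.continuous_iteratedFDeriv (by exact_mod_cast le_top))

lemma Dfun_hasDerivAt_fst {g : ℝ × ℝ → ℝ} (hg : ContDiff ℝ (⊤ : ℕ∞) g) (k : ℕ) (m : Fin k → ℝ × ℝ)
    (x y : ℝ) :
    HasDerivAt (fun s => iteratedFDeriv ℝ k g (s, y) m)
      (iteratedFDeriv ℝ (k+1) g (x, y) (Fin.cons (1, 0) m)) x := by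
  have hline : HasDerivAt (fun s : ℝ => (s, y)) ((1:ℝ), (0:ℝ)) x :=
    (hasDerivAt_id x).prodMk (hasDerivAt_const x y)
  have hE := (ContinuousMultilinearMap.apply ℝ (fun _ : Fin k => ℝ × ℝ) ℝ m).hasFDerivAt
    (x := iteratedFDeriv ℝ k g (x, y))
  have hcomp : HasFDerivAt (fun z : ℝ × ℝ => iteratedFDeriv ℝ k g z m)
      ((ContinuousMultilinearMap.apply ℝ (fun _ : Fin k => ℝ × ℝ) ℝ m).comp
        (fderiv ℝ (iteratedFDeriv ℝ k g) (x, y))) (x, y) :=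
    hE.comp (x, y) (hasFDerivAt_iFD hg k (x, y))
  have := hcomp.comp_hasDerivAt x hline
  have heq : ((ContinuousMultilinearMap.apply ℝ (fun _ : Fin k => ℝ × ℝ) ℝ m).comp
      (fderiv ℝ (iteratedFDeriv ℝ k g) (x, y))) ((1:ℝ), (0:ℝ))
      = iteratedFDeriv ℝ (k+1) g (x, y) (Fin.cons (1, 0) m) := by
    simp only [ContinuousLinearMap.coe_comp', Function.comp_apply,
      ContinuousMultilinearMap.apply_apply]
    exact fderiv_iFD_apply k m (x, y) (1, 0)
  rw [heq] at this
  exact this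

lemma Dfun_hasDerivAt_snd {g : ℝ × ℝ → ℝ} (hg : ContDiff ℝ (⊤ : ℕ∞) g) (k : ℕ) (m : Fin k → ℝ × ℝ)
    (x y : ℝ) :
    HasDerivAt (fun t => iteratedFDeriv ℝ k g (x, t) m)
      (iteratedFDeriv ℝ (k+1) g (x, y) (Fin.cons (0, 1) m)) y := by
  have hline : HasDerivAt (fun t : ℝ => (x, t)) ((0:ℝ), (1:ℝ)) y :=
    (hasDerivAt_const y x).prodMk (hasDerivAt_id y)
  have hE := (ContinuousMultilinearMap.apply ℝ (fun _ : Fin k => ℝ × ℝ) ℝ m).hasFDerivAt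
    (x := iteratedFDeriv ℝ k g (x, y))
  have hcomp : HasFDerivAt (fun z : ℝ × ℝ => iteratedFDeriv ℝ k g z m)
      ((ContinuousMultilinearMap.apply ℝ (fun _ : Fin k => ℝ × ℝ) ℝ m).comp
        (fderiv ℝ (iteratedFDeriv ℝ k g) (x, y))) (x, y) :=
    hE.comp (x, y) (hasFDerivAt_iFD hg k (x, y))
  have := hcomp.comp_hasDerivAt y hline
  have heq : ((ContinuousMultilinearMap.apply ℝ (fun _ : Fin k => ℝ × ℝ) ℝ m).comp
      (fderiv ℝ (iteratedFDeriv ℝ k g) (x, y))) ((0:ℝ), (1:ℝ))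
      = iteratedFDeriv ℝ (k+1) g (x, y) (Fin.cons (0, 1) m) := by
    simp only [ContinuousLinearMap.coe_comp', Function.comp_apply,
      ContinuousMultilinearMap.apply_apply]
    exact fderiv_iFD_apply k m (x, y) (0, 1)
  rw [heq] at this
  exact this

lemma iFD_periodic {g : ℝ × ℝ → ℝ} (hg : ContDiff ℝ (⊤ : ℕ∞) g) (p : ℝ × ℝ)
    (hper : ∀ x, g (x + p) = g x) :
    ∀ (k : ℕ) (x : ℝ × ℝ), iteratedFDeriv ℝ k g (x + p) = iteratedFDeriv ℝ k g x := by
  intro k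
  induction k with
  | zero =>
    intro x
    ext m
    simp [iteratedFDeriv_zero_apply, hper]
  | succ k ih =>
    intro x
    have htrans : HasFDerivAt (fun y => iteratedFDeriv ℝ k g (y + p))
        (fderiv ℝ (iteratedFDeriv ℝ k g) (x + p)) x := by
      have hl : HasFDerivAt (fun y : ℝ × ℝ => y + p) (ContinuousLinearMap.id ℝ (ℝ × ℝ)) x :=
        (hasFDerivAt_id x).add_const p
      have := (hasFDerivAt_iFD hg k (x + p)).comp x hl
      simpa [Function.comp_def] using this
    have heqfun : (fun y => iteratedFDeriv ℝ k g (y + p)) = iteratedFDeriv ℝ k g := funext ih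
    rw [heqfun] at htrans
    have hfeq : fderiv ℝ (iteratedFDeriv ℝ k g) (x + p) = fderiv ℝ (iteratedFDeriv ℝ k g) x :=
      htrans.unique (hasFDerivAt_iFD hg k x)
    ext m
    rw [iteratedFDeriv_succ_apply_left, iteratedFDeriv_succ_apply_left, hfeq]

-- Part 4b: sup bound for directional derivatives of order ≤ 2
lemma D_sup_bound {g : ℝ × ℝ → ℝ} (hg : ContDiff ℝ (⊤ : ℕ∞) g)
    (hper1 : ∀ x : ℝ × ℝ, g (x + ((2 * Real.pi : ℝ), (0:ℝ))) = g x)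
    (hper2 : ∀ x : ℝ × ℝ, g (x + ((0:ℝ), (2 * Real.pi : ℝ))) = g x)
    (k : ℕ) (hk : k ≤ 2) (m : Fin k → ℝ × ℝ) (hm : ∀ i, ‖m i‖ ≤ 1) (x : ℝ × ℝ) :
    |iteratedFDeriv ℝ k g x m| ≤ 8 * Real.pi * H4norm g := by
  have hT : (0:ℝ) < 2 * Real.pi := by positivity
  have norm_e1 : ‖((1:ℝ), (0:ℝ))‖ = 1 := by
    rw [Prod.norm_def]; simp
  have norm_e2 : ‖((0:ℝ), (1:ℝ))‖ = 1 := by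
    rw [Prod.norm_def]; simp
  -- pointwise square bound, for any order ≤ 4 and unit vectors
  have hsq : ∀ (j : ℕ), j < 5 → ∀ (m' : Fin j → ℝ × ℝ), (∀ i, ‖m' i‖ ≤ 1) → ∀ p : ℝ × ℝ,
      (iteratedFDeriv ℝ j g p m') ^ 2 ≤ ∑ i ∈ Finset.range 5, ‖iteratedFDeriv ℝ i g p‖ ^ 2 := by
    intro j hj m' hm' p
    have h1 : |iteratedFDeriv ℝ j g p m'| ≤ ‖iteratedFDeriv ℝ j g p‖ := by
      have := (iteratedFDeriv ℝ j g p).le_opNorm m'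
      have hprod : (∏ i : Fin j, ‖m' i‖) ≤ 1 :=
        Finset.prod_le_one (fun i _ => norm_nonneg _) (fun i _ => hm' i)
      rw [Real.norm_eq_abs] at this
      nlinarith [norm_nonneg (iteratedFDeriv ℝ j g p), abs_nonneg (iteratedFDeriv ℝ j g p m')]
    have h2 : (iteratedFDeriv ℝ j g p m') ^ 2 ≤ ‖iteratedFDeriv ℝ j g p‖ ^ 2 := by
      rw [← sq_abs]
      exact pow_le_pow_left₀ (abs_nonneg _) h1 2
    refine h2.trans ?_
    exact Finset.single_le_sum (f := fun i => ‖iteratedFDeriv ℝ i g p‖ ^ 2)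
      (fun i _ => sq_nonneg _) (Finset.mem_range.2 hj)
  -- the four functions
  set f : ℝ × ℝ → ℝ := fun p => iteratedFDeriv ℝ k g p m with hfdef
  set f1 : ℝ × ℝ → ℝ := fun p => iteratedFDeriv ℝ (k+1) g p (Fin.cons (1,0) m) with hf1def
  set f2 : ℝ × ℝ → ℝ := fun p => iteratedFDeriv ℝ (k+1) g p (Fin.cons (0,1) m) with hf2def
  set f12 : ℝ × ℝ → ℝ :=
    fun p => iteratedFDeriv ℝ (k+2) g p (Fin.cons (0,1) (Fin.cons (1,0) m)) with hf12def
  have hm1 : ∀ i, ‖(Fin.cons ((1:ℝ),(0:ℝ)) m : Fin (k+1) → ℝ × ℝ) i‖ ≤ 1 := by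
    intro i
    refine Fin.cases ?_ ?_ i
    · rw [Fin.cons_zero, norm_e1]
    · intro j; rw [Fin.cons_succ]; exact hm j
  have hm2 : ∀ i, ‖(Fin.cons ((0:ℝ),(1:ℝ)) m : Fin (k+1) → ℝ × ℝ) i‖ ≤ 1 := by
    intro i
    refine Fin.cases ?_ ?_ i
    · rw [Fin.cons_zero, norm_e2]
    · intro j; rw [Fin.cons_succ]; exact hm j
  have hm12 : ∀ i, ‖(Fin.cons ((0:ℝ),(1:ℝ)) (Fin.cons ((1:ℝ),(0:ℝ)) m) : Fin (k+2) → ℝ × ℝ) i‖ ≤ 1 := by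
    intro i
    refine Fin.cases ?_ ?_ i
    · rw [Fin.cons_zero, norm_e2]
    · intro j; rw [Fin.cons_succ]; exact hm1 j
  -- periodicity of the four functions
  have hperf : ∀ (j : ℕ) (m' : Fin j → ℝ × ℝ),
      (∀ p : ℝ × ℝ, iteratedFDeriv ℝ j g (p.1 + 2*Real.pi, p.2) m' = iteratedFDeriv ℝ j g p m')
      ∧ (∀ p : ℝ × ℝ, iteratedFDeriv ℝ j g (p.1, p.2 + 2*Real.pi) m' = iteratedFDeriv ℝ j g p m') := by
    intro j m'
    constructor
    · intro p
      have := iFD_periodic hg _ hper1 j p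
      have hp : (p.1 + 2*Real.pi, p.2) = p + ((2*Real.pi : ℝ), (0:ℝ)) := by
        ext <;> simp
      rw [hp, this]
    · intro p
      have := iFD_periodic hg _ hper2 j p
      have hp : (p.1, p.2 + 2*Real.pi) = p + ((0:ℝ), (2*Real.pi : ℝ)) := by
        ext <;> simp
      rw [hp, this]
  have key := twoD_bound (f := f) (f1 := f1) (f2 := f2) (f12 := f12)
    (Dfun_cont hg k m) (Dfun_cont hg (k+1) _) (Dfun_cont hg (k+1) _) (Dfun_cont hg (k+2) _)
    (fun p => Dfun_hasDerivAt_fst hg k m p.1 p.2)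
    (fun p => Dfun_hasDerivAt_snd hg k m p.1 p.2)
    (fun p => Dfun_hasDerivAt_snd hg (k+1) (Fin.cons (1,0) m) p.1 p.2)
    (fun p => (hperf k m).1 p) (fun p => (hperf k m).2 p)
    (fun p => (hperf (k+1) (Fin.cons (1,0) m)).2 p) x
  have b1 : sqInt f ≤ 2 * Real.pi * H4norm g :=
    sqInt_le_H4 (Dfun_cont hg k m) hg (hsq k (by omega) m hm)
  have b2 : sqInt f1 ≤ 2 * Real.pi * H4norm g :=
    sqInt_le_H4 (Dfun_cont hg (k+1) _) hg (hsq (k+1) (by omega) _ hm1)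
  have b3 : sqInt f2 ≤ 2 * Real.pi * H4norm g :=
    sqInt_le_H4 (Dfun_cont hg (k+1) _) hg (hsq (k+1) (by omega) _ hm2)
  have b4 : sqInt f12 ≤ 2 * Real.pi * H4norm g :=
    sqInt_le_H4 (Dfun_cont hg (k+2) _) hg (hsq (k+2) (by omega) _ hm12)
  calc |iteratedFDeriv ℝ k g x m| = |f x| := rfl
    _ ≤ sqInt f + sqInt f1 + sqInt f2 + sqInt f12 := key
    _ ≤ 8 * Real.pi * H4norm g := by linarith

-- Part 5: torus-side lemmas
instance : OpensMeasurableSpace (Torus2 × Torus2) := Prod.opensMeasurableSpace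

lemma addCircle_lift (w : AddCircle (2 * Real.pi)) :
    ∃ r : ℝ, (r : AddCircle (2 * Real.pi)) = w ∧ |r| = ‖w‖ := by
  obtain ⟨t, ht⟩ := QuotientAddGroup.mk_surjective w
  have ht' : ((t : ℝ) : AddCircle (2 * Real.pi)) = w := ht
  refine ⟨t - round ((2 * Real.pi)⁻¹ * t) * (2 * Real.pi), ?_, ?_⟩
  · rw [← ht']
    rw [AddCircle.coe_sub]
    have h1 : ((round ((2 * Real.pi)⁻¹ * t) * (2 * Real.pi) : ℝ) : AddCircle (2 * Real.pi)) = 0 := by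
      have h2 : ((((round ((2 * Real.pi)⁻¹ * t) : ℤ) • (2 * Real.pi) : ℝ)) : AddCircle (2 * Real.pi))
          = (round ((2 * Real.pi)⁻¹ * t) : ℤ) • (((2 * Real.pi : ℝ)) : AddCircle (2 * Real.pi)) :=
        AddCircle.coe_zsmul (2 * Real.pi)
      rw [zsmul_eq_mul] at h2
      rw [h2, AddCircle.coe_period, smul_zero]
    rw [h1, sub_zero]
  · rw [← ht', ← AddCircle.norm_eq]

lemma torusProj_continuous : Continuous torusProj :=
  (continuous_quotient_mk'.comp continuous_fst).prodMk
    (continuous_quotient_mk'.comp continuous_snd)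

lemma torusProj_surjective : Function.Surjective torusProj := by
  intro z
  obtain ⟨a, ha⟩ := QuotientAddGroup.mk_surjective z.1
  obtain ⟨b, hb⟩ := QuotientAddGroup.mk_surjective z.2
  exact ⟨(a, b), Prod.ext ha hb⟩

lemma torusProj_isQuotientMap : Topology.IsQuotientMap torusProj :=
  (QuotientAddGroup.isOpenMap_coe.prodMap QuotientAddGroup.isOpenMap_coe).isQuotientMap
    torusProj_continuous torusProj_surjective

lemma torusProj_sub (a c : ℝ × ℝ) : torusProj (a - c) = torusProj a - torusProj c := by
  unfold torusProj
  simp [Prod.ext_iff, Prod.fst_sub, Prod.snd_sub, AddCircle.coe_sub]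

/-- A bound for `K` away from the singularity. -/
lemma K_away_bound (K : Torus2 → ℝ × ℝ)
    (hK_smooth : ContDiffOn ℝ (⊤ : ℕ∞) (fun x : ℝ × ℝ => K (torusProj x))
      {x : ℝ × ℝ | torusProj x ≠ (0 : Torus2)}) (δ : ℝ) (hδ : 0 < δ) :
    ∃ M, 0 ≤ M ∧ ∀ z : Torus2, δ ≤ ‖z‖ → ‖K z‖ ≤ M := by
  set ψ : Torus2 → ℝ := fun z => max 0 (min 1 (2/δ * ‖z‖ - 1)) with hψ
  have hψcont : Continuous ψ :=
    continuous_const.max (continuous_const.min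
      ((continuous_const.mul continuous_norm).sub continuous_const))
  have hψ0 : ∀ z : Torus2, ‖z‖ ≤ δ/2 → ψ z = 0 := by
    intro z hz
    have : 2/δ * ‖z‖ - 1 ≤ 0 := by
      have h2 : 2/δ * ‖z‖ ≤ 2/δ * (δ/2) := by
        apply mul_le_mul_of_nonneg_left hz (by positivity)
      have h3 : 2/δ * (δ/2) = 1 := by field_simp
      linarith
    exact max_eq_left (min_le_of_right_le this)
  have hψ1 : ∀ z : Torus2, δ ≤ ‖z‖ → ψ z = 1 := by
    intro z hz
    have h1 : (1:ℝ) ≤ 2/δ * ‖z‖ - 1 := by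
      have h2 : 2/δ * δ ≤ 2/δ * ‖z‖ := by
        apply mul_le_mul_of_nonneg_left hz (by positivity)
      have h3 : 2/δ * δ = 2 := by field_simp
      linarith
    rw [hψ]
    simp only [min_eq_left h1, max_eq_right (zero_le_one)]
  have hU : IsOpen {x : ℝ × ℝ | torusProj x ≠ (0 : Torus2)} :=
    isOpen_compl_singleton.preimage torusProj_continuous
  have hKψ : Continuous (fun z : Torus2 => ψ z • K z) := by
    rw [torusProj_isQuotientMap.continuous_iff]
    rw [continuous_iff_continuousAt]
    intro x
    by_cases h0 : torusProj x = (0 : Torus2)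
    · have hmem : {y : ℝ × ℝ | ‖torusProj y‖ < δ/2} ∈ nhds x := by
        apply IsOpen.mem_nhds
        · exact isOpen_lt (continuous_norm.comp torusProj_continuous) continuous_const
        · show ‖torusProj x‖ < δ/2
          rw [h0, norm_zero]; positivity
      have hev : (fun y : ℝ × ℝ => ((fun z : Torus2 => ψ z • K z) ∘ torusProj) y)
          =ᶠ[nhds x] (fun _ => (0 : ℝ × ℝ)) := by
        apply Filter.eventuallyEq_of_mem hmem
        intro y hy
        show ψ (torusProj y) • K (torusProj y) = 0
        rw [hψ0 _ (le_of_lt hy), zero_smul]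
      exact (continuousAt_const.congr hev.symm)
    · have hmem : {x : ℝ × ℝ | torusProj x ≠ (0 : Torus2)} ∈ nhds x := hU.mem_nhds h0
      exact ((hψcont.comp torusProj_continuous).continuousAt).smul
        ((hK_smooth.continuousOn.continuousAt hmem))
  obtain ⟨M0, hM0⟩ := isCompact_univ.exists_bound_of_continuousOn hKψ.continuousOn
  refine ⟨max M0 0, le_max_right _ _, ?_⟩
  intro z hz
  have : ψ z • K z = K z := by rw [hψ1 z hz, one_smul]
  calc ‖K z‖ = ‖ψ z • K z‖ := by rw [this]
    _ ≤ M0 := hM0 z (Set.mem_univ z)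
    _ ≤ max M0 0 := le_max_left _ _

lemma Dfun_hasFDerivAt {g : ℝ × ℝ → ℝ} (hg : ContDiff ℝ (⊤ : ℕ∞) g) (k : ℕ) (m : Fin k → ℝ × ℝ)
    (z : ℝ × ℝ) :
    HasFDerivAt (fun y : ℝ × ℝ => iteratedFDeriv ℝ k g y m)
      ((ContinuousMultilinearMap.apply ℝ (fun _ : Fin k => ℝ × ℝ) ℝ m).comp
        (fderiv ℝ (iteratedFDeriv ℝ k g) z)) z :=
  ((ContinuousMultilinearMap.apply ℝ (fun _ : Fin k => ℝ × ℝ) ℝ m).hasFDerivAt).comp z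
    (hasFDerivAt_iFD hg k z)

/-- Lipschitz-type bound for first derivatives of `g`, on all of `ℝ²`. -/
lemma D1_lip {g : ℝ × ℝ → ℝ} (hg : ContDiff ℝ (⊤ : ℕ∞) g)
    (hper1 : ∀ x : ℝ × ℝ, g (x + ((2 * Real.pi : ℝ), (0:ℝ))) = g x)
    (hper2 : ∀ x : ℝ × ℝ, g (x + ((0:ℝ), (2 * Real.pi : ℝ))) = g x)
    (v : ℝ × ℝ) (hv : ‖v‖ ≤ 1) (a b : ℝ × ℝ) :
    |iteratedFDeriv ℝ 1 g b (fun _ => v) - iteratedFDeriv ℝ 1 g a (fun _ => v)|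
      ≤ (16 * Real.pi * H4norm g) * ‖b - a‖ := by
  set m : Fin 1 → ℝ × ℝ := fun _ => v with hm
  have hm1 : ∀ i, ‖m i‖ ≤ 1 := fun _ => hv
  have hdiff : ∀ x : ℝ × ℝ, DifferentiableAt ℝ (fun y : ℝ × ℝ => iteratedFDeriv ℝ 1 g y m) x :=
    fun x => (Dfun_hasFDerivAt hg 1 m x).differentiableAt
  have hbound : ∀ x : ℝ × ℝ, ‖fderiv ℝ (fun y : ℝ × ℝ => iteratedFDeriv ℝ 1 g y m) x‖
      ≤ 16 * Real.pi * H4norm g := by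
    intro x
    rw [(Dfun_hasFDerivAt hg 1 m x).fderiv]
    set T := (ContinuousMultilinearMap.apply ℝ (fun _ : Fin 1 => ℝ × ℝ) ℝ m).comp
      (fderiv ℝ (iteratedFDeriv ℝ 1 g) x) with hT
    have hTapp : ∀ w : ℝ × ℝ, T w = iteratedFDeriv ℝ 2 g x (Fin.cons w m) := by
      intro w
      rw [hT]
      simp only [ContinuousLinearMap.coe_comp', Function.comp_apply,
        ContinuousMultilinearMap.apply_apply]
      exact fderiv_iFD_apply 1 m x w
    have hcons : ∀ w : ℝ × ℝ, ‖w‖ ≤ 1 →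
        |iteratedFDeriv ℝ 2 g x (Fin.cons w m)| ≤ 8 * Real.pi * H4norm g := by
      intro w hw
      apply D_sup_bound hg hper1 hper2 2 le_rfl
      intro i
      refine Fin.cases ?_ ?_ i
      · rw [Fin.cons_zero]; exact hw
      · intro j; rw [Fin.cons_succ]; exact hm1 j
    have norm_e1 : ‖((1:ℝ), (0:ℝ))‖ = 1 := by rw [Prod.norm_def]; simp
    have norm_e2 : ‖((0:ℝ), (1:ℝ))‖ = 1 := by rw [Prod.norm_def]; simp
    apply ContinuousLinearMap.opNorm_le_bound _
      (mul_nonneg (by positivity) (by unfold H4norm; exact Real.sqrt_nonneg _))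
    intro w
    have hdecomp : w = w.1 • ((1:ℝ), (0:ℝ)) + w.2 • ((0:ℝ), (1:ℝ)) := by
      ext <;> simp
    have hTw : T w = w.1 • T ((1:ℝ), (0:ℝ)) + w.2 • T ((0:ℝ), (1:ℝ)) := by
      conv_lhs => rw [hdecomp]
      rw [map_add, T.map_smul, T.map_smul]
    rw [hTw]
    have h1 := hcons _ (le_of_eq norm_e1)
    have h2 := hcons _ (le_of_eq norm_e2)
    rw [← hTapp] at h1 h2
    have hw1 : |w.1| ≤ ‖w‖ := norm_fst_le w
    have hw2 : |w.2| ≤ ‖w‖ := norm_snd_le w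
    calc ‖w.1 • T ((1:ℝ), (0:ℝ)) + w.2 • T ((0:ℝ), (1:ℝ))‖
        ≤ ‖w.1 • T ((1:ℝ), (0:ℝ))‖ + ‖w.2 • T ((0:ℝ), (1:ℝ))‖ := norm_add_le _ _
      _ = |w.1| * |T ((1:ℝ), (0:ℝ))| + |w.2| * |T ((0:ℝ), (1:ℝ))| := by
          rw [norm_smul, norm_smul]
          simp [Real.norm_eq_abs]
      _ ≤ ‖w‖ * (8 * Real.pi * H4norm g) + ‖w‖ * (8 * Real.pi * H4norm g) := by
          have hTn1 : (0:ℝ) ≤ |T ((1:ℝ), (0:ℝ))| := abs_nonneg _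
          have := norm_nonneg w
          nlinarith [abs_nonneg (T ((1:ℝ), (0:ℝ))), abs_nonneg (T ((0:ℝ), (1:ℝ)))]
      _ = 16 * Real.pi * H4norm g * ‖w‖ := by ring
  have := Convex.norm_image_sub_le_of_norm_fderiv_le (𝕜 := ℝ)
    (fun x _ => hdiff x) (fun x _ => hbound x) convex_univ (Set.mem_univ a) (Set.mem_univ b)
  simpa [Real.norm_eq_abs] using this

-- Part 6: bounds for G and Fphi
lemma H4norm_nonneg (g : ℝ × ℝ → ℝ) : 0 ≤ H4norm g := Real.sqrt_nonneg _

lemma G_val_bound {g : ℝ × ℝ → ℝ} {G : Torus2 → ℝ × ℝ} (hg : ContDiff ℝ (⊤ : ℕ∞) g)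
    (hG : ∀ x, G (torusProj x) = gradVec g x)
    (hper1 : ∀ x : ℝ × ℝ, g (x + ((2 * Real.pi : ℝ), (0:ℝ))) = g x)
    (hper2 : ∀ x : ℝ × ℝ, g (x + ((0:ℝ), (2 * Real.pi : ℝ))) = g x)
    (z : Torus2) : ‖G z‖ ≤ 8 * Real.pi * H4norm g := by
  obtain ⟨a, rfl⟩ := torusProj_surjective z
  rw [hG a]
  have norm_e1 : ‖((1:ℝ), (0:ℝ))‖ = 1 := by rw [Prod.norm_def]; simp
  have norm_e2 : ‖((0:ℝ), (1:ℝ))‖ = 1 := by rw [Prod.norm_def]; simp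
  have h1 : |fderiv ℝ g a (1, 0)| ≤ 8 * Real.pi * H4norm g := by
    have := D_sup_bound hg hper1 hper2 1 (by omega) (fun _ => ((1:ℝ), (0:ℝ)))
      (fun _ => le_of_eq norm_e1) a
    rwa [iteratedFDeriv_one_apply] at this
  have h2 : |fderiv ℝ g a (0, 1)| ≤ 8 * Real.pi * H4norm g := by
    have := D_sup_bound hg hper1 hper2 1 (by omega) (fun _ => ((0:ℝ), (1:ℝ)))
      (fun _ => le_of_eq norm_e2) a
    rwa [iteratedFDeriv_one_apply] at this
  rw [gradVec, Prod.norm_def]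
  simp only [Real.norm_eq_abs]
  exact max_le h1 h2

lemma G_diff_bound {g : ℝ × ℝ → ℝ} {G : Torus2 → ℝ × ℝ} (hg : ContDiff ℝ (⊤ : ℕ∞) g)
    (hG : ∀ x, G (torusProj x) = gradVec g x)
    (hper1 : ∀ x : ℝ × ℝ, g (x + ((2 * Real.pi : ℝ), (0:ℝ))) = g x)
    (hper2 : ∀ x : ℝ × ℝ, g (x + ((0:ℝ), (2 * Real.pi : ℝ))) = g x)
    (x y : Torus2) : ‖G x - G y‖ ≤ (16 * Real.pi * H4norm g) * ‖x - y‖ := by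
  set z : Torus2 := x - y with hz
  obtain ⟨r1, hr1, hr1n⟩ := addCircle_lift z.1
  obtain ⟨r2, hr2, hr2n⟩ := addCircle_lift z.2
  obtain ⟨a, ha⟩ := torusProj_surjective x
  set c : ℝ × ℝ := (r1, r2) with hc
  have hcz : torusProj c = z := Prod.ext hr1 hr2
  have hcn : ‖c‖ = ‖z‖ := by
    rw [Prod.norm_def, Prod.norm_def]
    show max ‖r1‖ ‖r2‖ = _
    rw [Real.norm_eq_abs, Real.norm_eq_abs, hr1n, hr2n]
  have hy : torusProj (a - c) = y := by
    rw [torusProj_sub, ha, hcz, hz, sub_sub_cancel]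
  have hGx : G x = gradVec g a := by rw [← ha, hG]
  have hGy : G y = gradVec g (a - c) := by rw [← hy, hG]
  have hsub : a - (a - c) = c := sub_sub_cancel a c
  have norm_e1 : ‖((1:ℝ), (0:ℝ))‖ = 1 := by rw [Prod.norm_def]; simp
  have norm_e2 : ‖((0:ℝ), (1:ℝ))‖ = 1 := by rw [Prod.norm_def]; simp
  have comp1 : |fderiv ℝ g a (1, 0) - fderiv ℝ g (a - c) (1, 0)|
      ≤ (16 * Real.pi * H4norm g) * ‖c‖ := by
    have := D1_lip hg hper1 hper2 ((1:ℝ), (0:ℝ)) (le_of_eq norm_e1) (a - c) a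
    rw [hsub] at this
    rwa [iteratedFDeriv_one_apply, iteratedFDeriv_one_apply] at this
  have comp2 : |fderiv ℝ g a (0, 1) - fderiv ℝ g (a - c) (0, 1)|
      ≤ (16 * Real.pi * H4norm g) * ‖c‖ := by
    have := D1_lip hg hper1 hper2 ((0:ℝ), (1:ℝ)) (le_of_eq norm_e2) (a - c) a
    rw [hsub] at this
    rwa [iteratedFDeriv_one_apply, iteratedFDeriv_one_apply] at this
  rw [hGx, hGy, ← hcn]
  rw [gradVec, gradVec, Prod.norm_def]
  simp only [Prod.fst_sub, Prod.snd_sub, Real.norm_eq_abs]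
  exact max_le comp1 comp2

lemma Fphi_bound {K : Torus2 → ℝ × ℝ} {G : Torus2 → ℝ × ℝ} {Cabs M S L δ : ℝ}
    (hδ : 0 < δ) (hM : 0 ≤ M) (hS : 0 ≤ S) (hL : 0 ≤ L) (hCabs : 0 ≤ Cabs)
    (hKnear : ∀ z : Torus2, z ≠ 0 → ‖z‖ < δ → ‖K z‖ ≤ Cabs / ‖z‖)
    (hKfar : ∀ z : Torus2, δ ≤ ‖z‖ → ‖K z‖ ≤ M)
    (hGb : ∀ z : Torus2, ‖G z‖ ≤ S)
    (hGl : ∀ x y : Torus2, ‖G x - G y‖ ≤ L * ‖x - y‖)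
    (p : Torus2 × Torus2) :
    |Fphi K G p| ≤ Cabs * L + M * (2 * S) := by
  unfold Fphi
  by_cases hp : p.1 = p.2
  · rw [if_pos hp]
    simp only [abs_zero]
    positivity
  · rw [if_neg hp]
    set z : Torus2 := p.1 - p.2 with hzdef
    have hz : z ≠ 0 := sub_ne_zero_of_ne hp
    have hzn : 0 < ‖z‖ := norm_pos_iff.2 hz
    set u : ℝ × ℝ := K z with hu
    set v : ℝ × ℝ := G p.1 - G p.2 with hv
    have hdot : |dot2 u v| ≤ 2 * (‖u‖ * ‖v‖) := by
      unfold dot2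
      have h1 : |u.1| ≤ ‖u‖ := norm_fst_le u
      have h2 : |u.2| ≤ ‖u‖ := norm_snd_le u
      have h3 : |v.1| ≤ ‖v‖ := norm_fst_le v
      have h4 : |v.2| ≤ ‖v‖ := norm_snd_le v
      calc |u.1 * v.1 + u.2 * v.2| ≤ |u.1 * v.1| + |u.2 * v.2| := abs_add_le _ _
        _ = |u.1| * |v.1| + |u.2| * |v.2| := by rw [abs_mul, abs_mul]
        _ ≤ ‖u‖ * ‖v‖ + ‖u‖ * ‖v‖ := by
            have := abs_nonneg u.1
            have := abs_nonneg v.1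
            nlinarith [abs_nonneg u.2, abs_nonneg v.2, norm_nonneg u, norm_nonneg v]
        _ = 2 * (‖u‖ * ‖v‖) := by ring
    have habs : |1 / 2 * dot2 u v| ≤ ‖u‖ * ‖v‖ := by
      rw [abs_mul]
      rw [abs_of_pos (by norm_num : (0:ℝ) < 1/2)]
      linarith
    refine habs.trans ?_
    by_cases hnear : ‖z‖ < δ
    · have hKb : ‖u‖ ≤ Cabs / ‖z‖ := hKnear z hz hnear
      have hvb : ‖v‖ ≤ L * ‖z‖ := hGl p.1 p.2
      have : ‖u‖ * ‖v‖ ≤ (Cabs / ‖z‖) * (L * ‖z‖) :=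
        mul_le_mul hKb hvb (norm_nonneg _) (by positivity)
      have heq : (Cabs / ‖z‖) * (L * ‖z‖) = Cabs * L := by
        field_simp
      rw [heq] at this
      nlinarith [norm_nonneg u, norm_nonneg v]
    · push_neg at hnear
      have hKb : ‖u‖ ≤ M := hKfar z hnear
      have hvb : ‖v‖ ≤ 2 * S := by
        calc ‖v‖ ≤ ‖G p.1‖ + ‖G p.2‖ := norm_sub_le _ _
          _ ≤ 2 * S := by linarith [hGb p.1, hGb p.2]
      have : ‖u‖ * ‖v‖ ≤ M * (2 * S) :=
        mul_le_mul hKb hvb (norm_nonneg _) hM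
      nlinarith [mul_nonneg hCabs hL]

lemma Fphi_measurable {K : Torus2 → ℝ × ℝ} {G : Torus2 → ℝ × ℝ}
    (hK : Measurable K) (hG : Continuous G) : Measurable (Fphi K G) := by
  unfold Fphi
  have hdiag : MeasurableSet {p : Torus2 × Torus2 | p.1 = p.2} :=
    (isClosed_eq continuous_fst continuous_snd).measurableSet
  apply Measurable.ite hdiag measurable_const
  have hsub : Measurable fun p : Torus2 × Torus2 => p.1 - p.2 :=
    (continuous_fst.sub continuous_snd).measurable
  have hKm : Measurable fun p : Torus2 × Torus2 => K (p.1 - p.2) := hK.comp hsub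
  have hGm : Measurable fun p : Torus2 × Torus2 => G p.1 - G p.2 :=
    ((hG.comp continuous_fst).sub (hG.comp continuous_snd)).measurable
  unfold dot2
  exact (measurable_const.mul
    (((hKm.fst).mul (hGm.fst)).add ((hKm.snd).mul (hGm.snd))))

lemma G_continuous {g : ℝ × ℝ → ℝ} {G : Torus2 → ℝ × ℝ} (hg : ContDiff ℝ (⊤ : ℕ∞) g)
    (hG : ∀ x, G (torusProj x) = gradVec g x) : Continuous G := by
  rw [torusProj_isQuotientMap.continuous_iff]
  have : (G ∘ torusProj) = gradVec g := funext hG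
  rw [this]
  unfold gradVec
  have hfd : Continuous (fderiv ℝ g) := (hg.continuous_fderiv (by simp))
  exact (hfd.clm_apply continuous_const).prodMk (hfd.clm_apply continuous_const)

-- Part 7: signed measure machinery
lemma integrable_of_abs_bounded {X : Type*} [MeasurableSpace X] {μ : Measure X}
    [IsFiniteMeasure μ] {f : X → ℝ} (hf : Measurable f) {M : ℝ} (hb : ∀ x, |f x| ≤ M) :
    Integrable f μ :=
  Integrable.mono' (integrable_const M) hf.aestronglyMeasurable
    (Filter.Eventually.of_forall (fun x => by rw [Real.norm_eq_abs]; exact hb x))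

lemma toSM_injective {X : Type*} [MeasurableSpace X] {A B : Measure X}
    [IsFiniteMeasure A] [IsFiniteMeasure B]
    (h : A.toSignedMeasure = B.toSignedMeasure) : A = B := by
  ext s hs
  have h2 := congrArg (fun v : SignedMeasure X => v s) h
  rw [Measure.toSignedMeasure_apply_measurable hs,
    Measure.toSignedMeasure_apply_measurable hs] at h2
  exact (ENNReal.toReal_eq_toReal_iff' (measure_ne_top A s) (measure_ne_top B s)).1 h2

lemma jordan_repr {X : Type*} [MeasurableSpace X] (s : SignedMeasure X) (A B : Measure X)
    [IsFiniteMeasure A] [IsFiniteMeasure B]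
    (hrepr : s = A.toSignedMeasure - B.toSignedMeasure) :
    s.toJordanDecomposition.posPart + B = s.toJordanDecomposition.negPart + A := by
  have hJ : s.toJordanDecomposition.posPart.toSignedMeasure
      - s.toJordanDecomposition.negPart.toSignedMeasure
      = A.toSignedMeasure - B.toSignedMeasure := by
    rw [← hrepr]
    exact s.toSignedMeasure_toJordanDecomposition
  have hadd : (s.toJordanDecomposition.posPart + B).toSignedMeasure
      = (s.toJordanDecomposition.negPart + A).toSignedMeasure := by
    rw [Measure.toSignedMeasure_add, Measure.toSignedMeasure_add]
    rw [sub_eq_sub_iff_add_eq_add] at hJ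
    linear_combination (norm := abel) hJ
  exact toSM_injective hadd

lemma SI_eq {X : Type*} [MeasurableSpace X] (s : SignedMeasure X) (A B : Measure X)
    [IsFiniteMeasure A] [IsFiniteMeasure B]
    (hrepr : s = A.toSignedMeasure - B.toSignedMeasure)
    {f : X → ℝ} (hfm : Measurable f) {M : ℝ} (hfb : ∀ x, |f x| ≤ M) :
    signedIntegral s f = (∫ x, f x ∂A) - ∫ x, f x ∂B := by
  have hkey := jordan_repr s A B hrepr
  have h1 : (∫ x, f x ∂(s.toJordanDecomposition.posPart + B))
      = ∫ x, f x ∂(s.toJordanDecomposition.negPart + A) := by rw [hkey]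
  rw [integral_add_measure (integrable_of_abs_bounded hfm hfb) (integrable_of_abs_bounded hfm hfb),
    integral_add_measure (integrable_of_abs_bounded hfm hfb) (integrable_of_abs_bounded hfm hfb)]
    at h1
  unfold signedIntegral
  linarith

/-- The quadruple integral. -/
def quadInt {X : Type*} [MeasurableSpace X] (f : X × X → ℝ) (A B : Measure X) : ℝ :=
  (∫ z, f z ∂A.prod A) + (∫ z, f z ∂B.prod B) - (∫ z, f z ∂A.prod B) - (∫ z, f z ∂B.prod A)

lemma SI_signedProd {X : Type*} [MeasurableSpace X] (ξ : SignedMeasure X)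
    {f : X × X → ℝ} (hfm : Measurable f) {M : ℝ} (hfb : ∀ x, |f x| ≤ M) :
    signedIntegral (signedProd ξ ξ) f
      = quadInt f ξ.toJordanDecomposition.posPart ξ.toJordanDecomposition.negPart := by
  set P := ξ.toJordanDecomposition.posPart
  set Q := ξ.toJordanDecomposition.negPart
  have h := SI_eq (signedProd ξ ξ) (P.prod P + Q.prod Q) (P.prod Q + Q.prod P) rfl hfm hfb
  rw [h, integral_add_measure (integrable_of_abs_bounded hfm hfb)
      (integrable_of_abs_bounded hfm hfb),
    integral_add_measure (integrable_of_abs_bounded hfm hfb) (integrable_of_abs_bounded hfm hfb)]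
  unfold quadInt
  ring

lemma quadInt_bound {X : Type*} [MeasurableSpace X] (f : X × X → ℝ) (A B : Measure X)
    [IsFiniteMeasure A] [IsFiniteMeasure B] {M : ℝ} (hM : 0 ≤ M) (hfb : ∀ x, |f x| ≤ M) :
    |quadInt f A B| ≤ M * ((A Set.univ).toReal + (B Set.univ).toReal) ^ 2 := by
  have key : ∀ (μ ν : Measure X), IsFiniteMeasure μ → IsFiniteMeasure ν →
      |∫ z, f z ∂μ.prod ν| ≤ M * ((μ Set.univ).toReal * (ν Set.univ).toReal) := by
    intro μ ν hμ hν
    have h1 : |∫ z, f z ∂μ.prod ν| ≤ M * ((μ.prod ν) Set.univ).toReal := by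
      rw [← Real.norm_eq_abs]
      exact norm_integral_le_of_norm_le_const
        (Filter.Eventually.of_forall (fun x => by rw [Real.norm_eq_abs]; exact hfb x))
    have h2 : ((μ.prod ν) Set.univ).toReal = (μ Set.univ).toReal * (ν Set.univ).toReal := by
      rw [← Set.univ_prod_univ, Measure.prod_prod, ENNReal.toReal_mul]
    rwa [h2] at h1
  have k1 := key A A inferInstance inferInstance
  have k2 := key B B inferInstance inferInstance
  have k3 := key A B inferInstance inferInstance
  have k4 := key B A inferInstance inferInstance
  have ha : 0 ≤ (A Set.univ).toReal := ENNReal.toReal_nonneg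
  have hb : 0 ≤ (B Set.univ).toReal := ENNReal.toReal_nonneg
  unfold quadInt
  have habs4 : ∀ a b c d : ℝ, |a + b - c - d| ≤ |a| + |b| + |c| + |d| := by
    intro a b c d
    have l1 := le_abs_self a; have l2 := le_abs_self b
    have l3 := le_abs_self c; have l4 := le_abs_self d
    have n1 := neg_abs_le a; have n2 := neg_abs_le b
    have n3 := neg_abs_le c; have n4 := neg_abs_le d
    rw [abs_le]
    constructor <;> linarith
  calc |(∫ z, f z ∂A.prod A) + (∫ z, f z ∂B.prod B) - (∫ z, f z ∂A.prod B) - ∫ z, f z ∂B.prod A|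
      ≤ |∫ z, f z ∂A.prod A| + |∫ z, f z ∂B.prod B| + |∫ z, f z ∂A.prod B| + |∫ z, f z ∂B.prod A| :=
        habs4 _ _ _ _
    _ ≤ M * ((A Set.univ).toReal + (B Set.univ).toReal) ^ 2 := by nlinarith

-- Part 8: quadInt congruence and invariance under adding multiples of a "balanced" measure
lemma inner_integrable {X : Type*} [MeasurableSpace X] {f : X × X → ℝ} (hfm : Measurable f)
    {M : ℝ} (hfb : ∀ p, |f p| ≤ M) (ν : Measure X) [IsFiniteMeasure ν]
    (C : Measure X) [IsFiniteMeasure C] :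
    Integrable (fun x => ∫ y, f (x, y) ∂ν) C := by
  apply Integrable.mono' (integrable_const (M * (ν Set.univ).toReal))
  · exact (hfm.stronglyMeasurable.integral_prod_right').aestronglyMeasurable
  · apply Filter.Eventually.of_forall
    intro x
    exact norm_integral_le_of_norm_le_const
      (Filter.Eventually.of_forall (fun y => by rw [Real.norm_eq_abs]; exact hfb (x, y)))

lemma slice_integrable {X : Type*} [MeasurableSpace X] {f : X × X → ℝ} (hfm : Measurable f)
    {M : ℝ} (hfb : ∀ p, |f p| ≤ M) (x : X) (ν : Measure X) [IsFiniteMeasure ν] :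
    Integrable (fun y => f (x, y)) ν :=
  integrable_of_abs_bounded (hfm.comp measurable_prodMk_left) (fun y => hfb (x, y))

lemma quadInt_eq_iterated {X : Type*} [MeasurableSpace X] {f : X × X → ℝ} (hfm : Measurable f)
    {M : ℝ} (hfb : ∀ p, |f p| ≤ M) (C D : Measure X) [IsFiniteMeasure C] [IsFiniteMeasure D] :
    quadInt f C D
      = (∫ x, ((∫ y, f (x, y) ∂C) - ∫ y, f (x, y) ∂D) ∂C)
        - ∫ x, ((∫ y, f (x, y) ∂C) - ∫ y, f (x, y) ∂D) ∂D := by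
  have hfub : ∀ (μ ν : Measure X) [IsFiniteMeasure μ] [IsFiniteMeasure ν],
      (∫ z, f z ∂μ.prod ν) = ∫ x, ∫ y, f (x, y) ∂ν ∂μ := by
    intro μ ν _ _
    exact MeasureTheory.integral_prod f (integrable_of_abs_bounded hfm hfb)
  unfold quadInt
  rw [hfub C C, hfub D D, hfub C D, hfub D C,
    MeasureTheory.integral_sub (inner_integrable hfm hfb C C) (inner_integrable hfm hfb D C),
    MeasureTheory.integral_sub (inner_integrable hfm hfb C D) (inner_integrable hfm hfb D D)]
  ring

lemma quadInt_congr {X : Type*} [MeasurableSpace X] {f : X × X → ℝ} (hfm : Measurable f)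
    {M : ℝ} (hfb : ∀ p, |f p| ≤ M) (A B A' B' : Measure X)
    [IsFiniteMeasure A] [IsFiniteMeasure B] [IsFiniteMeasure A'] [IsFiniteMeasure B']
    (h : A + B' = A' + B) : quadInt f A B = quadInt f A' B' := by
  have hw : ∀ x, (∫ y, f (x, y) ∂A) - (∫ y, f (x, y) ∂B)
      = (∫ y, f (x, y) ∂A') - ∫ y, f (x, y) ∂B' := by
    intro x
    have h1 : (∫ y, f (x, y) ∂(A + B')) = ∫ y, f (x, y) ∂(A' + B) := by rw [h]
    rw [integral_add_measure (slice_integrable hfm hfb x A) (slice_integrable hfm hfb x B'),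
      integral_add_measure (slice_integrable hfm hfb x A') (slice_integrable hfm hfb x B)] at h1
    linarith
  set w : X → ℝ := fun x => (∫ y, f (x, y) ∂A) - ∫ y, f (x, y) ∂B with hwdef
  have hwint : ∀ (C : Measure X) [IsFiniteMeasure C], Integrable w C := by
    intro C _
    exact (inner_integrable hfm hfb A C).sub (inner_integrable hfm hfb B C)
  have houter : (∫ x, w x ∂A) - (∫ x, w x ∂B) = (∫ x, w x ∂A') - ∫ x, w x ∂B' := by
    have h1 : (∫ x, w x ∂(A + B')) = ∫ x, w x ∂(A' + B) := by rw [h]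
    rw [integral_add_measure (hwint A) (hwint B'),
      integral_add_measure (hwint A') (hwint B)] at h1
    linarith
  rw [quadInt_eq_iterated hfm hfb A B, quadInt_eq_iterated hfm hfb A' B']
  have hrw : (fun x => (∫ y, f (x, y) ∂A') - ∫ y, f (x, y) ∂B') = w := by
    funext x
    exact (hw x).symm
  rw [hrw]
  exact houter

lemma smul_vol_finite (c : ENNReal) (hc : c ≠ ⊤) :
    IsFiniteMeasure (c • (volume : Measure Torus2)) := by
  constructor
  rw [Measure.smul_apply, smul_eq_mul]
  exact ENNReal.mul_lt_top hc.lt_top (measure_lt_top _ _)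

lemma quadInt_add_vol {f : Torus2 × Torus2 → ℝ} (hfm : Measurable f)
    {M : ℝ} (hfb : ∀ p, |f p| ≤ M) (P Q : Measure Torus2)
    [IsFiniteMeasure P] [IsFiniteMeasure Q] (c₁ c₂ : ENNReal) (hc₁ : c₁ ≠ ⊤) (hc₂ : c₂ ≠ ⊤)
    (hmarg1 : ∀ y : Torus2, (∫ x : Torus2, f (x, y)) = 0)
    (hmarg2 : ∀ x : Torus2, (∫ y : Torus2, f (x, y)) = 0) :
    quadInt f (P + c₁ • (volume : Measure Torus2)) (Q + c₂ • (volume : Measure Torus2))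
      = quadInt f P Q := by
  haveI := smul_vol_finite c₁ hc₁
  haveI := smul_vol_finite c₂ hc₂
  set A : Measure Torus2 := P + c₁ • volume with hA
  set B : Measure Torus2 := Q + c₂ • volume with hB
  -- the slice integrals against A, B agree with those against P, Q
  have hwA : ∀ x : Torus2, (∫ y, f (x, y) ∂A) = ∫ y, f (x, y) ∂P := by
    intro x
    rw [hA, integral_add_measure (slice_integrable hfm hfb x P)
      ((slice_integrable hfm hfb x _)), MeasureTheory.integral_smul_measure]
    rw [hmarg2 x, smul_zero, add_zero]
  have hwB : ∀ x : Torus2, (∫ y, f (x, y) ∂B) = ∫ y, f (x, y) ∂Q := by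
    intro x
    rw [hB, integral_add_measure (slice_integrable hfm hfb x Q)
      ((slice_integrable hfm hfb x _)), MeasureTheory.integral_smul_measure]
    rw [hmarg2 x, smul_zero, add_zero]
  set w : Torus2 → ℝ := fun x => (∫ y, f (x, y) ∂P) - ∫ y, f (x, y) ∂Q with hwdef
  have hwint : ∀ (C : Measure Torus2) [IsFiniteMeasure C], Integrable w C := by
    intro C _
    exact (inner_integrable hfm hfb P C).sub (inner_integrable hfm hfb Q C)
  -- ∫ w dvol = 0 by Fubini and the first marginal condition
  have hwvol : (∫ x, w x ∂(volume : Measure Torus2)) = 0 := by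
    have hswap : ∀ (R : Measure Torus2) [IsFiniteMeasure R],
        (∫ x, (∫ y, f (x, y) ∂ R) ∂(volume : Measure Torus2)) = 0 := by
      intro R _
      have hswap2 : (∫ x, (∫ y, f (x, y) ∂ R) ∂(volume : Measure Torus2))
          = ∫ y, (∫ x, f (x, y) ∂(volume : Measure Torus2)) ∂ R := by
        apply MeasureTheory.integral_integral_swap
        exact integrable_of_abs_bounded hfm hfb
      rw [hswap2]
      have : (fun y : Torus2 => ∫ x, f (x, y) ∂(volume : Measure Torus2)) = fun _ => (0:ℝ) := by
        funext y
        exact hmarg1 y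
      rw [this, integral_zero]
    rw [hwdef]
    rw [MeasureTheory.integral_sub (inner_integrable hfm hfb P _) (inner_integrable hfm hfb Q _)]
    rw [hswap P, hswap Q, sub_zero]
  have step1 : quadInt f A B = (∫ x, w x ∂A) - ∫ x, w x ∂B := by
    rw [quadInt_eq_iterated hfm hfb A B]
    have : (fun x => (∫ y, f (x, y) ∂A) - ∫ y, f (x, y) ∂B) = w := by
      funext x
      rw [hwdef, hwA x, hwB x]
    rw [this]
  have step2 : quadInt f P Q = (∫ x, w x ∂P) - ∫ x, w x ∂Q :=
    quadInt_eq_iterated hfm hfb P Q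
  rw [step1, step2, hA, hB,
    integral_add_measure (hwint P) (hwint _), integral_add_measure (hwint Q) (hwint _),
    MeasureTheory.integral_smul_measure, MeasureTheory.integral_smul_measure, hwvol,
    smul_zero, smul_zero, add_zero, add_zero]

-- Part 9: representation of ξ + α • Leb
instance ofReal_smul_finite {X : Type*} [MeasurableSpace X] (a : ℝ) (μ : Measure X)
    [IsFiniteMeasure μ] : IsFiniteMeasure (ENNReal.ofReal a • μ) := by
  constructor
  rw [Measure.smul_apply, smul_eq_mul]
  exact ENNReal.mul_lt_top ENNReal.ofReal_lt_top (measure_lt_top μ _)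

lemma toSM_real_smul {X : Type*} [MeasurableSpace X] (α : ℝ) (μ : Measure X)
    [IsFiniteMeasure μ] :
    α • μ.toSignedMeasure
      = (ENNReal.ofReal α • μ).toSignedMeasure - (ENNReal.ofReal (-α) • μ).toSignedMeasure := by
  apply MeasureTheory.VectorMeasure.ext
  intro i hi
  rw [MeasureTheory.VectorMeasure.sub_apply,
    Measure.toSignedMeasure_apply_measurable hi,
    Measure.toSignedMeasure_apply_measurable hi,
    MeasureTheory.VectorMeasure.smul_apply,
    Measure.toSignedMeasure_apply_measurable hi]
  simp only [measureReal_def, Measure.smul_apply, smul_eq_mul, ENNReal.toReal_mul, ENNReal.toReal_ofReal']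
  rcases le_total 0 α with hα | hα
  · rw [max_eq_left hα, max_eq_right (by linarith : -α ≤ 0)]
    ring
  · rw [max_eq_right hα, max_eq_left (by linarith : 0 ≤ -α)]
    ring

lemma repr_add_leb (ξ : SignedMeasure Torus2) (α : ℝ) :
    ξ + α • torusLeb
      = (ξ.toJordanDecomposition.posPart
            + ENNReal.ofReal α • (volume : Measure Torus2)).toSignedMeasure
        - (ξ.toJordanDecomposition.negPart
            + ENNReal.ofReal (-α) • (volume : Measure Torus2)).toSignedMeasure := by
  have hξ : ξ.toJordanDecomposition.posPart.toSignedMeasure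
      - ξ.toJordanDecomposition.negPart.toSignedMeasure = ξ :=
    ξ.toSignedMeasure_toJordanDecomposition
  have hleb : α • torusLeb
      = (ENNReal.ofReal α • (volume : Measure Torus2)).toSignedMeasure
        - (ENNReal.ofReal (-α) • (volume : Measure Torus2)).toSignedMeasure := by
    unfold torusLeb
    exact toSM_real_smul α volume
  rw [Measure.toSignedMeasure_add, Measure.toSignedMeasure_add, hleb]
  conv_lhs => rw [← hξ]
  abel


/-- **The nonlinear term `N(ξ)` defines an element of `H⁻⁴(T²)` with a quadratic bound,
and is unchanged by adding a constant to `ξ`.**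
Let `K : T² → ℝ²` be odd, smooth away from `0`, bounded by `C|z|⁻¹` near `0`, and
divergence-free so that `F_φ` has zero averages in each variable. Then there is a
constant `C₀ > 0` such that for every finite signed measure `ξ` and every smooth `φ`
(encoded by its smooth periodic lift `g` with torus gradient `G = ∇φ`),
`|⟨N(ξ), φ⟩| ≤ C₀ ‖ξ‖²_TV ‖φ‖_{H⁴}` where `⟨N(ξ), φ⟩ = ∫∫ F_φ d(ξ ⊗ ξ)`, and
`⟨N(ξ + α·Leb), φ⟩ = ⟨N(ξ), φ⟩` for every real constant `α`. -/
theorem nonlinear_term_Hminus4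
    (K : Torus2 → ℝ × ℝ) (C : ℝ) (hK_meas : Measurable K)
    (hK_smooth : ContDiffOn ℝ (⊤ : ℕ∞) (fun x : ℝ × ℝ => K (torusProj x))
      {x : ℝ × ℝ | torusProj x ≠ (0 : Torus2)})
    (hK_odd : ∀ z : Torus2, K (-z) = -K z)
    (hK_bound : ∃ δ > (0:ℝ), ∀ z : Torus2, z ≠ 0 → ‖z‖ < δ → ‖K z‖ ≤ C / ‖z‖)
    (hK_divfree : ∀ (φ : Torus2 → ℝ) (g : ℝ × ℝ → ℝ) (G : Torus2 → ℝ × ℝ),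
      (∀ x, g x = φ (torusProj x)) → ContDiff ℝ (⊤ : ℕ∞) g →
      (∀ x, G (torusProj x) = gradVec g x) →
      (∀ y : Torus2, (∫ x : Torus2, Fphi K G (x, y)) = 0) ∧
      (∀ x : Torus2, (∫ y : Torus2, Fphi K G (x, y)) = 0)) :
    ∃ C₀ > (0:ℝ), ∀ (ξ : SignedMeasure Torus2)
      (φ : Torus2 → ℝ) (g : ℝ × ℝ → ℝ) (G : Torus2 → ℝ × ℝ),
      (∀ x, g x = φ (torusProj x)) → ContDiff ℝ (⊤ : ℕ∞) g →
      (∀ x, G (torusProj x) = gradVec g x) →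
      (|signedIntegral (signedProd ξ ξ) (Fphi K G)|
          ≤ C₀ * (ξ.totalVariation Set.univ).toReal ^ 2 * H4norm g) ∧
      (∀ α : ℝ,
        signedIntegral (signedProd (ξ + α • torusLeb) (ξ + α • torusLeb)) (Fphi K G)
          = signedIntegral (signedProd ξ ξ) (Fphi K G)) := by
  obtain ⟨δ, hδ, hKnear⟩ := hK_bound
  obtain ⟨M, hM0, hKfar⟩ := K_away_bound K hK_smooth δ hδ
  refine ⟨16 * Real.pi * (|C| + M) + 1, by positivity, ?_⟩
  intro ξ φ g G hφ hg hG
  -- periodicity of g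
  have hper1 : ∀ x : ℝ × ℝ, g (x + ((2 * Real.pi : ℝ), (0:ℝ))) = g x := by
    intro x
    rw [hφ, hφ]
    congr 1
    unfold torusProj
    refine Prod.ext ?_ ?_
    · show ((x.1 + 2 * Real.pi : ℝ) : AddCircle (2 * Real.pi)) = (x.1 : AddCircle (2 * Real.pi))
      exact AddCircle.coe_add_period _ _
    · show ((x.2 + 0 : ℝ) : AddCircle (2 * Real.pi)) = (x.2 : AddCircle (2 * Real.pi))
      rw [add_zero]
  have hper2 : ∀ x : ℝ × ℝ, g (x + ((0:ℝ), (2 * Real.pi : ℝ))) = g x := by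
    intro x
    rw [hφ, hφ]
    congr 1
    unfold torusProj
    refine Prod.ext ?_ ?_
    · show ((x.1 + 0 : ℝ) : AddCircle (2 * Real.pi)) = (x.1 : AddCircle (2 * Real.pi))
      rw [add_zero]
    · show ((x.2 + 2 * Real.pi : ℝ) : AddCircle (2 * Real.pi)) = (x.2 : AddCircle (2 * Real.pi))
      exact AddCircle.coe_add_period _ _
  have hH4 : 0 ≤ H4norm g := H4norm_nonneg g
  have hGb := G_val_bound hg hG hper1 hper2
  have hGl := G_diff_bound hg hG hper1 hper2
  have hGcont := G_continuous hg hG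
  have hfm := Fphi_measurable hK_meas hGcont
  have hKnear' : ∀ z : Torus2, z ≠ 0 → ‖z‖ < δ → ‖K z‖ ≤ |C| / ‖z‖ := by
    intro z hz hlt
    refine (hKnear z hz hlt).trans ?_
    have hzpos : 0 < ‖z‖ := norm_pos_iff.2 hz
    gcongr
    exact le_abs_self C
  have hfb : ∀ p : Torus2 × Torus2,
      |Fphi K G p| ≤ |C| * (16 * Real.pi * H4norm g) + M * (2 * (8 * Real.pi * H4norm g)) :=
    Fphi_bound hδ hM0 (mul_nonneg (by positivity) hH4) (mul_nonneg (by positivity) hH4)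
      (abs_nonneg C) hKnear' hKfar hGb hGl
  have hMfnn : 0 ≤ |C| * (16 * Real.pi * H4norm g) + M * (2 * (8 * Real.pi * H4norm g)) := by
    have h1 := mul_nonneg (abs_nonneg C)
      (mul_nonneg (by positivity : (0:ℝ) ≤ 16 * Real.pi) hH4)
    have h2 := mul_nonneg hM0
      (mul_nonneg (by norm_num : (0:ℝ) ≤ 2)
        (mul_nonneg (by positivity : (0:ℝ) ≤ 8 * Real.pi) hH4))
    nlinarith [h1, h2]
  constructor
  · rw [SI_signedProd ξ hfm hfb]
    have hb := quadInt_bound (Fphi K G) ξ.toJordanDecomposition.posPart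
      ξ.toJordanDecomposition.negPart hMfnn hfb
    have htv : (ξ.totalVariation Set.univ).toReal
        = (ξ.toJordanDecomposition.posPart Set.univ).toReal
          + (ξ.toJordanDecomposition.negPart Set.univ).toReal := by
      show (((ξ.toJordanDecomposition.posPart + ξ.toJordanDecomposition.negPart))
          Set.univ).toReal = _
      rw [Measure.add_apply, ENNReal.toReal_add (measure_ne_top _ _) (measure_ne_top _ _)]
    rw [htv]
    set p1 := (ξ.toJordanDecomposition.posPart Set.univ).toReal with hp1
    set q1 := (ξ.toJordanDecomposition.negPart Set.univ).toReal with hq1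
    have hp1n : 0 ≤ p1 := ENNReal.toReal_nonneg
    have hq1n : 0 ≤ q1 := ENNReal.toReal_nonneg
    have hsq : 0 ≤ (p1 + q1) ^ 2 := sq_nonneg _
    have hmul : 0 ≤ (p1 + q1) ^ 2 * H4norm g := mul_nonneg hsq hH4
    nlinarith [hb, mul_nonneg (mul_nonneg hM0 hsq) hH4,
      mul_nonneg (mul_nonneg (abs_nonneg C) hsq) hH4, Real.pi_pos]
  · intro α
    obtain ⟨hmarg1, hmarg2⟩ := hK_divfree φ g G hφ hg hG
    rw [SI_signedProd (ξ + α • torusLeb) hfm hfb, SI_signedProd ξ hfm hfb]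
    have hrepr := repr_add_leb ξ α
    have hjord := jordan_repr (ξ + α • torusLeb) _ _ hrepr
    have hjord' : (ξ + α • torusLeb).toJordanDecomposition.posPart
          + (ξ.toJordanDecomposition.negPart + ENNReal.ofReal (-α) • volume)
        = (ξ.toJordanDecomposition.posPart + ENNReal.ofReal α • volume)
          + (ξ + α • torusLeb).toJordanDecomposition.negPart := by
      rw [hjord, add_comm]
    rw [quadInt_congr hfm hfb _ _ _ _ hjord']
    exact quadInt_add_vol hfm hfb _ _ _ _ ENNReal.ofReal_ne_top ENNReal.ofReal_ne_top
      hmarg1 hmarg2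

end
end
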